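/- arXiv:2311.08889 — 7 statements merged into one kernel-verified Lean document; each statement's English description precedes it below -/
import Mathlib

section
/- Let ρ:ℝⁿ→ℝ be smooth and positive, m≥1, and H(x,p)=|p|^m/ρ(x) on ℝⁿ×(ℝⁿ∖{0}). A point z=(φu,u) of the Bessel cylinder Λ₀ (φ∈ℝ, u a unit vector) is a glancing point — i.e. v_H(z)∈T_zΛ₀ — if and only if either (φ≠0 and ∇ρ(φu)=0) or (φ=0 and ⟨∇ρ(0),u⟩=0). -/
open scoped RealInnerProductSpace

section Aux
variable {E : Type*} [NormedAddCommGroup E] [InnerProductSpace ℝ E] [CompleteSpace E]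

lemma hasGradientAt_of_hasFDerivAt' {f : E → ℝ} {x g : E} {L : E →L[ℝ] ℝ}
    (h : HasFDerivAt f L x) (hL : ∀ y, L y = ⟪g, y⟫) : HasGradientAt f g x := by
  rw [hasGradientAt_iff_hasFDerivAt]
  refine h.congr_fderiv ?_
  ext y
  rw [InnerProductSpace.toDual_apply_apply, hL y]

lemma hasGradientAt_norm_pow' (m : ℕ) {u : E} (hu : ‖u‖ = 1) :
    HasGradientAt (fun p : E => ‖p‖ ^ m) ((m : ℝ) • u) u := by
  have f1 : HasFDerivAt (fun p : E => ‖p‖ ^ 2) (2 • innerSL ℝ u) u :=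
    (hasStrictFDerivAt_norm_sq u).hasFDerivAt
  have f2 : HasDerivAt (fun t : ℝ => t ^ ((m : ℝ) / 2))
      (((m : ℝ) / 2) * (‖u‖ ^ 2 : ℝ) ^ ((m : ℝ) / 2 - 1)) (‖u‖ ^ 2) :=
    Real.hasDerivAt_rpow_const (Or.inl (by rw [hu]; norm_num))
  have comp := f2.comp_hasFDerivAt u f1
  have hfun : ((fun t : ℝ => t ^ ((m : ℝ) / 2)) ∘ fun p : E => ‖p‖ ^ 2)
      = fun p : E => ‖p‖ ^ m := by
    funext p
    simp only [Function.comp_apply]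
    rw [← Real.rpow_natCast ‖p‖ 2, ← Real.rpow_natCast ‖p‖ m,
      ← Real.rpow_mul (norm_nonneg p)]
    congr 1
    push_cast
    ring
  rw [hfun] at comp
  refine hasGradientAt_of_hasFDerivAt' comp ?_
  intro y
  simp only [ContinuousLinearMap.smul_apply, smul_eq_mul, hu, one_pow, Real.one_rpow,
    innerSL_apply_apply]
  rw [real_inner_smul_left]
  ring

end Aux


/-- For `ρ : ℝⁿ → ℝ` smooth and positive, `m ≥ 1`, and
`H(x,p) = |p|^m / ρ(x)`, a point `z = (φ • u, u)` of the Bessel cylinder is glancing,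
i.e. `v_H(z) = (∇ₚH(z), −∇ₓH(z)) ∈ T_zΛ₀`, iff either (`φ ≠ 0` and `∇ρ(φ • u) = 0`)
or (`φ = 0` and `⟪∇ρ(0), u⟫ = 0`). -/
theorem stmt3 (n : ℕ) (m : ℕ) (hm : 1 ≤ m)
    (ρ : EuclideanSpace ℝ (Fin n) → ℝ)
    (hρ : ContDiff ℝ (⊤ : ℕ∞) ρ) (hρpos : ∀ x, 0 < ρ x)
    (H : EuclideanSpace ℝ (Fin n) → EuclideanSpace ℝ (Fin n) → ℝ)
    (hH : ∀ x p, H x p = ‖p‖ ^ m / ρ x)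
    (φ : ℝ) (u : EuclideanSpace ℝ (Fin n)) (hu : ‖u‖ = 1)
    (gx gp : EuclideanSpace ℝ (Fin n))
    (hgx : gx = gradient (fun x => H x u) (φ • u))
    (hgp : gp = gradient (fun p => H (φ • u) p) u) :
    ((gp, -gx) ∈
        {v : EuclideanSpace ℝ (Fin n) × EuclideanSpace ℝ (Fin n) |
          ∃ (a : ℝ) (w : EuclideanSpace ℝ (Fin n)), ⟪w, u⟫ = 0 ∧ v = (a • u + φ • w, w)})
      ↔ ((φ ≠ 0 ∧ gradient ρ (φ • u) = 0) ∨
         (φ = 0 ∧ ⟪gradient ρ (0 : EuclideanSpace ℝ (Fin n)), u⟫ = 0)) := by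
  have hrpos : 0 < ρ (φ • u) := hρpos _
  have hr0 : ρ (φ • u) ≠ 0 := hrpos.ne'
  set r : ℝ := ρ (φ • u) with hr
  set G : EuclideanSpace ℝ (Fin n) := gradient ρ (φ • u) with hG
  have hc0 : -((r : ℝ) ^ 2)⁻¹ ≠ 0 := neg_ne_zero.mpr (inv_ne_zero (pow_ne_zero 2 hr0))
  -- gradient in p
  have hgp' : gp = ((m : ℝ) / r) • u := by
    have h1 : HasGradientAt (fun p : EuclideanSpace ℝ (Fin n) => ‖p‖ ^ m) ((m : ℝ) • u) u :=
      hasGradientAt_norm_pow' m hu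
    have h2 : HasFDerivAt (fun p : EuclideanSpace ℝ (Fin n) => r⁻¹ * ‖p‖ ^ m)
        (r⁻¹ • (InnerProductSpace.toDual ℝ _ ((m : ℝ) • u))) u :=
      (hasGradientAt_iff_hasFDerivAt.mp h1).const_mul r⁻¹
    have h3 : HasGradientAt (fun p : EuclideanSpace ℝ (Fin n) => r⁻¹ * ‖p‖ ^ m)
        (((m : ℝ) / r) • u) u := by
      refine hasGradientAt_of_hasFDerivAt' h2 ?_
      intro y
      simp only [ContinuousLinearMap.smul_apply, smul_eq_mul, InnerProductSpace.toDual_apply_apply]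
      rw [real_inner_smul_left, real_inner_smul_left]
      ring
    have heq : (fun p : EuclideanSpace ℝ (Fin n) => H (φ • u) p)
        = fun p : EuclideanSpace ℝ (Fin n) => r⁻¹ * ‖p‖ ^ m := by
      funext p; rw [hH, div_eq_inv_mul]
    rw [hgp, heq, h3.gradient]
  -- gradient in x
  have hgx' : gx = (-(r ^ 2)⁻¹) • G := by
    have hρd : HasGradientAt ρ G (φ • u) :=
      (hρ.differentiable (by simp) (φ • u)).hasGradientAt
    have h2 : HasFDerivAt (fun x : EuclideanSpace ℝ (Fin n) => (ρ x)⁻¹)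
        ((-(r ^ 2)⁻¹) • (InnerProductSpace.toDual ℝ _ G)) (φ • u) := by
      have := (hasDerivAt_inv hr0).comp_hasFDerivAt (φ • u)
        (hasGradientAt_iff_hasFDerivAt.mp hρd)
      simpa [Function.comp_def] using this
    have h3 : HasGradientAt (fun x : EuclideanSpace ℝ (Fin n) => (ρ x)⁻¹)
        ((-(r ^ 2)⁻¹) • G) (φ • u) := by
      refine hasGradientAt_of_hasFDerivAt' h2 ?_
      intro y
      simp only [ContinuousLinearMap.smul_apply, smul_eq_mul, InnerProductSpace.toDual_apply_apply]
      rw [real_inner_smul_left]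
    have heq : (fun x : EuclideanSpace ℝ (Fin n) => H x u)
        = fun x : EuclideanSpace ℝ (Fin n) => (ρ x)⁻¹ := by
      funext x; rw [hH, hu, one_pow, one_div]
    rw [hgx, heq, h3.gradient]
  have hinner_gx : ⟪gx, u⟫ = (-(r ^ 2)⁻¹) * ⟪G, u⟫ := by
    rw [hgx', real_inner_smul_left]
  have hgx_zero : gx = 0 ↔ G = 0 := by
    rw [hgx', smul_eq_zero]
    exact ⟨fun h => h.resolve_left hc0, Or.inr⟩
  have hinner_zero : ⟪gx, u⟫ = 0 ↔ ⟪G, u⟫ = 0 := by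
    rw [hinner_gx, mul_eq_zero]
    exact ⟨fun h => h.resolve_left hc0, Or.inr⟩
  constructor
  · rintro ⟨a, w, hw, heq⟩
    have h1 : gp = a • u + φ • w := congrArg Prod.fst heq
    have h2 : -gx = w := congrArg Prod.snd heq
    have hgxu : ⟪gx, u⟫ = 0 := by
      have := hw
      rw [← h2, inner_neg_left, neg_eq_zero] at this
      exact this
    -- compute a by inner with u
    have hself : ⟪u, u⟫ = (1 : ℝ) := by
      rw [real_inner_self_eq_norm_sq, hu]; norm_num
    have ha : a = (m : ℝ) / r := by
      have := congrArg (fun v => ⟪v, u⟫) h1.symm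
      rw [inner_add_left, real_inner_smul_left, real_inner_smul_left, hself] at this
      have hwu0 : ⟪w, u⟫ = 0 := hw
      rw [hwu0, mul_zero, add_zero, mul_one] at this
      rw [hgp', real_inner_smul_left, hself, mul_one] at this
      linarith
    have hφw : φ • w = 0 := by
      have h4 : a • u + φ • w = a • u := by
        rw [← h1, hgp', ha]
      exact add_eq_left.mp h4
    rcases smul_eq_zero.mp hφw with hφ0 | hw0
    · right
      refine ⟨hφ0, ?_⟩
      have : ⟪G, u⟫ = 0 := hinner_zero.mp hgxu
      rw [hG, hφ0, zero_smul] at this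
      exact this
    · -- w = 0, so gx = 0
      have hgx0 : gx = 0 := by rw [← neg_eq_zero, h2, hw0]
      by_cases hφ : φ = 0
      · right
        refine ⟨hφ, ?_⟩
        have : ⟪G, u⟫ = 0 := hinner_zero.mp hgxu
        rw [hG, hφ, zero_smul] at this
        exact this
      · exact Or.inl ⟨hφ, hgx_zero.mp hgx0⟩
  · rintro (⟨hφ, hG0⟩ | ⟨hφ, hG0⟩)
    · refine ⟨(m : ℝ) / r, 0, by simp, ?_⟩
      have hgx0 : gx = 0 := hgx_zero.mpr hG0
      rw [hgp', hgx0]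
      simp
    · refine ⟨(m : ℝ) / r, -gx, ?_, ?_⟩
      · rw [inner_neg_left, neg_eq_zero, hinner_zero]
        rw [hG, hφ, zero_smul]
        exact hG0
      · rw [hgp', hφ, zero_smul, add_zero]
  done
end

section
/- Let n=2, ω(ψ)=(cos ψ, sin ψ), ρ(x)=½(1+|x−x₀|²) with x₀=φ₀ω(ψ₀), φ₀≠0, and H(x,p)=|p|/ρ(x). Define h̃(φ,ψ)=H(φω(ψ),ω(ψ))=1/ρ(φω(ψ)). Then (φ₀,ψ₀) is a critical point of h̃ with critical value E₀=1/ρ(x₀)=2, and the Hessian matrix of h̃ at (φ₀,ψ₀) satisfies ρ(x₀)⁴·det ∇²h̃(φ₀,ψ₀)=φ₀² and ρ(x₀)²·Tr ∇²h̃(φ₀,ψ₀)=−(1+φ₀²). -/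
open Real

/-!
By the law of cosines, `ρ(φω(ψ)) = r(φ,ψ) := (1 + φ² + φ₀² - 2φφ₀ cos(ψ-ψ₀))/2`, so `h̃ = r⁻¹`.
The point `(φ₀,ψ₀)` is the minimum of `r`, with `r = 1/2` there; at a critical point of `r` the
Hessian of `r⁻¹` is `-∇²r / r² = -4 ∇²r`, and `∇²r(φ₀,ψ₀) = diag(1, φ₀²)`.
-/

/-- `ρ(φ ω(ψ))` for `ρ(x) = ½(1 + |x - φ₀ ω(ψ₀)|²)`. -/
noncomputable def rhoPolar (φ₀ ψ₀ φ ψ : ℝ) : ℝ :=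
  (1 + φ ^ 2 + φ₀ ^ 2 - 2 * φ * φ₀ * cos (ψ - ψ₀)) / 2

lemma HasDerivAt.neg_div_sq_of_eq_zero {𝕜 : Type*} [NontriviallyNormedField 𝕜] {a b : 𝕜 → 𝕜}
    {a' t : 𝕜} (ha : HasDerivAt a a' t) (hb : DifferentiableAt 𝕜 b t) (ha₀ : a t = 0)
    (hb₀ : b t ≠ 0) :
    HasDerivAt (fun s => -a s / b s ^ 2) (-a' / b t ^ 2) t := by
  refine (ha.neg.div (hb.hasDerivAt.pow 2) (pow_ne_zero 2 hb₀)).congr_deriv ?_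
  simp only [Pi.neg_apply, Pi.pow_apply, ha₀, neg_zero, zero_mul, sub_zero]
  field_simp

section rhoPolar

variable (φ₀ ψ₀ : ℝ)

lemma rhoPolar_eq_sq_dist (φ ψ : ℝ) :
    rhoPolar φ₀ ψ₀ φ ψ =
      (1 + ((φ * cos ψ - φ₀ * cos ψ₀) ^ 2 + (φ * sin ψ - φ₀ * sin ψ₀) ^ 2)) / 2 := by
  rw [rhoPolar, cos_sub]
  nlinarith [sin_sq_add_cos_sq ψ, sin_sq_add_cos_sq ψ₀]

lemma rhoPolar_pos (φ ψ : ℝ) : 0 < rhoPolar φ₀ ψ₀ φ ψ := by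
  rw [rhoPolar_eq_sq_dist]
  positivity

lemma rhoPolar_self : rhoPolar φ₀ ψ₀ φ₀ ψ₀ = 1 / 2 := by
  rw [rhoPolar, sub_self, cos_zero]
  ring

lemma hasDerivAt_rhoPolar_fst (φ ψ : ℝ) :
    HasDerivAt (fun φ => rhoPolar φ₀ ψ₀ φ ψ) (φ - φ₀ * cos (ψ - ψ₀)) φ := by
  unfold rhoPolar
  have h := ((((hasDerivAt_pow 2 φ).const_add 1).add_const (φ₀ ^ 2)).fun_sub
    ((((hasDerivAt_id' φ).const_mul 2).mul_const φ₀).mul_const (cos (ψ - ψ₀)))).div_const 2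
  refine h.congr_deriv ?_
  push_cast
  ring

lemma hasDerivAt_rhoPolar_snd (φ ψ : ℝ) :
    HasDerivAt (fun ψ => rhoPolar φ₀ ψ₀ φ ψ) (φ * φ₀ * sin (ψ - ψ₀)) ψ := by
  have h := ((((hasDerivAt_cos (ψ - ψ₀)).comp_sub_const ψ ψ₀).const_mul
    (2 * φ * φ₀)).const_sub (1 + φ ^ 2 + φ₀ ^ 2)).div_const 2
  refine h.congr_deriv ?_
  ring

lemma deriv_inv_rhoPolar_fst (φ ψ : ℝ) :
    deriv (fun φ => (rhoPolar φ₀ ψ₀ φ ψ)⁻¹) φ =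
      -(φ - φ₀ * cos (ψ - ψ₀)) / rhoPolar φ₀ ψ₀ φ ψ ^ 2 :=
  ((hasDerivAt_rhoPolar_fst φ₀ ψ₀ φ ψ).inv (rhoPolar_pos φ₀ ψ₀ φ ψ).ne').deriv

lemma deriv_inv_rhoPolar_snd (φ ψ : ℝ) :
    deriv (fun ψ => (rhoPolar φ₀ ψ₀ φ ψ)⁻¹) ψ =
      -(φ * φ₀ * sin (ψ - ψ₀)) / rhoPolar φ₀ ψ₀ φ ψ ^ 2 :=
  ((hasDerivAt_rhoPolar_snd φ₀ ψ₀ φ ψ).inv (rhoPolar_pos φ₀ ψ₀ φ ψ).ne').deriv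

lemma deriv_deriv_inv_rhoPolar_fst_fst :
    deriv (fun φ => deriv (fun φ' => (rhoPolar φ₀ ψ₀ φ' ψ₀)⁻¹) φ) φ₀ = -4 := by
  simp_rw [deriv_inv_rhoPolar_fst]
  rw [(((hasDerivAt_id' φ₀).sub_const _).neg_div_sq_of_eq_zero
    (hasDerivAt_rhoPolar_fst φ₀ ψ₀ φ₀ ψ₀).differentiableAt (by simp)
    (rhoPolar_pos φ₀ ψ₀ φ₀ ψ₀).ne').deriv, rhoPolar_self]
  norm_num

lemma deriv_deriv_inv_rhoPolar_snd_fst :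
    deriv (fun ψ => deriv (fun φ => (rhoPolar φ₀ ψ₀ φ ψ)⁻¹) φ₀) ψ₀ = 0 := by
  simp_rw [deriv_inv_rhoPolar_fst]
  have ha := (((hasDerivAt_cos _).comp_sub_const ψ₀ ψ₀).const_mul φ₀).const_sub φ₀
  rw [(ha.neg_div_sq_of_eq_zero (hasDerivAt_rhoPolar_snd φ₀ ψ₀ φ₀ ψ₀).differentiableAt (by simp)
    (rhoPolar_pos φ₀ ψ₀ φ₀ ψ₀).ne').deriv]
  simp

lemma deriv_deriv_inv_rhoPolar_fst_snd :
    deriv (fun φ => deriv (fun ψ => (rhoPolar φ₀ ψ₀ φ ψ)⁻¹) ψ₀) φ₀ = 0 := by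
  simp [deriv_inv_rhoPolar_snd]

lemma deriv_deriv_inv_rhoPolar_snd_snd :
    deriv (fun ψ => deriv (fun ψ' => (rhoPolar φ₀ ψ₀ φ₀ ψ')⁻¹) ψ) ψ₀ = -4 * φ₀ ^ 2 := by
  simp_rw [deriv_inv_rhoPolar_snd]
  rw [((((hasDerivAt_sin _).comp_sub_const ψ₀ ψ₀).const_mul (φ₀ * φ₀)).neg_div_sq_of_eq_zero
    (hasDerivAt_rhoPolar_snd φ₀ ψ₀ φ₀ ψ₀).differentiableAt (by simp)
    (rhoPolar_pos φ₀ ψ₀ φ₀ ψ₀).ne').deriv, rhoPolar_self, sub_self, cos_zero]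
  ring

end rhoPolar

theorem stmt4_general (φ₀ ψ₀ : ℝ)
    (ω : ℝ → ℝ × ℝ) (hω : ∀ ψ, ω ψ = (Real.cos ψ, Real.sin ψ))
    (x₀ : ℝ × ℝ) (hx₀ : x₀ = φ₀ • ω ψ₀)
    (ρ : ℝ × ℝ → ℝ)
    (hρ : ∀ x, ρ x = (1 + ((x.1 - x₀.1) ^ 2 + (x.2 - x₀.2) ^ 2)) / 2)
    (H : ℝ × ℝ → ℝ × ℝ → ℝ)
    (hH : ∀ x p, H x p = Real.sqrt (p.1 ^ 2 + p.2 ^ 2) / ρ x)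
    (ht : ℝ → ℝ → ℝ) (hht : ∀ φ ψ, ht φ ψ = H (φ • ω ψ) (ω ψ))
    -- Hessian entries of `h̃` at `(φ₀, ψ₀)`
    (A B C D : ℝ)
    (hA : A = deriv (fun φ => deriv (fun φ' => ht φ' ψ₀) φ) φ₀)
    (hB : B = deriv (fun ψ => deriv (fun φ => ht φ ψ) φ₀) ψ₀)
    (hC : C = deriv (fun φ => deriv (fun ψ => ht φ ψ) ψ₀) φ₀)
    (hD : D = deriv (fun ψ => deriv (fun ψ' => ht φ₀ ψ') ψ) ψ₀) :
    -- critical point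
    deriv (fun φ => ht φ ψ₀) φ₀ = 0 ∧
    deriv (fun ψ => ht φ₀ ψ) ψ₀ = 0 ∧
    -- critical value E₀ = 1/ρ(x₀) = 2
    ht φ₀ ψ₀ = 1 / ρ x₀ ∧ ht φ₀ ψ₀ = 2 ∧
    -- Hessian determinant and trace identities
    ρ x₀ ^ 4 * (A * D - B * C) = φ₀ ^ 2 ∧
    ρ x₀ ^ 2 * (A + D) = -(1 + φ₀ ^ 2) := by
  have ht_eq : ht = fun φ ψ => (rhoPolar φ₀ ψ₀ φ ψ)⁻¹ := by
    funext φ ψ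
    rw [hht, hH, hρ, hx₀, rhoPolar_eq_sq_dist]
    simp [hω]
  have hρx₀ : ρ x₀ = 1 / 2 := by simp [hρ]
  subst ht_eq hA hB hC hD
  beta_reduce
  rw [deriv_deriv_inv_rhoPolar_fst_fst, deriv_deriv_inv_rhoPolar_snd_fst,
    deriv_deriv_inv_rhoPolar_fst_snd, deriv_deriv_inv_rhoPolar_snd_snd,
    deriv_inv_rhoPolar_fst, deriv_inv_rhoPolar_snd, rhoPolar_self, hρx₀]
  exact ⟨by simp, by simp, by norm_num, by norm_num, by ring, by ring⟩

/-- For `n = 2`, `ω(ψ) = (cos ψ, sin ψ)`, `ρ(x) = ½(1+|x−x₀|²)` with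
`x₀ = φ₀·ω(ψ₀)`, `φ₀ ≠ 0`, and `H(x,p) = |p|/ρ(x)`, the restriction
`h̃(φ,ψ) = H(φω(ψ), ω(ψ)) = 1/ρ(φω(ψ))` has a critical point at `(φ₀,ψ₀)` with critical
value `E₀ = 1/ρ(x₀) = 2`, and its Hessian there satisfies
`ρ(x₀)⁴ · det ∇²h̃ = φ₀²` and `ρ(x₀)² · Tr ∇²h̃ = −(1+φ₀²)`. -/
theorem stmt4 (φ₀ ψ₀ : ℝ) (hφ₀ : φ₀ ≠ 0)
    (ω : ℝ → ℝ × ℝ) (hω : ∀ ψ, ω ψ = (Real.cos ψ, Real.sin ψ))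
    (x₀ : ℝ × ℝ) (hx₀ : x₀ = φ₀ • ω ψ₀)
    (ρ : ℝ × ℝ → ℝ)
    (hρ : ∀ x, ρ x = (1 + ((x.1 - x₀.1) ^ 2 + (x.2 - x₀.2) ^ 2)) / 2)
    (H : ℝ × ℝ → ℝ × ℝ → ℝ)
    (hH : ∀ x p, H x p = Real.sqrt (p.1 ^ 2 + p.2 ^ 2) / ρ x)
    (ht : ℝ → ℝ → ℝ) (hht : ∀ φ ψ, ht φ ψ = H (φ • ω ψ) (ω ψ))
    -- Hessian entries of `h̃` at `(φ₀, ψ₀)`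
    (A B C D : ℝ)
    (hA : A = deriv (fun φ => deriv (fun φ' => ht φ' ψ₀) φ) φ₀)
    (hB : B = deriv (fun ψ => deriv (fun φ => ht φ ψ) φ₀) ψ₀)
    (hC : C = deriv (fun φ => deriv (fun ψ => ht φ ψ) ψ₀) φ₀)
    (hD : D = deriv (fun ψ => deriv (fun ψ' => ht φ₀ ψ') ψ) ψ₀) :
    -- critical point
    deriv (fun φ => ht φ ψ₀) φ₀ = 0 ∧
    deriv (fun ψ => ht φ₀ ψ) ψ₀ = 0 ∧
    -- critical value E₀ = 1/ρ(x₀) = 2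
    ht φ₀ ψ₀ = 1 / ρ x₀ ∧ ht φ₀ ψ₀ = 2 ∧
    -- Hessian determinant and trace identities
    ρ x₀ ^ 4 * (A * D - B * C) = φ₀ ^ 2 ∧
    ρ x₀ ^ 2 * (A + D) = -(1 + φ₀ ^ 2) :=
  stmt4_general φ₀ ψ₀ ω hω x₀ hx₀ ρ hρ H hH ht hht A B C D hA hB hC hD
end

section
/- Let H be smooth on ℝ²×(ℝ²∖{0}) and positively homogeneous of degree 1 in p, and let (X,P):ℝ²×ℝ→ℝ²×ℝ² be a smooth solution of Hamilton's equations ∂ₜX=∇_pH(X,P), ∂ₜP=−∇_xH(X,P) with X(φ,ψ,0)=φω(ψ), P(φ,ψ,0)=ω(ψ), and P(φ,ψ,t)≠0 for all (φ,ψ,t). Then for all (φ,ψ,t): ⟨P,∂_φX⟩=1, ⟨P,∂_ψX⟩=0, and ⟨P,∂ₜX⟩=H(X,P); in other words, the pullback of the 1-form p·dx − H·dt to the flow-out manifold equals dφ, so (φ,ψ,t) are eikonal coordinates. -/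
open scoped RealInnerProductSpace


lemma stmt5_isOpen {E : Type*} [NormedAddCommGroup E] :
    IsOpen {z : E × E | z.2 ≠ 0} := by
  have : {z : E × E | z.2 ≠ 0} = Prod.snd ⁻¹' ({0}ᶜ) := rfl
  rw [this]
  exact isOpen_compl_singleton.preimage continuous_snd

lemma stmt5_conserved {E : Type*} [NormedAddCommGroup E] [InnerProductSpace ℝ E] [CompleteSpace E]
    (H : E → E → ℝ)
    (hH : ContDiffOn ℝ (⊤ : ℕ∞) (fun z : E × E => H z.1 z.2) {z | z.2 ≠ 0})
    (F G : ℝ × ℝ × ℝ → E) (hF : ContDiff ℝ (⊤ : ℕ∞) F) (hG : ContDiff ℝ (⊤ : ℕ∞) G)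
    (hGne : ∀ q, G q ≠ 0)
    (heuler : ∀ q, ⟪G q, gradient (fun p => H (F q) p) (G q)⟫ = H (F q) (G q))
    (hamF : ∀ q, fderiv ℝ F q (0,0,1) = gradient (fun p => H (F q) p) (G q))
    (hamG : ∀ q, fderiv ℝ G q (0,0,1) = - gradient (fun x => H x (G q)) (F q))
    (φ ψ : ℝ) (v : ℝ × ℝ × ℝ) (t : ℝ) :
    ⟪G (φ,ψ,t), fderiv ℝ F (φ,ψ,t) v⟫ = ⟪G (φ,ψ,0), fderiv ℝ F (φ,ψ,0) v⟫ := by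
  set Hun : E × E → ℝ := fun z => H z.1 z.2 with hHun
  set DH : ℝ × ℝ × ℝ → (E × E →L[ℝ] ℝ) := fun q => fderiv ℝ Hun (F q, G q) with hDHdef
  set Hp : (ℝ × ℝ × ℝ) → E := fun q => gradient (fun p => H (F q) p) (G q) with hHpdef
  set Hx : (ℝ × ℝ × ℝ) → E := fun q => gradient (fun x => H x (G q)) (F q) with hHxdef
  set f'' : (ℝ × ℝ × ℝ) → (ℝ × ℝ × ℝ) →L[ℝ] (ℝ × ℝ × ℝ) →L[ℝ] E :=
    fun q => fderiv ℝ (fderiv ℝ F) q with hf''def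
  have hFd : ∀ q, DifferentiableAt ℝ F q := fun q => (hF.differentiable (by simp)).differentiableAt
  have hGd : ∀ q, DifferentiableAt ℝ G q := fun q => (hG.differentiable (by simp)).differentiableAt
  have hd2 : ∀ q : ℝ × ℝ × ℝ, DifferentiableAt ℝ Hun (F q, G q) := fun q =>
    (hH.contDiffAt (stmt5_isOpen.mem_nhds (hGne q))).differentiableAt (by simp)
  -- gradient representations
  have hHpinner : ∀ q w, ⟪Hp q, w⟫ = DH q (0, w) := by
    intro q w
    have hpart : HasFDerivAt (fun p' => H (F q) p')
        ((DH q).comp ((0 : E →L[ℝ] E).prod (ContinuousLinearMap.id ℝ E))) (G q) :=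
      (hd2 q).hasFDerivAt.comp (G q)
        ((hasFDerivAt_const (F q) (G q)).prodMk (hasFDerivAt_id (G q)))
    have hrep : Hp q = (InnerProductSpace.toDual ℝ E).symm
        ((DH q).comp ((0 : E →L[ℝ] E).prod (ContinuousLinearMap.id ℝ E))) := by
      rw [hHpdef]; exact congrArg _ hpart.fderiv
    rw [hrep, InnerProductSpace.toDual_symm_apply]
    simp
  have hHxinner : ∀ q w, ⟪Hx q, w⟫ = DH q (w, 0) := by
    intro q w
    have hpart : HasFDerivAt (fun x' => H x' (G q))
        ((DH q).comp ((ContinuousLinearMap.id ℝ E).prod (0 : E →L[ℝ] E))) (F q) :=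
      (hd2 q).hasFDerivAt.comp (f := fun x' => (id x', G q)) (F q)
        ((hasFDerivAt_id (F q)).prodMk (hasFDerivAt_const (G q) (F q)))
    have hrep : Hx q = (InnerProductSpace.toDual ℝ E).symm
        ((DH q).comp ((ContinuousLinearMap.id ℝ E).prod (0 : E →L[ℝ] E))) := by
      rw [hHxdef]; exact congrArg _ hpart.fderiv
    rw [hrep, InnerProductSpace.toDual_symm_apply]
    simp
  -- derivative of H(F·,G·)
  have hHFG : ∀ q, HasFDerivAt (fun q' => H (F q') (G q'))
      ((DH q).comp ((fderiv ℝ F q).prod (fderiv ℝ G q))) q := fun q =>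
    (hd2 q).hasFDerivAt.comp (f := fun q' => (F q', G q')) q ((hFd q).hasFDerivAt.prodMk (hGd q).hasFDerivAt)
  have hsplit : ∀ q (w : ℝ × ℝ × ℝ), DH q (fderiv ℝ F q w, fderiv ℝ G q w)
      = ⟪Hx q, fderiv ℝ F q w⟫ + ⟪Hp q, fderiv ℝ G q w⟫ := by
    intro q w
    rw [hHxinner, hHpinner, ← map_add]
    congr 1
    simp [Prod.ext_iff]
  -- second derivative machinery
  have h2nd : ∀ q, HasFDerivAt (fderiv ℝ F) (f'' q) q := fun q =>
    (((hF.fderiv_right (m := 1) (WithTop.coe_le_coe.mpr le_top)).differentiable (by simp)) q).hasFDerivAt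
  have happly : ∀ (w : ℝ × ℝ × ℝ) q, HasFDerivAt (fun q' => fderiv ℝ F q' w)
      ((ContinuousLinearMap.apply ℝ E w).comp (f'' q)) q := fun w q =>
    (ContinuousLinearMap.apply ℝ E w).hasFDerivAt.comp q (h2nd q)
  have hsym : ∀ q (a b : ℝ × ℝ × ℝ), f'' q a b = f'' q b a := fun q =>
    second_derivative_symmetric (fun y => (hFd y).hasFDerivAt) (h2nd q)
  have hHpfun : Hp = fun q' => fderiv ℝ F q' (0,0,1) := by
    funext q'; exact (hamF q').symm
  have hHpHas : ∀ q, HasFDerivAt Hp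
      ((ContinuousLinearMap.apply ℝ E (0,0,1)).comp (f'' q)) q := by
    intro q; rw [hHpfun]; exact happly _ q
  -- differentiate Euler's identity
  have lemE : ∀ q (w : ℝ × ℝ × ℝ), ⟪G q, f'' q w (0,0,1)⟫ = ⟪Hx q, fderiv ℝ F q w⟫ := by
    intro q w
    have hI : HasFDerivAt (fun q' => ⟪G q', Hp q'⟫)
        ((fderivInnerCLM ℝ (G q, Hp q)).comp ((fderiv ℝ G q).prod
          ((ContinuousLinearMap.apply ℝ E (0,0,1)).comp (f'' q)))) q :=
      (hGd q).hasFDerivAt.inner ℝ (hHpHas q)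
    have hIeq : (fun q' => ⟪G q', Hp q'⟫) = fun q' => H (F q') (G q') := by
      funext q'; exact heuler q'
    rw [hIeq] at hI
    have huniq := hI.unique (hHFG q)
    have := congrFun (congrArg (fun (L : (ℝ×ℝ×ℝ) →L[ℝ] ℝ) => (L : (ℝ×ℝ×ℝ) → ℝ)) huniq) w
    simp only [ContinuousLinearMap.comp_apply, ContinuousLinearMap.prod_apply,
      fderivInnerCLM_apply, ContinuousLinearMap.apply_apply] at this
    rw [hsplit q w] at this
    -- this : ⟪G q, f'' q w (0,0,1)⟫ + ⟪fderiv ℝ G q w, Hp q⟫ = ⟪Hx q, _⟫ + ⟪Hp q, fderiv ℝ G q w⟫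
    rw [real_inner_comm (fderiv ℝ G q w) (Hp q)] at this
    linarith [this]
  -- the conserved quantity
  set u : ℝ → ℝ := fun s => ⟪G (φ,ψ,s), fderiv ℝ F (φ,ψ,s) v⟫ with hudef
  have hu : ∀ s, HasDerivAt u 0 s := by
    intro s
    set q : ℝ × ℝ × ℝ := (φ,ψ,s) with hq
    have hinner : HasFDerivAt (fun q' => ⟪G q', fderiv ℝ F q' v⟫)
        ((fderivInnerCLM ℝ (G q, fderiv ℝ F q v)).comp ((fderiv ℝ G q).prod
          ((ContinuousLinearMap.apply ℝ E v).comp (f'' q)))) q :=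
      (hGd q).hasFDerivAt.inner ℝ (happly v q)
    have hcurve : HasDerivAt (fun s' : ℝ => ((φ,ψ,s') : ℝ × ℝ × ℝ)) (0,0,1) s :=
      (hasDerivAt_const s φ).prodMk ((hasDerivAt_const s ψ).prodMk (hasDerivAt_id s))
    have hu' := hinner.comp_hasDerivAt s hcurve
    have hval : ((fderivInnerCLM ℝ (G q, fderiv ℝ F q v)).comp ((fderiv ℝ G q).prod
        ((ContinuousLinearMap.apply ℝ E v).comp (f'' q)))) ((0:ℝ),(0:ℝ),(1:ℝ)) = 0 := by
      simp only [ContinuousLinearMap.comp_apply, ContinuousLinearMap.prod_apply,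
        fderivInnerCLM_apply, ContinuousLinearMap.apply_apply]
      rw [hsym q _ v, lemE q v, hamG q]
      rw [inner_neg_left]
      ring
    rw [hval] at hu'
    exact hu'
  have := is_const_of_deriv_eq_zero (f := u) (fun s => (hu s).differentiableAt)
    (fun s => (hu s).deriv) t 0
  exact this
lemma stmt5_euler {E : Type*} [NormedAddCommGroup E] [InnerProductSpace ℝ E] [CompleteSpace E]
    (H : E → E → ℝ)
    (hH : ContDiffOn ℝ (⊤ : ℕ∞) (fun z : E × E => H z.1 z.2) {z | z.2 ≠ 0})
    (hhom : ∀ x p, p ≠ 0 → ∀ s : ℝ, 0 < s → H x (s • p) = s * H x p)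
    (x p : E) (hp : p ≠ 0) :
    ⟪p, gradient (fun p' => H x p') p⟫ = H x p := by
  have hd2 : DifferentiableAt ℝ (fun z : E × E => H z.1 z.2) (x, p) :=
    (hH.contDiffAt (stmt5_isOpen.mem_nhds hp)).differentiableAt (by simp)
  have hdp : DifferentiableAt ℝ (fun p' => H x p') p :=
    hd2.comp p ((differentiableAt_const x).prodMk differentiableAt_id)
  have h1 : HasDerivAt (fun s : ℝ => s • p) p 1 := by
    simpa using (hasDerivAt_id (1 : ℝ)).smul_const p
  have hfd : HasFDerivAt (fun p' => H x p') (fderiv ℝ (fun p' => H x p') p) ((1:ℝ) • p) := by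
    rw [one_smul]; exact hdp.hasFDerivAt
  have hg : HasDerivAt (fun s : ℝ => H x (s • p)) (fderiv ℝ (fun p' => H x p') p p) 1 :=
    hfd.comp_hasDerivAt 1 h1
  have heq : (fun s : ℝ => H x (s • p)) =ᶠ[nhds 1] fun s => s * H x p :=
    (eventually_gt_nhds one_pos).mono fun s hs => hhom x p hp s hs
  have hlin : HasDerivAt (fun s : ℝ => s * H x p) (H x p) 1 := by
    simpa using (hasDerivAt_id (1 : ℝ)).mul_const (H x p)
  have hg2 : HasDerivAt (fun s : ℝ => H x (s • p)) (H x p) 1 :=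
    hlin.congr_of_eventuallyEq heq
  have huniq : fderiv ℝ (fun p' => H x p') p p = H x p := hg.unique hg2
  rw [real_inner_comm]
  rw [show gradient (fun p' => H x p') p
      = (InnerProductSpace.toDual ℝ E).symm (fderiv ℝ (fun p' => H x p') p) from rfl]
  rw [InnerProductSpace.toDual_symm_apply]
  exact huniq

/-- For `H` smooth on `ℝ² × (ℝ² ∖ {0})`, positively homogeneous of degree 1 in
`p`, and `(X,P)` the Hamiltonian flow with initial data on the Bessel cylinder
(`X(φ,ψ,0) = φω(ψ)`, `P(φ,ψ,0) = ω(ψ)`), one has `⟪P,∂_φX⟫ = 1`, `⟪P,∂_ψX⟫ = 0`,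
`⟪P,∂ₜX⟫ = H(X,P)`: the pullback of `p·dx − H·dt` to the flow-out equals `dφ`, so
`(φ,ψ,t)` are eikonal coordinates. -/
theorem stmt5
    (H : EuclideanSpace ℝ (Fin 2) → EuclideanSpace ℝ (Fin 2) → ℝ)
    (hH : ContDiffOn ℝ (⊤ : ℕ∞) (fun z : EuclideanSpace ℝ (Fin 2) × EuclideanSpace ℝ (Fin 2) =>
      H z.1 z.2) {z | z.2 ≠ 0})
    (hhom : ∀ (x p : EuclideanSpace ℝ (Fin 2)), p ≠ 0 → ∀ s : ℝ, 0 < s →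
      H x (s • p) = s * H x p)
    (ω : ℝ → EuclideanSpace ℝ (Fin 2))
    (hω : ∀ ψ, ω ψ = ![Real.cos ψ, Real.sin ψ])
    (X P : ℝ → ℝ → ℝ → EuclideanSpace ℝ (Fin 2))
    (hXP : ContDiff ℝ (⊤ : ℕ∞) (fun q : ℝ × ℝ × ℝ =>
      (X q.1 q.2.1 q.2.2, P q.1 q.2.1 q.2.2)))
    (hPne : ∀ φ ψ t, P φ ψ t ≠ 0)
    -- Hamilton's equations
    (hamX : ∀ φ ψ t, deriv (fun s => X φ ψ s) t =
      gradient (fun p => H (X φ ψ t) p) (P φ ψ t))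
    (hamP : ∀ φ ψ t, deriv (fun s => P φ ψ s) t =
      - gradient (fun x => H x (P φ ψ t)) (X φ ψ t))
    -- initial conditions on the Bessel cylinder
    (hX0 : ∀ φ ψ, X φ ψ 0 = φ • ω ψ)
    (hP0 : ∀ φ ψ, P φ ψ 0 = ω ψ) :
    ∀ φ ψ t,
      ⟪P φ ψ t, deriv (fun φ' => X φ' ψ t) φ⟫ = 1 ∧
      ⟪P φ ψ t, deriv (fun ψ' => X φ ψ' t) ψ⟫ = 0 ∧
      ⟪P φ ψ t, deriv (fun t' => X φ ψ t') t⟫ = H (X φ ψ t) (P φ ψ t) := by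
  intro φ ψ t
  set F : ℝ × ℝ × ℝ → EuclideanSpace ℝ (Fin 2) := fun q => X q.1 q.2.1 q.2.2 with hFdef
  set G : ℝ × ℝ × ℝ → EuclideanSpace ℝ (Fin 2) := fun q => P q.1 q.2.1 q.2.2 with hGdef
  have hF : ContDiff ℝ (⊤ : ℕ∞) F := hXP.fst
  have hG : ContDiff ℝ (⊤ : ℕ∞) G := hXP.snd
  have hFd : ∀ q, DifferentiableAt ℝ F q := fun q => (hF.differentiable (by simp)).differentiableAt
  have hGd : ∀ q, DifferentiableAt ℝ G q := fun q => (hG.differentiable (by simp)).differentiableAt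
  -- translations between deriv and fderiv
  have dφX : ∀ a b c : ℝ, deriv (fun x => X x b c) a = fderiv ℝ F (a,b,c) (1,0,0) := by
    intro a b c
    have hc : HasDerivAt (fun x : ℝ => ((x,b,c) : ℝ×ℝ×ℝ)) (1,0,0) a :=
      (hasDerivAt_id a).prodMk ((hasDerivAt_const a b).prodMk (hasDerivAt_const a c))
    exact ((hFd (a,b,c)).hasFDerivAt.comp_hasDerivAt a hc).deriv
  have dψX : ∀ a b c : ℝ, deriv (fun y => X a y c) b = fderiv ℝ F (a,b,c) (0,1,0) := by
    intro a b c
    have hc : HasDerivAt (fun y : ℝ => ((a,y,c) : ℝ×ℝ×ℝ)) (0,1,0) b :=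
      (hasDerivAt_const b a).prodMk ((hasDerivAt_id b).prodMk (hasDerivAt_const b c))
    exact ((hFd (a,b,c)).hasFDerivAt.comp_hasDerivAt b hc).deriv
  have dtX : ∀ a b c : ℝ, deriv (fun s => X a b s) c = fderiv ℝ F (a,b,c) (0,0,1) := by
    intro a b c
    have hc : HasDerivAt (fun s : ℝ => ((a,b,s) : ℝ×ℝ×ℝ)) (0,0,1) c :=
      (hasDerivAt_const c a).prodMk ((hasDerivAt_const c b).prodMk (hasDerivAt_id c))
    exact ((hFd (a,b,c)).hasFDerivAt.comp_hasDerivAt c hc).deriv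
  have dtP : ∀ a b c : ℝ, deriv (fun s => P a b s) c = fderiv ℝ G (a,b,c) (0,0,1) := by
    intro a b c
    have hc : HasDerivAt (fun s : ℝ => ((a,b,s) : ℝ×ℝ×ℝ)) (0,0,1) c :=
      (hasDerivAt_const c a).prodMk ((hasDerivAt_const c b).prodMk (hasDerivAt_id c))
    exact ((hGd (a,b,c)).hasFDerivAt.comp_hasDerivAt c hc).deriv
  have hGne : ∀ q : ℝ × ℝ × ℝ, G q ≠ 0 := fun q => hPne q.1 q.2.1 q.2.2
  have heuler : ∀ q : ℝ × ℝ × ℝ,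
      ⟪G q, gradient (fun p => H (F q) p) (G q)⟫ = H (F q) (G q) := fun q =>
    stmt5_euler H hH hhom (F q) (G q) (hGne q)
  have hamF : ∀ q : ℝ × ℝ × ℝ,
      fderiv ℝ F q (0,0,1) = gradient (fun p => H (F q) p) (G q) := by
    rintro ⟨a, b, c⟩
    rw [← dtX a b c]
    exact hamX a b c
  have hamG : ∀ q : ℝ × ℝ × ℝ,
      fderiv ℝ G q (0,0,1) = - gradient (fun x => H x (G q)) (F q) := by
    rintro ⟨a, b, c⟩
    rw [← dtP a b c]
    exact hamP a b c
  have hωinner : ⟪ω ψ, ω ψ⟫ = (1:ℝ) := by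
    simp only [PiLp.inner_apply, hω]
    simp [PiLp.inner_apply, Fin.sum_univ_two, RCLike.inner_apply, conj_trivial]
  refine ⟨?_, ?_, ?_⟩
  · -- φ-derivative
    have hc := stmt5_conserved H hH F G hF hG hGne heuler hamF hamG φ ψ (1,0,0) t
    have h0 : fderiv ℝ F (φ,ψ,0) (1,0,0) = ω ψ := by
      rw [← dφX φ ψ 0]
      have hXfun : (fun x => X x ψ 0) = fun x : ℝ => x • ω ψ := funext fun x => hX0 x ψ
      rw [hXfun]
      have hd : HasDerivAt (fun x : ℝ => x • ω ψ) (ω ψ) φ := by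
        simpa using (hasDerivAt_id φ).smul_const (ω ψ)
      exact hd.deriv
    rw [dφX φ ψ t]
    calc ⟪P φ ψ t, fderiv ℝ F (φ,ψ,t) (1,0,0)⟫
        = ⟪G (φ,ψ,0), fderiv ℝ F (φ,ψ,0) (1,0,0)⟫ := hc
      _ = 1 := by
          rw [h0]
          show ⟪P φ ψ 0, ω ψ⟫ = 1
          rw [hP0]
          exact hωinner
  · -- ψ-derivative
    have hc := stmt5_conserved H hH F G hF hG hGne heuler hamF hamG φ ψ (0,1,0) t
    have hωfun : ω = fun y => (WithLp.toLp 2 ![Real.cos y, Real.sin y] : EuclideanSpace ℝ (Fin 2)) :=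
      funext fun y => by rw [← hω y]
    have hcomp : ∀ i, HasDerivAt (fun y => (![Real.cos y, Real.sin y] : Fin 2 → ℝ) i)
        ((![-Real.sin ψ, Real.cos ψ] : Fin 2 → ℝ) i) ψ := by
      intro i
      fin_cases i
      · simpa using Real.hasDerivAt_cos ψ
      · simpa using Real.hasDerivAt_sin ψ
    have hpi : HasDerivAt (fun y => (![Real.cos y, Real.sin y] : Fin 2 → ℝ))
        ![-Real.sin ψ, Real.cos ψ] ψ := hasDerivAt_pi.mpr hcomp
    have hω' : HasDerivAt ω (WithLp.toLp 2 ![-Real.sin ψ, Real.cos ψ] : EuclideanSpace ℝ (Fin 2)) ψ := by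
      rw [hωfun]
      exact ((EuclideanSpace.equiv (Fin 2) ℝ).symm.toContinuousLinearMap).hasFDerivAt.comp_hasDerivAt ψ hpi
    have h0 : fderiv ℝ F (φ,ψ,0) (0,1,0)
        = φ • (WithLp.toLp 2 ![-Real.sin ψ, Real.cos ψ] : EuclideanSpace ℝ (Fin 2)) := by
      rw [← dψX φ ψ 0]
      have hXfun : (fun y => X φ y 0) = fun y : ℝ => φ • ω y := funext fun y => hX0 φ y
      rw [hXfun]
      exact (hω'.const_smul φ).deriv
    rw [dψX φ ψ t]
    calc ⟪P φ ψ t, fderiv ℝ F (φ,ψ,t) (0,1,0)⟫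
        = ⟪G (φ,ψ,0), fderiv ℝ F (φ,ψ,0) (0,1,0)⟫ := hc
      _ = 0 := by
          rw [h0]
          show ⟪P φ ψ 0, φ • (WithLp.toLp 2 ![-Real.sin ψ, Real.cos ψ] : EuclideanSpace ℝ (Fin 2))⟫ = 0
          rw [hP0]
          simp [PiLp.inner_apply, Fin.sum_univ_two, RCLike.inner_apply, conj_trivial,
            PiLp.smul_apply, smul_eq_mul, hω]
          ring
  · -- t-derivative: Euler's identity
    rw [hamX φ ψ t]
    exact stmt5_euler H hH hhom (X φ ψ t) (P φ ψ t) (hPne φ ψ t)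
end

section
/- (Proposition 2.) Let H be smooth on ℝ²×(ℝ²∖{0}), positively homogeneous of degree 1 in p, and let (X,P):ℝ²×ℝ→ℝ²×ℝ² be a smooth solution of Hamilton's equations ∂ₜX=∇_pH(X,P), ∂ₜP=−∇_xH(X,P) with X(φ,ψ,0)=φω(ψ), P(φ,ψ,0)=ω(ψ), P≠0 everywhere. Set Φ(λ,φ,ψ,x,t)=φ+λ⟨P(φ,ψ,t), x−X(φ,ψ,t)⟩. Then: (i) Φ(λ,φ,ψ,x,0)=(1−λ)φ+λ⟨ω(ψ),x⟩ and det(P,∂_ψP)(φ,ψ,0)=1; (ii) if ∂_λΦ=∂_φΦ=∂_ψΦ=0 at (λ,φ,ψ,x,t) and det(P(φ,ψ,t),∂_ψP(φ,ψ,t))≠0, then x=X(φ,ψ,t), λ=1, ∇ₓΦ=P(φ,ψ,t) and −∂ₜΦ=H(X(φ,ψ,t),P(φ,ψ,t)); (iii) conversely, for every (φ,ψ,t) the point (1,φ,ψ,X(φ,ψ,t),t) satisfies ∂_λΦ=∂_φΦ=∂_ψΦ=0. Hence Φ is a generating family for the flow-out Λ={(X(φ,ψ,t),t,P(φ,ψ,t),H(X,P))}⊂T*ℝ³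 at points where det(P,∂_ψP)≠0. -/
open scoped RealInnerProductSpace

private lemma hderiv_fst {A B : Type*} [NormedAddCommGroup A] [NormedSpace ℝ A]
    [NormedAddCommGroup B] [NormedSpace ℝ B] {g : ℝ → A × B} {v : A × B} {x : ℝ}
    (h : HasDerivAt g v x) : HasDerivAt (fun s => (g s).1) v.1 x := by
  simpa using (h.hasFDerivAt.fst).hasDerivAt

private lemma hderiv_snd {A B : Type*} [NormedAddCommGroup A] [NormedSpace ℝ A]
    [NormedAddCommGroup B] [NormedSpace ℝ B] {g : ℝ → A × B} {v : A × B} {x : ℝ}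
    (h : HasDerivAt g v x) : HasDerivAt (fun s => (g s).2) v.2 x := by
  simpa using (h.hasFDerivAt.snd).hasDerivAt


set_option maxHeartbeats 1000000 in
/-- Proposition 2: With `H` positively homogeneous of degree 1 in `p` and
`(X,P)` the Hamiltonian flow starting on the Bessel cylinder, the function
`Φ(λ,φ,ψ,x,t) = φ + λ⟪P(φ,ψ,t), x − X(φ,ψ,t)⟫` is a generating family for the flow-out
`Λ = {(X,t,P,H(X,P))} ⊂ T*ℝ³` at the points where `det(P,∂_ψP) ≠ 0`. -/
theorem stmt7
    (H : EuclideanSpace ℝ (Fin 2) → EuclideanSpace ℝ (Fin 2) → ℝ)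
    (hH : ContDiffOn ℝ (⊤ : ℕ∞) (fun z : EuclideanSpace ℝ (Fin 2) × EuclideanSpace ℝ (Fin 2) =>
      H z.1 z.2) {z | z.2 ≠ 0})
    (hhom : ∀ (x p : EuclideanSpace ℝ (Fin 2)), p ≠ 0 → ∀ s : ℝ, 0 < s →
      H x (s • p) = s * H x p)
    (ω : ℝ → EuclideanSpace ℝ (Fin 2))
    (hω : ∀ ψ, ω ψ = ![Real.cos ψ, Real.sin ψ])
    (X P : ℝ → ℝ → ℝ → EuclideanSpace ℝ (Fin 2))
    (hXP : ContDiff ℝ (⊤ : ℕ∞) (fun q : ℝ × ℝ × ℝ =>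
      (X q.1 q.2.1 q.2.2, P q.1 q.2.1 q.2.2)))
    (hPne : ∀ φ ψ t, P φ ψ t ≠ 0)
    (hamX : ∀ φ ψ t, deriv (fun s => X φ ψ s) t =
      gradient (fun p => H (X φ ψ t) p) (P φ ψ t))
    (hamP : ∀ φ ψ t, deriv (fun s => P φ ψ s) t =
      - gradient (fun x => H x (P φ ψ t)) (X φ ψ t))
    (hX0 : ∀ φ ψ, X φ ψ 0 = φ • ω ψ)
    (hP0 : ∀ φ ψ, P φ ψ 0 = ω ψ)
    -- the generating family
    (Φ : ℝ → ℝ → ℝ → EuclideanSpace ℝ (Fin 2) → ℝ → ℝ)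
    (hΦ : ∀ l φ ψ x t, Φ l φ ψ x t = φ + l * ⟪P φ ψ t, x - X φ ψ t⟫)
    -- det(P, ∂_ψ P)
    (detPψ : ℝ → ℝ → ℝ → ℝ)
    (hdet : ∀ φ ψ t, detPψ φ ψ t =
      P φ ψ t 0 * deriv (fun ψ' => P φ ψ' t) ψ 1 -
      P φ ψ t 1 * deriv (fun ψ' => P φ ψ' t) ψ 0) :
    -- (i) initial value of Φ and of det(P,∂_ψP)
    (∀ (l φ ψ : ℝ) (x : EuclideanSpace ℝ (Fin 2)),
      Φ l φ ψ x 0 = (1 - l) * φ + l * ⟪ω ψ, x⟫) ∧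
    (∀ φ ψ : ℝ, detPψ φ ψ 0 = 1) ∧
    -- (ii) points of the critical set where det(P,∂_ψP) ≠ 0 lie over Λ
    (∀ (l φ ψ t : ℝ) (x : EuclideanSpace ℝ (Fin 2)),
      deriv (fun l' => Φ l' φ ψ x t) l = 0 →
      deriv (fun φ' => Φ l φ' ψ x t) φ = 0 →
      deriv (fun ψ' => Φ l φ ψ' x t) ψ = 0 →
      detPψ φ ψ t ≠ 0 →
      x = X φ ψ t ∧ l = 1 ∧
      gradient (fun x' => Φ l φ ψ x' t) x = P φ ψ t ∧
      -deriv (fun t' => Φ l φ ψ x t') t = H (X φ ψ t) (P φ ψ t)) ∧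
    -- (iii) conversely, (1, φ, ψ, X(φ,ψ,t), t) belongs to the critical set
    (∀ φ ψ t : ℝ,
      deriv (fun l' => Φ l' φ ψ (X φ ψ t) t) 1 = 0 ∧
      deriv (fun φ' => Φ 1 φ' ψ (X φ ψ t) t) φ = 0 ∧
      deriv (fun ψ' => Φ 1 φ ψ' (X φ ψ t) t) ψ = 0) ∧
    -- hence Φ generates Λ at the points where det(P,∂_ψP) ≠ 0
    ({w : EuclideanSpace ℝ (Fin 2) × ℝ × EuclideanSpace ℝ (Fin 2) × ℝ |
        ∃ (l φ ψ t : ℝ) (x : EuclideanSpace ℝ (Fin 2)),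
          deriv (fun l' => Φ l' φ ψ x t) l = 0 ∧
          deriv (fun φ' => Φ l φ' ψ x t) φ = 0 ∧
          deriv (fun ψ' => Φ l φ ψ' x t) ψ = 0 ∧
          detPψ φ ψ t ≠ 0 ∧
          w = (x, t, gradient (fun x' => Φ l φ ψ x' t) x,
               -deriv (fun t' => Φ l φ ψ x t') t)} =
      {w : EuclideanSpace ℝ (Fin 2) × ℝ × EuclideanSpace ℝ (Fin 2) × ℝ |
        ∃ φ ψ t : ℝ, detPψ φ ψ t ≠ 0 ∧
          w = (X φ ψ t, t, P φ ψ t, H (X φ ψ t) (P φ ψ t))}) := by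
  classical
  -- ## abbreviations
  let F2 : ℝ × ℝ × ℝ → EuclideanSpace ℝ (Fin 2) × EuclideanSpace ℝ (Fin 2) :=
    fun q => (X q.1 q.2.1 q.2.2, P q.1 q.2.1 q.2.2)
  have hF2 : ContDiff ℝ (⊤ : ℕ∞) F2 := hXP
  let DF : ℝ × ℝ × ℝ → (ℝ × ℝ × ℝ) →L[ℝ] EuclideanSpace ℝ (Fin 2) × EuclideanSpace ℝ (Fin 2) := fderiv ℝ F2
  let D2 : ℝ × ℝ × ℝ → (ℝ × ℝ × ℝ) →L[ℝ] (ℝ × ℝ × ℝ) →L[ℝ] EuclideanSpace ℝ (Fin 2) × EuclideanSpace ℝ (Fin 2) := fderiv ℝ DF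
  have hDFat : ∀ q, HasFDerivAt F2 (DF q) q :=
    fun q => (hF2.differentiable (by simp) q).hasFDerivAt
  have hDF2 : ContDiff ℝ (⊤ : ℕ∞) DF := hF2.fderiv_right (by simp)
  have hD2at : ∀ q, HasFDerivAt DF (D2 q) q :=
    fun q => (hDF2.differentiable (by simp) q).hasFDerivAt
  have hsymm : ∀ q v w, D2 q v w = D2 q w v :=
    fun q => second_derivative_symmetric hDFat (hD2at q)
  let e1 : ℝ × ℝ × ℝ := (1, 0, 0)
  let e2 : ℝ × ℝ × ℝ := (0, 1, 0)
  let e3 : ℝ × ℝ × ℝ := (0, 0, 1)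
  -- ## curves
  have hc1 : ∀ (ψ t φ : ℝ), HasDerivAt (fun s : ℝ => ((s, ψ, t) : ℝ × ℝ × ℝ)) e1 φ :=
    fun ψ t φ => (hasDerivAt_id φ).prodMk ((hasDerivAt_const φ ψ).prodMk (hasDerivAt_const φ t))
  have hc2 : ∀ (φ t ψ : ℝ), HasDerivAt (fun s : ℝ => ((φ, s, t) : ℝ × ℝ × ℝ)) e2 ψ :=
    fun φ t ψ => (hasDerivAt_const ψ φ).prodMk ((hasDerivAt_id ψ).prodMk (hasDerivAt_const ψ t))
  have hc3 : ∀ (φ ψ t : ℝ), HasDerivAt (fun s : ℝ => ((φ, ψ, s) : ℝ × ℝ × ℝ)) e3 t :=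
    fun φ ψ t => (hasDerivAt_const t φ).prodMk ((hasDerivAt_const t ψ).prodMk (hasDerivAt_id t))
  have hcurve : ∀ (c : ℝ → ℝ × ℝ × ℝ) (s : ℝ) (e : ℝ × ℝ × ℝ), HasDerivAt c e s →
      HasDerivAt (fun s' => F2 (c s')) (DF (c s) e) s :=
    fun c s e hc => (hDFat (c s)).comp_hasDerivAt s hc
  have hdXφ : ∀ φ ψ t, HasDerivAt (fun φ' => X φ' ψ t) ((DF (φ, ψ, t)) e1).1 φ :=
    fun φ ψ t => hderiv_fst (hcurve _ φ _ (hc1 ψ t φ))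
  have hdPφ : ∀ φ ψ t, HasDerivAt (fun φ' => P φ' ψ t) ((DF (φ, ψ, t)) e1).2 φ :=
    fun φ ψ t => hderiv_snd (hcurve _ φ _ (hc1 ψ t φ))
  have hdXψ : ∀ φ ψ t, HasDerivAt (fun ψ' => X φ ψ' t) ((DF (φ, ψ, t)) e2).1 ψ :=
    fun φ ψ t => hderiv_fst (hcurve _ ψ _ (hc2 φ t ψ))
  have hdPψ : ∀ φ ψ t, HasDerivAt (fun ψ' => P φ ψ' t) ((DF (φ, ψ, t)) e2).2 ψ :=
    fun φ ψ t => hderiv_snd (hcurve _ ψ _ (hc2 φ t ψ))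
  have hdXt : ∀ φ ψ t, HasDerivAt (fun t' => X φ ψ t') ((DF (φ, ψ, t)) e3).1 t :=
    fun φ ψ t => hderiv_fst (hcurve _ t _ (hc3 φ ψ t))
  have hdPt : ∀ φ ψ t, HasDerivAt (fun t' => P φ ψ t') ((DF (φ, ψ, t)) e3).2 t :=
    fun φ ψ t => hderiv_snd (hcurve _ t _ (hc3 φ ψ t))
  -- second derivative along curves
  have happly : ∀ (e : ℝ × ℝ × ℝ) (c : ℝ → ℝ × ℝ × ℝ) (s : ℝ) (e' : ℝ × ℝ × ℝ),
      HasDerivAt c e' s → HasDerivAt (fun s' => DF (c s') e) (D2 (c s) e' e) s := by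
    intro e c s e' hc
    have h0 : HasFDerivAt (fun q => DF q e)
        ((ContinuousLinearMap.apply ℝ (EuclideanSpace ℝ (Fin 2) × EuclideanSpace ℝ (Fin 2)) e).comp (D2 (c s))) (c s) :=
      ((ContinuousLinearMap.apply ℝ (EuclideanSpace ℝ (Fin 2) × EuclideanSpace ℝ (Fin 2)) e).hasFDerivAt).comp (c s) (hD2at (c s))
    exact h0.comp_hasDerivAt s hc
  -- ## the Hamiltonian along the flow, and gradients
  have hUopen : IsOpen {z : EuclideanSpace ℝ (Fin 2) × EuclideanSpace ℝ (Fin 2) | z.2 ≠ 0} :=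
    isOpen_compl_singleton.preimage continuous_snd
  have hHd : ∀ z : EuclideanSpace ℝ (Fin 2) × EuclideanSpace ℝ (Fin 2), z.2 ≠ 0 →
      HasFDerivAt (fun z : EuclideanSpace ℝ (Fin 2) × EuclideanSpace ℝ (Fin 2) => H z.1 z.2) (fderiv ℝ (fun z : EuclideanSpace ℝ (Fin 2) × EuclideanSpace ℝ (Fin 2) => H z.1 z.2) z) z := by
    intro z hz
    exact ((hH.contDiffAt (hUopen.mem_nhds hz)).differentiableAt (by simp)).hasFDerivAt
  -- partial gradients characterizations
  have hgx : ∀ (x p : EuclideanSpace ℝ (Fin 2)), p ≠ 0 → ∀ v : EuclideanSpace ℝ (Fin 2),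
      ⟪gradient (fun x' => H x' p) x, v⟫ = fderiv ℝ (fun z : EuclideanSpace ℝ (Fin 2) × EuclideanSpace ℝ (Fin 2) => H z.1 z.2) (x, p) (v, 0) := by
    intro x p hp v
    have h1 : HasFDerivAt (fun x' => H x' p)
        ((fderiv ℝ (fun z : EuclideanSpace ℝ (Fin 2) × EuclideanSpace ℝ (Fin 2) => H z.1 z.2) (x, p)).comp
          ((ContinuousLinearMap.id ℝ (EuclideanSpace ℝ (Fin 2))).prod 0)) x :=
      by
        have hf : HasFDerivAt (fun x' : EuclideanSpace ℝ (Fin 2) => (x', p))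
            ((ContinuousLinearMap.id ℝ (EuclideanSpace ℝ (Fin 2))).prod 0) x :=
          (hasFDerivAt_id x).prodMk (hasFDerivAt_const p x)
        exact (hHd (x, p) hp).comp x hf
    have h2 := (h1.differentiableAt.hasGradientAt (𝕜 := ℝ))
    have h3 := hasGradientAt_iff_hasFDerivAt.1 h2
    have h4 := h3.unique h1
    calc ⟪gradient (fun x' => H x' p) x, v⟫
        = (InnerProductSpace.toDual ℝ (EuclideanSpace ℝ (Fin 2))) (gradient (fun x' => H x' p) x) v := by
          rw [InnerProductSpace.toDual_apply_apply]
      _ = fderiv ℝ (fun z : EuclideanSpace ℝ (Fin 2) × EuclideanSpace ℝ (Fin 2) => H z.1 z.2) (x, p) (v, 0) := by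
          rw [h4]; simp
  have hgp : ∀ (x p : EuclideanSpace ℝ (Fin 2)), p ≠ 0 → ∀ w : EuclideanSpace ℝ (Fin 2),
      ⟪gradient (fun p' => H x p') p, w⟫ = fderiv ℝ (fun z : EuclideanSpace ℝ (Fin 2) × EuclideanSpace ℝ (Fin 2) => H z.1 z.2) (x, p) (0, w) := by
    intro x p hp w
    have h1 : HasFDerivAt (fun p' => H x p')
        ((fderiv ℝ (fun z : EuclideanSpace ℝ (Fin 2) × EuclideanSpace ℝ (Fin 2) => H z.1 z.2) (x, p)).comp
          ((0 : EuclideanSpace ℝ (Fin 2) →L[ℝ] EuclideanSpace ℝ (Fin 2)).prod (ContinuousLinearMap.id ℝ (EuclideanSpace ℝ (Fin 2))))) p :=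
      (hHd (x, p) hp).comp p ((hasFDerivAt_const x p).prodMk (hasFDerivAt_id p))
    have h2 := (h1.differentiableAt.hasGradientAt (𝕜 := ℝ))
    have h3 := hasGradientAt_iff_hasFDerivAt.1 h2
    have h4 := h3.unique h1
    calc ⟪gradient (fun p' => H x p') p, w⟫
        = (InnerProductSpace.toDual ℝ (EuclideanSpace ℝ (Fin 2))) (gradient (fun p' => H x p') p) w := by
          rw [InnerProductSpace.toDual_apply_apply]
      _ = fderiv ℝ (fun z : EuclideanSpace ℝ (Fin 2) × EuclideanSpace ℝ (Fin 2) => H z.1 z.2) (x, p) (0, w) := by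
          rw [h4]; simp
  have hsplit : ∀ (x p : EuclideanSpace ℝ (Fin 2)), p ≠ 0 → ∀ (v w : EuclideanSpace ℝ (Fin 2)),
      fderiv ℝ (fun z : EuclideanSpace ℝ (Fin 2) × EuclideanSpace ℝ (Fin 2) => H z.1 z.2) (x, p) (v, w) =
        ⟪gradient (fun x' => H x' p) x, v⟫ + ⟪gradient (fun p' => H x p') p, w⟫ := by
    intro x p hp v w
    rw [hgx x p hp v, hgp x p hp w]
    have : ((v, w) : EuclideanSpace ℝ (Fin 2) × EuclideanSpace ℝ (Fin 2)) = (v, (0 : EuclideanSpace ℝ (Fin 2))) + ((0 : EuclideanSpace ℝ (Fin 2)), w) := by simp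
    rw [this, map_add]
  -- ## Euler identity
  have euler : ∀ (x p : EuclideanSpace ℝ (Fin 2)), p ≠ 0 → ⟪p, gradient (fun p' => H x p') p⟫ = H x p := by
    intro x p hp
    have h1 : HasFDerivAt (fun p' => H x p')
        ((fderiv ℝ (fun z : EuclideanSpace ℝ (Fin 2) × EuclideanSpace ℝ (Fin 2) => H z.1 z.2) (x, p)).comp
          ((0 : EuclideanSpace ℝ (Fin 2) →L[ℝ] EuclideanSpace ℝ (Fin 2)).prod (ContinuousLinearMap.id ℝ (EuclideanSpace ℝ (Fin 2))))) p :=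
      (hHd (x, p) hp).comp p ((hasFDerivAt_const x p).prodMk (hasFDerivAt_id p))
    have hgd : HasGradientAt (fun p' => H x p') (gradient (fun p' => H x p') p) p :=
      h1.differentiableAt.hasGradientAt
    have hcs : HasDerivAt (fun s : ℝ => s • p) p 1 := by
      simpa using (hasDerivAt_id (1 : ℝ)).smul_const p
    have hA : HasDerivAt (fun s : ℝ => H x (s • p)) ⟪gradient (fun p' => H x p') p, p⟫ 1 := by
      have hfd2 : HasFDerivAt (fun p' => H x p')
          ((InnerProductSpace.toDual ℝ (EuclideanSpace ℝ (Fin 2)))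
            (gradient (fun p' => H x p') p)) ((1:ℝ) • p) := by
        rw [one_smul]
        exact hasGradientAt_iff_hasFDerivAt.1 hgd
      have := hfd2.comp_hasDerivAt 1 hcs
      exact this
    have hB : HasDerivAt (fun s : ℝ => s * H x p) (H x p) 1 := by
      simpa using (hasDerivAt_id (1 : ℝ)).mul_const (H x p)
    have heq : (fun s : ℝ => s * H x p) =ᶠ[nhds 1] fun s : ℝ => H x (s • p) := by
      filter_upwards [Ioi_mem_nhds (by norm_num : (0:ℝ) < 1)] with s hs
      exact (hhom x p hp s hs).symm
    have := (hA.congr_of_eventuallyEq heq).unique hB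
    rw [real_inner_comm]
    exact this
  -- ## Hamilton's equations in fderiv form
  have hVX : ∀ φ ψ t, ((DF (φ, ψ, t)) e3).1 =
      gradient (fun p => H (X φ ψ t) p) (P φ ψ t) :=
    fun φ ψ t => ((hdXt φ ψ t).deriv).symm.trans (hamX φ ψ t)
  have hVP : ∀ φ ψ t, ((DF (φ, ψ, t)) e3).2 =
      - gradient (fun x => H x (P φ ψ t)) (X φ ψ t) :=
    fun φ ψ t => ((hdPt φ ψ t).deriv).symm.trans (hamP φ ψ t)
  -- Euler along the flow
  have hk : ∀ φ ψ t, ⟪P φ ψ t, ((DF (φ, ψ, t)) e3).1⟫ = H (X φ ψ t) (P φ ψ t) := by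
    intro φ ψ t
    rw [hVX φ ψ t]
    exact euler (X φ ψ t) (P φ ψ t) (hPne φ ψ t)
  -- chain rule for h := H(X,P) along curves
  have hhd : ∀ (c : ℝ → ℝ × ℝ × ℝ) (s : ℝ) (e : ℝ × ℝ × ℝ), HasDerivAt c e s →
      HasDerivAt (fun s' => H (X (c s').1 (c s').2.1 (c s').2.2) (P (c s').1 (c s').2.1 (c s').2.2))
        (⟪gradient (fun x => H x (P (c s).1 (c s).2.1 (c s).2.2)) (X (c s).1 (c s).2.1 (c s).2.2),
            ((DF (c s)) e).1⟫ +
         ⟪gradient (fun p => H (X (c s).1 (c s).2.1 (c s).2.2) p) (P (c s).1 (c s).2.1 (c s).2.2),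
            ((DF (c s)) e).2⟫) s := by
    intro c s e hc
    have h1 : HasDerivAt (fun s' => F2 (c s')) (DF (c s) e) s := hcurve c s e hc
    have h2 := (hHd (F2 (c s)) (hPne (c s).1 (c s).2.1 (c s).2.2)).comp_hasDerivAt s h1
    have h3 : fderiv ℝ (fun z : EuclideanSpace ℝ (Fin 2) × EuclideanSpace ℝ (Fin 2) => H z.1 z.2) (F2 (c s)) (DF (c s) e) =
        ⟪gradient (fun x => H x (P (c s).1 (c s).2.1 (c s).2.2)) (X (c s).1 (c s).2.1 (c s).2.2),
            ((DF (c s)) e).1⟫ +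
        ⟪gradient (fun p => H (X (c s).1 (c s).2.1 (c s).2.2) p) (P (c s).1 (c s).2.1 (c s).2.2),
            ((DF (c s)) e).2⟫ := by
      have := hsplit (X (c s).1 (c s).2.1 (c s).2.2) (P (c s).1 (c s).2.1 (c s).2.2)
        (hPne (c s).1 (c s).2.1 (c s).2.2) ((DF (c s)) e).1 ((DF (c s)) e).2
      simpa using this
    rw [← h3]
    exact h2
  -- pointwise second-derivative identity: ⟪P, D2 e e3 .1⟫ = ⟪∇ₓH, DF e .1⟫
  have ptws : ∀ (q : ℝ × ℝ × ℝ) (c : ℝ → ℝ × ℝ × ℝ) (s : ℝ) (e : ℝ × ℝ × ℝ),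
      c s = q → HasDerivAt c e s →
      ⟪P q.1 q.2.1 q.2.2, ((D2 q) e e3).1⟫ =
        ⟪gradient (fun x => H x (P q.1 q.2.1 q.2.2)) (X q.1 q.2.1 q.2.2), ((DF q) e).1⟫ := by
    intro q c s e hcs hc
    subst hcs
    have hA : HasDerivAt (fun s' => ⟪P (c s').1 (c s').2.1 (c s').2.2, ((DF (c s')) e3).1⟫)
        (⟪P (c s).1 (c s).2.1 (c s).2.2, ((D2 (c s)) e e3).1⟫ +
          ⟪((DF (c s)) e).2, ((DF (c s)) e3).1⟫) s := by
      have hP' : HasDerivAt (fun s' => P (c s').1 (c s').2.1 (c s').2.2) ((DF (c s) e)).2 s :=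
        hderiv_snd (hcurve c s e hc)
      have hQ' : HasDerivAt (fun s' => ((DF (c s')) e3).1) (((D2 (c s)) e e3).1) s :=
        hderiv_fst (happly e3 c s e hc)
      exact hP'.inner ℝ hQ'
    have hB := hhd c s e hc
    have heq : (fun s' => ⟪P (c s').1 (c s').2.1 (c s').2.2, ((DF (c s')) e3).1⟫) =
        (fun s' => H (X (c s').1 (c s').2.1 (c s').2.2) (P (c s').1 (c s').2.1 (c s').2.2)) :=
      funext fun s' => hk (c s').1 (c s').2.1 (c s').2.2
    rw [heq] at hA
    have hu := hA.unique hB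
    have h5 : ⟪((DF (c s)) e).2, ((DF (c s)) e3).1⟫ =
        ⟪gradient (fun p => H (X (c s).1 (c s).2.1 (c s).2.2) p) (P (c s).1 (c s).2.1 (c s).2.2),
          ((DF (c s)) e).2⟫ := by
      rw [hVX (c s).1 (c s).2.1 (c s).2.2, real_inner_comm]
    rw [h5] at hu
    linarith
  -- ## conservation laws
  have conserve : ∀ (e : ℝ × ℝ × ℝ) (φ ψ t : ℝ),
      ⟪P φ ψ t, ((DF (φ, ψ, t)) e).1⟫ = ⟪P φ ψ 0, ((DF (φ, ψ, 0)) e).1⟫ := by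
    intro e φ ψ t
    have hd : ∀ s : ℝ, HasDerivAt (fun s' => ⟪P φ ψ s', ((DF (φ, ψ, s')) e).1⟫) 0 s := by
      intro s
      have hP' : HasDerivAt (fun s' => P φ ψ s') ((DF (φ, ψ, s)) e3).2 s := hdPt φ ψ s
      have hQ' : HasDerivAt (fun s' => ((DF (φ, ψ, s')) e).1) (((D2 (φ, ψ, s)) e3 e).1) s :=
        hderiv_fst (happly e _ s e3 (hc3 φ ψ s))
      have h0 := hP'.inner ℝ hQ'
      -- compute the value
      have hcl : HasDerivAt (fun r : ℝ => ((φ, ψ, s) : ℝ × ℝ × ℝ) + r • e) e 0 := by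
        simpa using ((hasDerivAt_id (0:ℝ)).smul_const e).const_add ((φ, ψ, s) : ℝ × ℝ × ℝ)
      have hval := ptws (φ, ψ, s) (fun r : ℝ => ((φ, ψ, s) : ℝ × ℝ × ℝ) + r • e) 0 e (by simp) hcl
      have hsy : ((D2 (φ, ψ, s)) e3 e).1 = ((D2 (φ, ψ, s)) e e3).1 := by
        rw [hsymm (φ, ψ, s) e3 e]
      have : ⟪P φ ψ s, ((D2 (φ, ψ, s)) e3 e).1⟫ + ⟪((DF (φ, ψ, s)) e3).2, ((DF (φ, ψ, s)) e).1⟫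
          = 0 := by
        rw [hsy, hval, hVP φ ψ s, inner_neg_left]
        ring
      rw [this] at h0
      exact h0
    have hdiffble : Differentiable ℝ (fun s' => ⟪P φ ψ s', ((DF (φ, ψ, s')) e).1⟫) :=
      fun s => (hd s).differentiableAt
    exact is_const_of_deriv_eq_zero hdiffble (fun s => (hd s).deriv) t 0
  -- initial values of the partial derivatives of X
  have ωd : ∀ ψ : ℝ, HasDerivAt ω (WithLp.toLp 2 ![-Real.sin ψ, Real.cos ψ] : EuclideanSpace ℝ (Fin 2)) ψ := by
    intro ψ
    have base : HasDerivAt (fun s : ℝ => (![Real.cos s, Real.sin s] : Fin 2 → ℝ))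
        (![-Real.sin ψ, Real.cos ψ]) ψ := by
      rw [hasDerivAt_pi]
      intro i
      fin_cases i
      · simpa using Real.hasDerivAt_cos ψ
      · simpa using Real.hasDerivAt_sin ψ
    have hfun : ω = fun s => (WithLp.toLp 2 ![Real.cos s, Real.sin s] : EuclideanSpace ℝ (Fin 2)) :=
      funext fun s => by rw [← hω s]
    rw [hfun]
    exact ((PiLp.continuousLinearEquiv 2 ℝ
      (fun _ : Fin 2 => ℝ)).symm.toContinuousLinearMap.hasFDerivAt).comp_hasDerivAt ψ base
  have ωunit : ∀ ψ : ℝ, ⟪ω ψ, ω ψ⟫ = (1 : ℝ) := by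
    intro ψ
    simp only [PiLp.inner_apply, RCLike.inner_apply, conj_trivial, Fin.sum_univ_two, hω,
      Matrix.cons_val_zero, Matrix.cons_val_one, Matrix.head_cons]
    nlinarith [Real.sin_sq_add_cos_sq ψ]
  have ωperp : ∀ ψ : ℝ, ⟪ω ψ, (WithLp.toLp 2 ![-Real.sin ψ, Real.cos ψ] : EuclideanSpace ℝ (Fin 2))⟫ = (0:ℝ) := by
    intro ψ
    simp only [PiLp.inner_apply, RCLike.inner_apply, conj_trivial, Fin.sum_univ_two, hω,
      Matrix.cons_val_zero, Matrix.cons_val_one, Matrix.head_cons]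
    ring
  have init1 : ∀ φ ψ : ℝ, ((DF (φ, ψ, 0)) e1).1 = ω ψ := by
    intro φ ψ
    have ha := hdXφ φ ψ 0
    have hb : HasDerivAt (fun φ' => X φ' ψ 0) (ω ψ) φ := by
      have hfun : (fun φ' => X φ' ψ 0) = fun φ' => φ' • ω ψ := funext fun φ' => hX0 φ' ψ
      rw [hfun]
      simpa using (hasDerivAt_id φ).smul_const (ω ψ)
    exact ha.unique hb
  have init2 : ∀ φ ψ : ℝ, ((DF (φ, ψ, 0)) e2).1 =
      φ • (WithLp.toLp 2 ![-Real.sin ψ, Real.cos ψ] : EuclideanSpace ℝ (Fin 2)) := by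
    intro φ ψ
    have ha := hdXψ φ ψ 0
    have hb : HasDerivAt (fun ψ' => X φ ψ' 0)
        (φ • (WithLp.toLp 2 ![-Real.sin ψ, Real.cos ψ] : EuclideanSpace ℝ (Fin 2))) ψ := by
      have hfun : (fun ψ' => X φ ψ' 0) = fun ψ' => φ • ω ψ' := funext fun ψ' => hX0 φ ψ'
      rw [hfun]
      exact (ωd ψ).const_smul φ
    exact ha.unique hb
  have key1 : ∀ φ ψ t : ℝ, ⟪P φ ψ t, ((DF (φ, ψ, t)) e1).1⟫ = (1 : ℝ) := by
    intro φ ψ t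
    rw [conserve e1 φ ψ t, hP0 φ ψ, init1 φ ψ]
    exact ωunit ψ
  have key2 : ∀ φ ψ t : ℝ, ⟪P φ ψ t, ((DF (φ, ψ, t)) e2).1⟫ = (0 : ℝ) := by
    intro φ ψ t
    rw [conserve e2 φ ψ t, hP0 φ ψ, init2 φ ψ, real_inner_smul_right, ωperp ψ]
    ring
  -- ## derivatives of Φ
  have hΦl : ∀ (l φ ψ t : ℝ) (x : EuclideanSpace ℝ (Fin 2)),
      HasDerivAt (fun l' => Φ l' φ ψ x t) ⟪P φ ψ t, x - X φ ψ t⟫ l := by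
    intro l φ ψ t x
    have hfun : (fun l' => Φ l' φ ψ x t) = fun l' => φ + l' * ⟪P φ ψ t, x - X φ ψ t⟫ :=
      funext fun l' => hΦ l' φ ψ x t
    rw [hfun]
    simpa using ((hasDerivAt_id l).mul_const ⟪P φ ψ t, x - X φ ψ t⟫).const_add φ
  have hΦφ : ∀ (l φ ψ t : ℝ) (x : EuclideanSpace ℝ (Fin 2)),
      HasDerivAt (fun φ' => Φ l φ' ψ x t)
        (1 + l * (⟪P φ ψ t, -((DF (φ, ψ, t)) e1).1⟫ + ⟪((DF (φ, ψ, t)) e1).2, x - X φ ψ t⟫)) φ := by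
    intro l φ ψ t x
    have hfun : (fun φ' => Φ l φ' ψ x t) = fun φ' => φ' + l * ⟪P φ' ψ t, x - X φ' ψ t⟫ :=
      funext fun φ' => hΦ l φ' ψ x t
    rw [hfun]
    have hinner : HasDerivAt (fun φ' => ⟪P φ' ψ t, x - X φ' ψ t⟫)
        (⟪P φ ψ t, -((DF (φ, ψ, t)) e1).1⟫ + ⟪((DF (φ, ψ, t)) e1).2, x - X φ ψ t⟫) φ :=
      (hdPφ φ ψ t).inner ℝ ((hdXφ φ ψ t).const_sub x)
    exact (hasDerivAt_id' φ).add (hinner.const_mul l)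
  have hΦψ : ∀ (l φ ψ t : ℝ) (x : EuclideanSpace ℝ (Fin 2)),
      HasDerivAt (fun ψ' => Φ l φ ψ' x t)
        (l * (⟪P φ ψ t, -((DF (φ, ψ, t)) e2).1⟫ + ⟪((DF (φ, ψ, t)) e2).2, x - X φ ψ t⟫)) ψ := by
    intro l φ ψ t x
    have hfun : (fun ψ' => Φ l φ ψ' x t) = fun ψ' => φ + l * ⟪P φ ψ' t, x - X φ ψ' t⟫ :=
      funext fun ψ' => hΦ l φ ψ' x t
    rw [hfun]
    have hinner : HasDerivAt (fun ψ' => ⟪P φ ψ' t, x - X φ ψ' t⟫)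
        (⟪P φ ψ t, -((DF (φ, ψ, t)) e2).1⟫ + ⟪((DF (φ, ψ, t)) e2).2, x - X φ ψ t⟫) ψ :=
      (hdPψ φ ψ t).inner ℝ ((hdXψ φ ψ t).const_sub x)
    simpa using (hinner.const_mul l).const_add φ
  have hΦt : ∀ (l φ ψ t : ℝ) (x : EuclideanSpace ℝ (Fin 2)),
      HasDerivAt (fun t' => Φ l φ ψ x t')
        (l * (⟪P φ ψ t, -((DF (φ, ψ, t)) e3).1⟫ + ⟪((DF (φ, ψ, t)) e3).2, x - X φ ψ t⟫)) t := by
    intro l φ ψ t x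
    have hfun : (fun t' => Φ l φ ψ x t') = fun t' => φ + l * ⟪P φ ψ t', x - X φ ψ t'⟫ :=
      funext fun t' => hΦ l φ ψ x t'
    rw [hfun]
    have hinner : HasDerivAt (fun t' => ⟪P φ ψ t', x - X φ ψ t'⟫)
        (⟪P φ ψ t, -((DF (φ, ψ, t)) e3).1⟫ + ⟪((DF (φ, ψ, t)) e3).2, x - X φ ψ t⟫) t :=
      (hdPt φ ψ t).inner ℝ ((hdXt φ ψ t).const_sub x)
    simpa using (hinner.const_mul l).const_add φ
  -- ## part (ii)
  have partII : ∀ (l φ ψ t : ℝ) (x : EuclideanSpace ℝ (Fin 2)),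
      deriv (fun l' => Φ l' φ ψ x t) l = 0 →
      deriv (fun φ' => Φ l φ' ψ x t) φ = 0 →
      deriv (fun ψ' => Φ l φ ψ' x t) ψ = 0 →
      detPψ φ ψ t ≠ 0 →
      x = X φ ψ t ∧ l = 1 ∧
      gradient (fun x' => Φ l φ ψ x' t) x = P φ ψ t ∧
      -deriv (fun t' => Φ l φ ψ x t') t = H (X φ ψ t) (P φ ψ t) := by
    intro l φ ψ t x h1 h2 h3 hdne
    rw [(hΦl l φ ψ t x).deriv] at h1
    rw [(hΦφ l φ ψ t x).deriv] at h2
    rw [(hΦψ l φ ψ t x).deriv] at h3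
    have n1 : ⟪P φ ψ t, -((DF (φ, ψ, t)) e1).1⟫ = (-1 : ℝ) := by
      rw [inner_neg_right, key1]
    have n2 : ⟪P φ ψ t, -((DF (φ, ψ, t)) e2).1⟫ = (0 : ℝ) := by
      rw [inner_neg_right, key2, neg_zero]
    rw [n1] at h2
    rw [n2, zero_add] at h3
    have hl0 : l ≠ 0 := by
      rintro rfl
      simp at h2
    have h3' : ⟪((DF (φ, ψ, t)) e2).2, x - X φ ψ t⟫ = (0 : ℝ) :=
      (mul_eq_zero.1 h3).resolve_left hl0
    have hQd : deriv (fun ψ' => P φ ψ' t) ψ = ((DF (φ, ψ, t)) e2).2 := (hdPψ φ ψ t).deriv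
    rw [hdet, hQd] at hdne
    have c1 : P φ ψ t 0 * (x - X φ ψ t) 0 + P φ ψ t 1 * (x - X φ ψ t) 1 = 0 := by
      have h := h1
      simp [PiLp.inner_apply, Fin.sum_univ_two] at h ⊢
      linear_combination h
    have c2 : ((DF (φ, ψ, t)) e2).2 0 * (x - X φ ψ t) 0 +
        ((DF (φ, ψ, t)) e2).2 1 * (x - X φ ψ t) 1 = 0 := by
      have h := h3'
      simp [PiLp.inner_apply, Fin.sum_univ_two] at h ⊢
      linear_combination h
    have hy0 : (x - X φ ψ t) 0 = 0 := by
      have e0 : (x - X φ ψ t) 0 *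
          (P φ ψ t 0 * ((DF (φ, ψ, t)) e2).2 1 - P φ ψ t 1 * ((DF (φ, ψ, t)) e2).2 0) = 0 := by
        linear_combination ((DF (φ, ψ, t)) e2).2 1 * c1 - P φ ψ t 1 * c2
      exact (mul_eq_zero.1 e0).resolve_right hdne
    have hy1 : (x - X φ ψ t) 1 = 0 := by
      have e0 : (x - X φ ψ t) 1 *
          (P φ ψ t 0 * ((DF (φ, ψ, t)) e2).2 1 - P φ ψ t 1 * ((DF (φ, ψ, t)) e2).2 0) = 0 := by
        linear_combination (-(((DF (φ, ψ, t)) e2).2 0)) * c1 + P φ ψ t 0 * c2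
      exact (mul_eq_zero.1 e0).resolve_right hdne
    have hsub : x - X φ ψ t = 0 := by
      ext i
      fin_cases i
      · simpa using hy0
      · simpa using hy1
    have hx : x = X φ ψ t := sub_eq_zero.1 hsub
    have hl1 : l = 1 := by
      rw [hsub, inner_zero_right] at h2
      linarith
    subst hl1
    subst hx
    refine ⟨rfl, rfl, ?_, ?_⟩
    · have hfun : (fun x' : EuclideanSpace ℝ (Fin 2) => Φ 1 φ ψ x' t) =
          fun x' => (φ - ⟪P φ ψ t, X φ ψ t⟫) +
            (InnerProductSpace.toDual ℝ (EuclideanSpace ℝ (Fin 2)) (P φ ψ t)) x' := by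
        funext x'
        rw [hΦ, inner_sub_right, InnerProductSpace.toDual_apply_apply]
        ring
      rw [hfun]
      have hfd : HasFDerivAt
          (fun x' => (φ - ⟪P φ ψ t, X φ ψ t⟫) +
            (InnerProductSpace.toDual ℝ (EuclideanSpace ℝ (Fin 2)) (P φ ψ t)) x')
          (InnerProductSpace.toDual ℝ (EuclideanSpace ℝ (Fin 2)) (P φ ψ t)) (X φ ψ t) :=
        (InnerProductSpace.toDual ℝ (EuclideanSpace ℝ (Fin 2)) (P φ ψ t)).hasFDerivAt.const_add _
      exact (hasGradientAt_iff_hasFDerivAt.2 hfd).gradient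
    · rw [(hΦt 1 φ ψ t (X φ ψ t)).deriv]
      have n3 : ⟪P φ ψ t, -((DF (φ, ψ, t)) e3).1⟫ = -(H (X φ ψ t) (P φ ψ t)) := by
        rw [inner_neg_right, hk]
      rw [n3, sub_self, inner_zero_right]
      ring
  -- ## part (iii)
  have partIII : ∀ φ ψ t : ℝ,
      deriv (fun l' => Φ l' φ ψ (X φ ψ t) t) 1 = 0 ∧
      deriv (fun φ' => Φ 1 φ' ψ (X φ ψ t) t) φ = 0 ∧
      deriv (fun ψ' => Φ 1 φ ψ' (X φ ψ t) t) ψ = 0 := by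
    intro φ ψ t
    refine ⟨?_, ?_, ?_⟩
    · rw [(hΦl 1 φ ψ t (X φ ψ t)).deriv, sub_self, inner_zero_right]
    · rw [(hΦφ 1 φ ψ t (X φ ψ t)).deriv, sub_self, inner_zero_right, inner_neg_right, key1]
      ring
    · rw [(hΦψ 1 φ ψ t (X φ ψ t)).deriv, sub_self, inner_zero_right, inner_neg_right, key2]
      ring
  -- ## assembling the conclusion
  refine ⟨?_, ?_, partII, partIII, ?_⟩
  · intro l φ ψ x
    rw [hΦ, hP0, hX0, inner_sub_right, real_inner_smul_right, ωunit]
    ring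
  · intro φ ψ
    have hQ : deriv (fun ψ' => P φ ψ' 0) ψ =
        (WithLp.toLp 2 ![-Real.sin ψ, Real.cos ψ] : EuclideanSpace ℝ (Fin 2)) := by
      have hfun : (fun ψ' => P φ ψ' 0) = ω := funext fun ψ' => hP0 φ ψ'
      rw [hfun]
      exact (ωd ψ).deriv
    rw [hdet, hQ, hP0, hω]
    simp only [Matrix.cons_val_zero, Matrix.cons_val_one, Matrix.head_cons]
    nlinarith [Real.sin_sq_add_cos_sq ψ]
  · ext w
    simp only [Set.mem_setOf_eq]
    constructor
    · rintro ⟨l, φ, ψ, t, x, h1, h2, h3, hd, rfl⟩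
      obtain ⟨hx, hl, hg, ht⟩ := partII l φ ψ t x h1 h2 h3 hd
      exact ⟨φ, ψ, t, hd, by rw [hg, ht, hx]⟩
    · rintro ⟨φ, ψ, t, hd, rfl⟩
      obtain ⟨hcl, hcφ, hcψ⟩ := partIII φ ψ t
      obtain ⟨hx, hl, hg, ht⟩ := partII 1 φ ψ t (X φ ψ t) hcl hcφ hcψ hd
      exact ⟨1, φ, ψ, t, X φ ψ t, hcl, hcφ, hcψ, hd, by rw [hg, ht]⟩
end

section
/- (Proposition 3.) Under the setup of Proposition 2, fix E∈ℝ and set Φ₊(λ,φ,ψ,t,x)=Φ(λ,φ,ψ,x,t)+E·t with θ₊=(λ,φ,ψ,t). If ∂_λΦ₊=∂_φΦ₊=∂_ψΦ₊=∂ₜΦ₊=0 at (λ,φ,ψ,t,x) and det(P(φ,ψ,t),∂_ψP(φ,ψ,t))≠0, then x=X(φ,ψ,t), λ=1, ∇ₓΦ₊=P(φ,ψ,t) and H(X(φ,ψ,t),P(φ,ψ,t))=E; conversely, if H(φω(ψ),ω(ψ))=E then (1,φ,ψ,t,X(φ,ψ,t)) lies in the critical set {∂_{θ₊}Φ₊=0}.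 Hence Φ₊ is a generating family for the flow-out Λ₊^E={(X(φ,ψ,t),P(φ,ψ,t)) : t≥0, H(φω(ψ),ω(ψ))=E}⊂T*ℝ² at points where det(P,∂_ψP)≠0. -/
open scoped RealInnerProductSpace

local notation "E2" => EuclideanSpace ℝ (Fin 2)


section aux
variable {F : Type*} [NormedAddCommGroup F] [NormedSpace ℝ F]

private lemma hasDerivAt_comp_line {G : ℝ×ℝ×ℝ → F} (hG : Differentiable ℝ G)
    {c : ℝ → ℝ×ℝ×ℝ} {v : ℝ×ℝ×ℝ} {s : ℝ} (hc : HasDerivAt c v s) :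
    HasDerivAt (fun r => G (c r)) (fderiv ℝ G (c s) v) s :=
  (hG (c s)).hasFDerivAt.comp_hasDerivAt s hc

private lemma contDiff_fderiv {G : ℝ×ℝ×ℝ → F} (hG : ContDiff ℝ (⊤ : ℕ∞) G) :
    ContDiff ℝ (⊤ : ℕ∞) (fderiv ℝ G) :=
  hG.fderiv_right (by simp)

private lemma mixed_partial {G : ℝ×ℝ×ℝ → F} (hG : ContDiff ℝ (⊤ : ℕ∞) G) (q : ℝ×ℝ×ℝ) (v w : ℝ×ℝ×ℝ) :
    fderiv ℝ (fderiv ℝ G) q v w = fderiv ℝ (fderiv ℝ G) q w v :=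
  second_derivative_symmetric (fun y => (hG.differentiable (by simp) y).hasFDerivAt)
    (((contDiff_fderiv hG).differentiable (by simp) q).hasFDerivAt) v w

private lemma hasDerivAt_fderiv_line {G : ℝ×ℝ×ℝ → F} (hG : ContDiff ℝ (⊤ : ℕ∞) G)
    {c : ℝ → ℝ×ℝ×ℝ} {v : ℝ×ℝ×ℝ} {s : ℝ} (hc : HasDerivAt c v s) (u : ℝ×ℝ×ℝ) :
    HasDerivAt (fun r => fderiv ℝ G (c r) u) (fderiv ℝ (fderiv ℝ G) (c s) v u) s := by
  have h1 : HasDerivAt (fun r => fderiv ℝ G (c r)) (fderiv ℝ (fderiv ℝ G) (c s) v) s :=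
    hasDerivAt_comp_line ((contDiff_fderiv hG).differentiable (by simp)) hc
  simpa [Function.comp_def] using ((ContinuousLinearMap.apply ℝ F u).hasFDerivAt.comp_hasDerivAt s h1)

private lemma line_phi (φ ψ t : ℝ) :
    HasDerivAt (fun φ' : ℝ => ((φ', ψ, t) : ℝ×ℝ×ℝ)) ((1,0,0) : ℝ×ℝ×ℝ) φ := by
  exact (hasDerivAt_id φ).prodMk (hasDerivAt_const φ ((ψ, t) : ℝ×ℝ))

private lemma line_psi (φ ψ t : ℝ) :
    HasDerivAt (fun ψ' : ℝ => ((φ, ψ', t) : ℝ×ℝ×ℝ)) ((0,1,0) : ℝ×ℝ×ℝ) ψ := by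
  simpa using (hasDerivAt_const ψ φ).prodMk ((hasDerivAt_id ψ).prodMk (hasDerivAt_const ψ t))

private lemma line_t (φ ψ t : ℝ) :
    HasDerivAt (fun t' : ℝ => ((φ, ψ, t') : ℝ×ℝ×ℝ)) ((0,0,1) : ℝ×ℝ×ℝ) t := by
  simpa using (hasDerivAt_const t φ).prodMk ((hasDerivAt_const t ψ).prodMk (hasDerivAt_id t))

-- slice derivatives as fderiv evaluations
private lemma slice_phi {G : ℝ×ℝ×ℝ → F} (hG : ContDiff ℝ (⊤ : ℕ∞) G) (φ ψ t : ℝ) :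
    HasDerivAt (fun φ' => G (φ', ψ, t)) (fderiv ℝ G (φ, ψ, t) (1,0,0)) φ :=
  hasDerivAt_comp_line (hG.differentiable (by simp)) (line_phi φ ψ t)

private lemma slice_psi {G : ℝ×ℝ×ℝ → F} (hG : ContDiff ℝ (⊤ : ℕ∞) G) (φ ψ t : ℝ) :
    HasDerivAt (fun ψ' => G (φ, ψ', t)) (fderiv ℝ G (φ, ψ, t) (0,1,0)) ψ :=
  hasDerivAt_comp_line (hG.differentiable (by simp)) (line_psi φ ψ t)

private lemma slice_t {G : ℝ×ℝ×ℝ → F} (hG : ContDiff ℝ (⊤ : ℕ∞) G) (φ ψ t : ℝ) :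
    HasDerivAt (fun t' => G (φ, ψ, t')) (fderiv ℝ G (φ, ψ, t) (0,0,1)) t :=
  hasDerivAt_comp_line (hG.differentiable (by simp)) (line_t φ ψ t)

/-- t-derivative of the φ-partial equals φ-derivative of the t-partial (Schwarz). -/
private lemma mixed_t_phi {G : ℝ×ℝ×ℝ → F} (hG : ContDiff ℝ (⊤ : ℕ∞) G) (φ ψ t : ℝ) :
    HasDerivAt (fun t' => deriv (fun φ' => G (φ', ψ, t')) φ)
      (deriv (fun φ' => deriv (fun t' => G (φ', ψ, t')) t) φ) t := by
  have e1 : (fun t' => deriv (fun φ' => G (φ', ψ, t')) φ)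
      = fun t' => fderiv ℝ G (φ, ψ, t') (1,0,0) := by
    funext t'; exact (slice_phi hG φ ψ t').deriv
  have e2 : (fun φ' => deriv (fun t' => G (φ', ψ, t')) t)
      = fun φ' => fderiv ℝ G (φ', ψ, t) (0,0,1) := by
    funext φ'; exact (slice_t hG φ' ψ t).deriv
  have h1 : HasDerivAt (fun t' => fderiv ℝ G (φ, ψ, t') (1,0,0))
      (fderiv ℝ (fderiv ℝ G) (φ, ψ, t) (0,0,1) (1,0,0)) t :=
    hasDerivAt_fderiv_line hG (line_t φ ψ t) _
  have h2 : HasDerivAt (fun φ' => fderiv ℝ G (φ', ψ, t) (0,0,1))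
      (fderiv ℝ (fderiv ℝ G) (φ, ψ, t) (1,0,0) (0,0,1)) φ :=
    hasDerivAt_fderiv_line hG (line_phi φ ψ t) _
  rw [e1, e2, h2.deriv, ← mixed_partial hG]
  exact h1

private lemma mixed_t_psi {G : ℝ×ℝ×ℝ → F} (hG : ContDiff ℝ (⊤ : ℕ∞) G) (φ ψ t : ℝ) :
    HasDerivAt (fun t' => deriv (fun ψ' => G (φ, ψ', t')) ψ)
      (deriv (fun ψ' => deriv (fun t' => G (φ, ψ', t')) t) ψ) t := by
  have e1 : (fun t' => deriv (fun ψ' => G (φ, ψ', t')) ψ)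
      = fun t' => fderiv ℝ G (φ, ψ, t') (0,1,0) := by
    funext t'; exact (slice_psi hG φ ψ t').deriv
  have e2 : (fun ψ' => deriv (fun t' => G (φ, ψ', t')) t)
      = fun ψ' => fderiv ℝ G (φ, ψ', t) (0,0,1) := by
    funext ψ'; exact (slice_t hG φ ψ' t).deriv
  have h1 : HasDerivAt (fun t' => fderiv ℝ G (φ, ψ, t') (0,1,0))
      (fderiv ℝ (fderiv ℝ G) (φ, ψ, t) (0,0,1) (0,1,0)) t :=
    hasDerivAt_fderiv_line hG (line_t φ ψ t) _
  have h2 : HasDerivAt (fun ψ' => fderiv ℝ G (φ, ψ', t) (0,0,1))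
      (fderiv ℝ (fderiv ℝ G) (φ, ψ, t) (0,1,0) (0,0,1)) ψ :=
    hasDerivAt_fderiv_line hG (line_psi φ ψ t) _
  rw [e1, e2, h2.deriv, ← mixed_partial hG]
  exact h1

end aux

private lemma sopen : IsOpen {z : E2 × E2 | z.2 ≠ 0} :=
  isOpen_compl_singleton.preimage continuous_snd

section H
variable (H : E2 → E2 → ℝ)
  (hH : ContDiffOn ℝ (⊤ : ℕ∞) (fun z : E2 × E2 => H z.1 z.2) {z | z.2 ≠ 0})

include hH in
private lemma hHdiff {x p : E2} (hp : p ≠ 0) :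
    DifferentiableAt ℝ (fun z : E2 × E2 => H z.1 z.2) (x, p) :=
  (hH.contDiffAt (sopen.mem_nhds hp)).differentiableAt (by simp)

include hH in
private lemma slice_p {x p : E2} (hp : p ≠ 0) :
    HasFDerivAt (fun p' => H x p')
      ((fderiv ℝ (fun z : E2 × E2 => H z.1 z.2) (x, p)).comp
        (ContinuousLinearMap.inr ℝ E2 E2)) p :=
  (hHdiff H hH hp).hasFDerivAt.comp p (hasFDerivAt_prodMk_right x p)

include hH in
private lemma slice_x {x p : E2} (hp : p ≠ 0) :
    HasFDerivAt (fun x' => H x' p)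
      ((fderiv ℝ (fun z : E2 × E2 => H z.1 z.2) (x, p)).comp
        (ContinuousLinearMap.inl ℝ E2 E2)) x :=
  ((hHdiff H hH (x := x) hp).hasFDerivAt.comp x (hasFDerivAt_prodMk_left (𝕜 := ℝ) x p) :)

include hH in
private lemma gradP_eq {x p : E2} (hp : p ≠ 0) (v : E2) :
    ⟪gradient (fun p' => H x p') p, v⟫
      = fderiv ℝ (fun z : E2 × E2 => H z.1 z.2) (x, p) (0, v) := by
  have hfp : DifferentiableAt ℝ (fun p' => H x p') p := (slice_p H hH hp).differentiableAt
  have h' := hasGradientAt_iff_hasFDerivAt.mp hfp.hasGradientAt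
  have h2 : (InnerProductSpace.toDualMap ℝ E2) (gradient (fun p' => H x p') p)
      = (fderiv ℝ (fun z : E2 × E2 => H z.1 z.2) (x, p)).comp
        (ContinuousLinearMap.inr ℝ E2 E2) := h'.unique (slice_p H hH hp)
  have := congrArg (fun L : E2 →L[ℝ] ℝ => L v) h2
  simpa [InnerProductSpace.toDualMap_apply_apply] using this

include hH in
private lemma gradX_eq {x p : E2} (hp : p ≠ 0) (v : E2) :
    ⟪gradient (fun x' => H x' p) x, v⟫
      = fderiv ℝ (fun z : E2 × E2 => H z.1 z.2) (x, p) (v, 0) := by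
  have hfx : DifferentiableAt ℝ (fun x' => H x' p) x := (slice_x H hH hp).differentiableAt
  have h' := hasGradientAt_iff_hasFDerivAt.mp hfx.hasGradientAt
  have h2 : (InnerProductSpace.toDualMap ℝ E2) (gradient (fun x' => H x' p) x)
      = (fderiv ℝ (fun z : E2 × E2 => H z.1 z.2) (x, p)).comp
        (ContinuousLinearMap.inl ℝ E2 E2) := h'.unique (slice_x H hH hp)
  have := congrArg (fun L : E2 →L[ℝ] ℝ => L v) h2
  simpa [InnerProductSpace.toDualMap_apply_apply] using this

include hH in
private lemma euler
    (hhom : ∀ (x p : E2), p ≠ 0 → ∀ s : ℝ, 0 < s → H x (s • p) = s * H x p)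
    {x p : E2} (hp : p ≠ 0) :
    ⟪p, gradient (fun p' => H x p') p⟫ = H x p := by
  have hfp : DifferentiableAt ℝ (fun p' => H x p') p := (slice_p H hH hp).differentiableAt
  have hfd := hasGradientAt_iff_hasFDerivAt.mp hfp.hasGradientAt
  have line : HasDerivAt (fun s : ℝ => s • p) p 1 := by
    simpa using (hasDerivAt_id (1:ℝ)).smul_const p
  have h1 : HasDerivAt (fun s : ℝ => H x (s • p))
      ((InnerProductSpace.toDualMap ℝ E2) (gradient (fun p' => H x p') p) p) 1 := by
    have hfd' : HasFDerivAt (fun p' => H x p')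
        ((InnerProductSpace.toDual ℝ E2) (gradient (fun p' => H x p') p)) ((1:ℝ) • p) := by
      rw [one_smul]; exact hfd
    have := hfd'.comp_hasDerivAt (1:ℝ) line
    simpa [InnerProductSpace.toDualMap_apply_apply, Function.comp_def] using this
  have heq : (fun s : ℝ => H x (s • p)) =ᶠ[nhds 1] fun s : ℝ => s * H x p := by
    filter_upwards [eventually_gt_nhds one_pos] with s hs
    exact hhom x p hp s hs
  have h2 : HasDerivAt (fun s : ℝ => s * H x p)
      ((InnerProductSpace.toDualMap ℝ E2) (gradient (fun p' => H x p') p) p) 1 :=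
    h1.congr_of_eventuallyEq heq.symm
  have h3 : HasDerivAt (fun s : ℝ => s * H x p) (H x p) 1 := by
    simpa using (hasDerivAt_id (1:ℝ)).mul_const (H x p)
  have := h2.unique h3
  rw [InnerProductSpace.toDualMap_apply_apply] at this
  rw [real_inner_comm]; exact this

end H

private lemma omega_deriv (ω : ℝ → E2) (hω : ∀ ψ, ω ψ = ![Real.cos ψ, Real.sin ψ]) (ψ : ℝ) :
    HasDerivAt ω (WithLp.toLp 2 ![-Real.sin ψ, Real.cos ψ] : E2) ψ := by
  have hc : HasDerivAt (fun ψ' => (![Real.cos ψ', Real.sin ψ'] : Fin 2 → ℝ))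
      (![-Real.sin ψ, Real.cos ψ]) ψ := by
    rw [hasDerivAt_pi]
    intro i
    fin_cases i
    · simpa using Real.hasDerivAt_cos ψ
    · simpa using Real.hasDerivAt_sin ψ
  have h2 := ((EuclideanSpace.equiv (Fin 2) ℝ).symm.hasFDerivAt).comp_hasDerivAt ψ hc
  have he : (fun ψ' => (EuclideanSpace.equiv (Fin 2) ℝ).symm
      (![Real.cos ψ', Real.sin ψ'] : Fin 2 → ℝ)) = ω := by
    funext ψ'; rw [← hω ψ']; rfl
  have hv : ((EuclideanSpace.equiv (Fin 2) ℝ).symm (![-Real.sin ψ, Real.cos ψ] : Fin 2 → ℝ))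
      = (WithLp.toLp 2 ![-Real.sin ψ, Real.cos ψ] : E2) := rfl
  rw [← he]
  exact h2

private lemma omega_norm (ω : ℝ → E2) (hω : ∀ ψ, ω ψ = ![Real.cos ψ, Real.sin ψ]) (ψ : ℝ) :
    ⟪ω ψ, ω ψ⟫ = 1 := by
  rw [PiLp.inner_apply]; simp [hω, RCLike.inner_apply, Fin.sum_univ_two]

private lemma omega_orth (ω : ℝ → E2) (hω : ∀ ψ, ω ψ = ![Real.cos ψ, Real.sin ψ]) (ψ : ℝ) :
    ⟪ω ψ, (WithLp.toLp 2 ![-Real.sin ψ, Real.cos ψ] : E2)⟫ = 0 := by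
  simp [hω, PiLp.inner_apply, RCLike.inner_apply, Fin.sum_univ_two]
  ring

private lemma det_inj {p q v : E2} (hdet : p 0 * q 1 - p 1 * q 0 ≠ 0)
    (h1 : ⟪p, v⟫ = 0) (h2 : ⟪q, v⟫ = 0) : v = 0 := by
  have h1' : p 0 * v 0 + p 1 * v 1 = 0 := by
    simp [PiLp.inner_apply, RCLike.inner_apply, Fin.sum_univ_two] at h1; linarith
  have h2' : q 0 * v 0 + q 1 * v 1 = 0 := by
    simp [PiLp.inner_apply, RCLike.inner_apply, Fin.sum_univ_two] at h2; linarith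
  have hv0 : v 0 * (p 0 * q 1 - p 1 * q 0) = 0 := by linear_combination q 1 * h1' - p 1 * h2'
  have hv1 : v 1 * (p 0 * q 1 - p 1 * q 0) = 0 := by linear_combination p 0 * h2' - q 0 * h1'
  have hv0' := (mul_eq_zero.mp hv0).resolve_right hdet
  have hv1' := (mul_eq_zero.mp hv1).resolve_right hdet
  ext i
  fin_cases i
  · exact hv0'
  · exact hv1'
section cons
variable (H : E2 → E2 → ℝ)
  (hH : ContDiffOn ℝ (⊤ : ℕ∞) (fun z : E2 × E2 => H z.1 z.2) {z | z.2 ≠ 0})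

include hH in
private lemma grad_diffAt {z : E2 × E2} (hz : z.2 ≠ 0) :
    DifferentiableAt ℝ (fun w : E2 × E2 => gradient (fun p => H w.1 p) w.2) z := by
  have hG2 : DifferentiableAt ℝ (fun w : E2 × E2 => (InnerProductSpace.toDual ℝ E2).symm
      ((fderiv ℝ (fun z : E2 × E2 => H z.1 z.2) w).comp (ContinuousLinearMap.inr ℝ E2 E2))) z := by
    have h1 : DifferentiableAt ℝ (fderiv ℝ (fun z : E2 × E2 => H z.1 z.2)) z :=
      ((hH.fderiv_of_isOpen sopen (m := 1) (WithTop.coe_le_coe.mpr le_top)).differentiableOn one_ne_zero).differentiableAt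
        (sopen.mem_nhds hz)
    have h2 : DifferentiableAt ℝ (fun w : E2 × E2 =>
        (fderiv ℝ (fun z : E2 × E2 => H z.1 z.2) w).comp (ContinuousLinearMap.inr ℝ E2 E2)) z :=
      h1.clm_comp (differentiableAt_const _)
    exact (((InnerProductSpace.toDual ℝ
      E2).symm.toContinuousLinearEquiv.differentiable).differentiableAt).comp z h2
  apply hG2.congr_of_eventuallyEq
  filter_upwards [sopen.mem_nhds hz] with w hw
  show gradient (fun p => H w.1 p) w.2 = _
  rw [show gradient (fun p => H w.1 p) w.2
      = (InnerProductSpace.toDual ℝ E2).symm (fderiv ℝ (fun p => H w.1 p) w.2) from rfl,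
    (slice_p H hH hw).fderiv]

include hH in
private lemma inner_grad_deriv
    (hhom : ∀ (x p : E2), p ≠ 0 → ∀ s : ℝ, 0 < s → H x (s • p) = s * H x p)
    {xc pc : ℝ → E2} {x' p' : E2} {u : ℝ}
    (hx : HasDerivAt xc x' u) (hp : HasDerivAt pc p' u)
    (hne : ∀ s, pc s ≠ 0) :
    ⟪pc u, deriv (fun s => gradient (fun p => H (xc s) p) (pc s)) u⟫
      = fderiv ℝ (fun z : E2 × E2 => H z.1 z.2) (xc u, pc u) (x', 0) := by
  have hWd : DifferentiableAt ℝ (fun s => gradient (fun p => H (xc s) p) (pc s)) u :=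
    (grad_diffAt H hH (hne u)).comp u (hx.differentiableAt.prodMk hp.differentiableAt)
  have hW := hWd.hasDerivAt
  have hM1 : HasDerivAt (fun s => ⟪pc s, gradient (fun p => H (xc s) p) (pc s)⟫)
      (⟪pc u, deriv (fun s => gradient (fun p => H (xc s) p) (pc s)) u⟫
        + ⟪p', gradient (fun p => H (xc u) p) (pc u)⟫) u := hp.inner ℝ hW
  have heq : (fun s => ⟪pc s, gradient (fun p => H (xc s) p) (pc s)⟫)
      = fun s => H (xc s) (pc s) := funext fun s => euler H hH hhom (hne s)
  rw [heq] at hM1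
  have hM2 : HasDerivAt (fun s => H (xc s) (pc s))
      (fderiv ℝ (fun z : E2 × E2 => H z.1 z.2) (xc u, pc u) (x', p')) u :=
    ((hHdiff H hH (x := xc u) (hne u)).hasFDerivAt.comp_hasDerivAt u (hx.prodMk hp) :)
  have huniq := hM1.unique hM2
  have hsplit : fderiv ℝ (fun z : E2 × E2 => H z.1 z.2) (xc u, pc u) (x', p')
      = fderiv ℝ (fun z : E2 × E2 => H z.1 z.2) (xc u, pc u) (x', 0)
        + fderiv ℝ (fun z : E2 × E2 => H z.1 z.2) (xc u, pc u) (0, p') := by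
    rw [← map_add]; norm_num
  have hpg : ⟪p', gradient (fun p => H (xc u) p) (pc u)⟫
      = fderiv ℝ (fun z : E2 × E2 => H z.1 z.2) (xc u, pc u) (0, p') := by
    rw [real_inner_comm]; exact gradP_eq H hH (hne u) p'
  rw [hsplit, ← hpg] at huniq
  linarith

end cons
set_option maxHeartbeats 1000000
section cons2
variable (H : E2 → E2 → ℝ)
  (hH : ContDiffOn ℝ (⊤ : ℕ∞) (fun z : E2 × E2 => H z.1 z.2) {z | z.2 ≠ 0})
  (hhom : ∀ (x p : E2), p ≠ 0 → ∀ s : ℝ, 0 < s → H x (s • p) = s * H x p)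
  (ω : ℝ → E2)
  (hω : ∀ ψ, ω ψ = ![Real.cos ψ, Real.sin ψ])
  (X P : ℝ → ℝ → ℝ → E2)
  (hXP : ContDiff ℝ (⊤ : ℕ∞) (fun q : ℝ × ℝ × ℝ => (X q.1 q.2.1 q.2.2, P q.1 q.2.1 q.2.2)))
  (hPne : ∀ φ ψ t, P φ ψ t ≠ 0)
  (hamX : ∀ φ ψ t, deriv (fun s => X φ ψ s) t =
    gradient (fun p => H (X φ ψ t) p) (P φ ψ t))
  (hamP : ∀ φ ψ t, deriv (fun s => P φ ψ s) t =
    - gradient (fun x => H x (P φ ψ t)) (X φ ψ t))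
  (hX0 : ∀ φ ψ, X φ ψ 0 = φ • ω ψ)
  (hP0 : ∀ φ ψ, P φ ψ 0 = ω ψ)

include hXP in
private lemma hFx : ContDiff ℝ (⊤ : ℕ∞) (fun q : ℝ × ℝ × ℝ => X q.1 q.2.1 q.2.2) :=
  contDiff_fst.comp hXP

include hXP in
private lemma hFp : ContDiff ℝ (⊤ : ℕ∞) (fun q : ℝ × ℝ × ℝ => P q.1 q.2.1 q.2.2) :=
  contDiff_snd.comp hXP

include hH hhom hXP hPne hamX hamP in
private lemma cons_phi (φ ψ t : ℝ) :
    ⟪P φ ψ t, deriv (fun φ' => X φ' ψ t) φ⟫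
      = ⟪P φ ψ 0, deriv (fun φ' => X φ' ψ 0) φ⟫ := by
  have key : ∀ t : ℝ, HasDerivAt
      (fun s => ⟪P φ ψ s, deriv (fun φ' => X φ' ψ s) φ⟫) 0 t := by
    intro t
    have hPt : HasDerivAt (fun s => P φ ψ s) (deriv (fun s => P φ ψ s) t) t :=
      (slice_t (hFp X P hXP) φ ψ t).differentiableAt.hasDerivAt
    have hY : HasDerivAt (fun t' => deriv (fun φ' => X φ' ψ t') φ)
        (deriv (fun φ' => deriv (fun t' => X φ' ψ t') t) φ) t :=
      mixed_t_phi (hFx X P hXP) φ ψ t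
    have hrw : (fun φ' => deriv (fun t' => X φ' ψ t') t)
        = fun φ' => gradient (fun p => H (X φ' ψ t) p) (P φ' ψ t) :=
      funext fun φ' => hamX φ' ψ t
    rw [hrw] at hY
    have hA := hPt.inner ℝ hY
    have hXφ : HasDerivAt (fun φ' => X φ' ψ t) (deriv (fun φ' => X φ' ψ t) φ) φ :=
      (slice_phi (hFx X P hXP) φ ψ t).differentiableAt.hasDerivAt
    have hPφ : HasDerivAt (fun φ' => P φ' ψ t) (deriv (fun φ' => P φ' ψ t) φ) φ :=
      (slice_phi (hFp X P hXP) φ ψ t).differentiableAt.hasDerivAt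
    have h1 : ⟪P φ ψ t, deriv (fun φ' => gradient (fun p => H (X φ' ψ t) p) (P φ' ψ t)) φ⟫
        = fderiv ℝ (fun z : E2 × E2 => H z.1 z.2) (X φ ψ t, P φ ψ t)
          (deriv (fun φ' => X φ' ψ t) φ, 0) :=
      inner_grad_deriv H hH hhom hXφ hPφ (fun s => hPne s ψ t)
    have h2 : ⟪deriv (fun s => P φ ψ s) t, deriv (fun φ' => X φ' ψ t) φ⟫
        = - fderiv ℝ (fun z : E2 × E2 => H z.1 z.2) (X φ ψ t, P φ ψ t)
          (deriv (fun φ' => X φ' ψ t) φ, 0) := by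
      rw [hamP φ ψ t, inner_neg_left, gradX_eq H hH (hPne φ ψ t)]
    have hval : ⟪P φ ψ t, deriv (fun φ' => gradient (fun p => H (X φ' ψ t) p) (P φ' ψ t)) φ⟫
        + ⟪deriv (fun s => P φ ψ s) t, deriv (fun φ' => X φ' ψ t) φ⟫ = 0 := by
      rw [h1, h2]; ring
    rw [hval] at hA
    exact hA
  exact is_const_of_deriv_eq_zero (fun s => (key s).differentiableAt)
    (fun s => (key s).deriv) t 0

include hH hhom hXP hPne hamX hamP in
private lemma cons_psi (φ ψ t : ℝ) :
    ⟪P φ ψ t, deriv (fun ψ' => X φ ψ' t) ψ⟫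
      = ⟪P φ ψ 0, deriv (fun ψ' => X φ ψ' 0) ψ⟫ := by
  have key : ∀ t : ℝ, HasDerivAt
      (fun s => ⟪P φ ψ s, deriv (fun ψ' => X φ ψ' s) ψ⟫) 0 t := by
    intro t
    have hPt : HasDerivAt (fun s => P φ ψ s) (deriv (fun s => P φ ψ s) t) t :=
      (slice_t (hFp X P hXP) φ ψ t).differentiableAt.hasDerivAt
    have hY : HasDerivAt (fun t' => deriv (fun ψ' => X φ ψ' t') ψ)
        (deriv (fun ψ' => deriv (fun t' => X φ ψ' t') t) ψ) t :=
      mixed_t_psi (hFx X P hXP) φ ψ t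
    have hrw : (fun ψ' => deriv (fun t' => X φ ψ' t') t)
        = fun ψ' => gradient (fun p => H (X φ ψ' t) p) (P φ ψ' t) :=
      funext fun ψ' => hamX φ ψ' t
    rw [hrw] at hY
    have hA := hPt.inner ℝ hY
    have hXψ : HasDerivAt (fun ψ' => X φ ψ' t) (deriv (fun ψ' => X φ ψ' t) ψ) ψ :=
      (slice_psi (hFx X P hXP) φ ψ t).differentiableAt.hasDerivAt
    have hPψ : HasDerivAt (fun ψ' => P φ ψ' t) (deriv (fun ψ' => P φ ψ' t) ψ) ψ :=
      (slice_psi (hFp X P hXP) φ ψ t).differentiableAt.hasDerivAt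
    have h1 : ⟪P φ ψ t, deriv (fun ψ' => gradient (fun p => H (X φ ψ' t) p) (P φ ψ' t)) ψ⟫
        = fderiv ℝ (fun z : E2 × E2 => H z.1 z.2) (X φ ψ t, P φ ψ t)
          (deriv (fun ψ' => X φ ψ' t) ψ, 0) :=
      inner_grad_deriv H hH hhom hXψ hPψ (fun s => hPne φ s t)
    have h2 : ⟪deriv (fun s => P φ ψ s) t, deriv (fun ψ' => X φ ψ' t) ψ⟫
        = - fderiv ℝ (fun z : E2 × E2 => H z.1 z.2) (X φ ψ t, P φ ψ t)
          (deriv (fun ψ' => X φ ψ' t) ψ, 0) := by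
      rw [hamP φ ψ t, inner_neg_left, gradX_eq H hH (hPne φ ψ t)]
    have hval : ⟪P φ ψ t, deriv (fun ψ' => gradient (fun p => H (X φ ψ' t) p) (P φ ψ' t)) ψ⟫
        + ⟪deriv (fun s => P φ ψ s) t, deriv (fun ψ' => X φ ψ' t) ψ⟫ = 0 := by
      rw [h1, h2]; ring
    rw [hval] at hA
    exact hA
  exact is_const_of_deriv_eq_zero (fun s => (key s).differentiableAt)
    (fun s => (key s).deriv) t 0

include hH hXP hPne hamX hamP in
private lemma consH (φ ψ t : ℝ) :
    H (X φ ψ t) (P φ ψ t) = H (X φ ψ 0) (P φ ψ 0) := by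
  have key : ∀ t : ℝ, HasDerivAt (fun s => H (X φ ψ s) (P φ ψ s)) 0 t := by
    intro t
    have hXt : HasDerivAt (fun s => X φ ψ s) (deriv (fun s => X φ ψ s) t) t :=
      (slice_t (hFx X P hXP) φ ψ t).differentiableAt.hasDerivAt
    have hPt : HasDerivAt (fun s => P φ ψ s) (deriv (fun s => P φ ψ s) t) t :=
      (slice_t (hFp X P hXP) φ ψ t).differentiableAt.hasDerivAt
    have hB : HasDerivAt (fun s => H (X φ ψ s) (P φ ψ s))
        (fderiv ℝ (fun z : E2 × E2 => H z.1 z.2) (X φ ψ t, P φ ψ t)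
          (deriv (fun s => X φ ψ s) t, deriv (fun s => P φ ψ s) t)) t :=
      ((hHdiff H hH (x := X φ ψ t) (hPne φ ψ t)).hasFDerivAt.comp_hasDerivAt t (hXt.prodMk hPt) :)
    have hsplit : fderiv ℝ (fun z : E2 × E2 => H z.1 z.2) (X φ ψ t, P φ ψ t)
          (deriv (fun s => X φ ψ s) t, deriv (fun s => P φ ψ s) t)
        = fderiv ℝ (fun z : E2 × E2 => H z.1 z.2) (X φ ψ t, P φ ψ t)
            (deriv (fun s => X φ ψ s) t, 0)
          + fderiv ℝ (fun z : E2 × E2 => H z.1 z.2) (X φ ψ t, P φ ψ t)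
            (0, deriv (fun s => P φ ψ s) t) := by
      rw [← map_add]; norm_num
    have hx : fderiv ℝ (fun z : E2 × E2 => H z.1 z.2) (X φ ψ t, P φ ψ t)
          (deriv (fun s => X φ ψ s) t, 0)
        = - ⟪deriv (fun s => P φ ψ s) t, deriv (fun s => X φ ψ s) t⟫ := by
      rw [← gradX_eq H hH (hPne φ ψ t), hamP φ ψ t, inner_neg_left, neg_neg]
    have hp : fderiv ℝ (fun z : E2 × E2 => H z.1 z.2) (X φ ψ t, P φ ψ t)
          (0, deriv (fun s => P φ ψ s) t)
        = ⟪deriv (fun s => X φ ψ s) t, deriv (fun s => P φ ψ s) t⟫ := by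
      rw [← gradP_eq H hH (hPne φ ψ t)]
      rw [hamX φ ψ t]
    have hval : fderiv ℝ (fun z : E2 × E2 => H z.1 z.2) (X φ ψ t, P φ ψ t)
          (deriv (fun s => X φ ψ s) t, deriv (fun s => P φ ψ s) t) = 0 := by
      rw [hsplit, hx, hp, real_inner_comm]; ring
    rw [hval] at hB
    exact hB
  exact is_const_of_deriv_eq_zero (fun s => (key s).differentiableAt)
    (fun s => (key s).deriv) t 0

include hH hhom hPne hamX in
private lemma PdotXt (φ ψ t : ℝ) :
    ⟪P φ ψ t, deriv (fun s => X φ ψ s) t⟫ = H (X φ ψ t) (P φ ψ t) := by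
  rw [hamX φ ψ t]
  exact euler H hH hhom (hPne φ ψ t)

end cons2
section phi
variable (X P : ℝ → ℝ → ℝ → E2)
  (hXP : ContDiff ℝ (⊤ : ℕ∞) (fun q : ℝ × ℝ × ℝ => (X q.1 q.2.1 q.2.2, P q.1 q.2.1 q.2.2)))
  (E : ℝ)

private lemma dPhi_l (φv l φ ψ t : ℝ) (x : E2) :
    HasDerivAt (fun l' => φv + l' * ⟪P φ ψ t, x - X φ ψ t⟫ + E * t)
      (⟪P φ ψ t, x - X φ ψ t⟫) l := by
  simpa using (((hasDerivAt_id l).mul_const ⟪P φ ψ t, x - X φ ψ t⟫).const_add φv).add_const (E*t)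

include hXP in
private lemma dPhi_phi (l ψ t : ℝ) (x : E2) (φ : ℝ) :
    HasDerivAt (fun φ' => φ' + l * ⟪P φ' ψ t, x - X φ' ψ t⟫ + E * t)
      (1 + l * (⟪P φ ψ t, -(deriv (fun φ' => X φ' ψ t) φ)⟫
        + ⟪deriv (fun φ' => P φ' ψ t) φ, x - X φ ψ t⟫)) φ := by
  have hXφ : HasDerivAt (fun φ' => X φ' ψ t) (deriv (fun φ' => X φ' ψ t) φ) φ :=
    (slice_phi (hFx X P hXP) φ ψ t).differentiableAt.hasDerivAt
  have hPφ : HasDerivAt (fun φ' => P φ' ψ t) (deriv (fun φ' => P φ' ψ t) φ) φ :=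
    (slice_phi (hFp X P hXP) φ ψ t).differentiableAt.hasDerivAt
  have hg : HasDerivAt (fun φ' => x - X φ' ψ t) (-(deriv (fun φ' => X φ' ψ t) φ)) φ :=
    hXφ.const_sub x
  have hinner := hPφ.inner ℝ hg
  exact ((hasDerivAt_id φ).add (hinner.const_mul l)).add_const (E*t)

include hXP in
private lemma dPhi_psi (φv l φ t : ℝ) (x : E2) (ψ : ℝ) :
    HasDerivAt (fun ψ' => φv + l * ⟪P φ ψ' t, x - X φ ψ' t⟫ + E * t)
      (l * (⟪P φ ψ t, -(deriv (fun ψ' => X φ ψ' t) ψ)⟫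
        + ⟪deriv (fun ψ' => P φ ψ' t) ψ, x - X φ ψ t⟫)) ψ := by
  have hXψ : HasDerivAt (fun ψ' => X φ ψ' t) (deriv (fun ψ' => X φ ψ' t) ψ) ψ :=
    (slice_psi (hFx X P hXP) φ ψ t).differentiableAt.hasDerivAt
  have hPψ : HasDerivAt (fun ψ' => P φ ψ' t) (deriv (fun ψ' => P φ ψ' t) ψ) ψ :=
    (slice_psi (hFp X P hXP) φ ψ t).differentiableAt.hasDerivAt
  have hg : HasDerivAt (fun ψ' => x - X φ ψ' t) (-(deriv (fun ψ' => X φ ψ' t) ψ)) ψ :=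
    hXψ.const_sub x
  have hinner := hPψ.inner ℝ hg
  exact ((hinner.const_mul l).const_add φv).add_const (E*t)

include hXP in
private lemma dPhi_t (φv l φ ψ : ℝ) (x : E2) (t : ℝ) :
    HasDerivAt (fun t' => φv + l * ⟪P φ ψ t', x - X φ ψ t'⟫ + E * t')
      (l * (⟪P φ ψ t, -(deriv (fun t' => X φ ψ t') t)⟫
        + ⟪deriv (fun t' => P φ ψ t') t, x - X φ ψ t⟫) + E) t := by
  have hXt : HasDerivAt (fun t' => X φ ψ t') (deriv (fun t' => X φ ψ t') t) t :=
    (slice_t (hFx X P hXP) φ ψ t).differentiableAt.hasDerivAt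
  have hPt : HasDerivAt (fun t' => P φ ψ t') (deriv (fun t' => P φ ψ t') t) t :=
    (slice_t (hFp X P hXP) φ ψ t).differentiableAt.hasDerivAt
  have hg : HasDerivAt (fun t' => x - X φ ψ t') (-(deriv (fun t' => X φ ψ t') t)) t :=
    hXt.const_sub x
  have hinner := hPt.inner ℝ hg
  have h2 : HasDerivAt (fun t' : ℝ => E * t') E t := by
    simpa using (hasDerivAt_id t).const_mul E
  exact ((hinner.const_mul l).const_add φv).add h2

private lemma gradPhi (l φv et : ℝ) (p X0 x : E2) :
    HasGradientAt (fun x' : E2 => φv + l * ⟪p, x' - X0⟫ + et) (l • p) x := by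
  have h0 : HasFDerivAt (fun x' : E2 => ⟪p, x'⟫) (innerSL ℝ p) x := by
    exact (innerSL ℝ p).hasFDerivAt
  have h1 : HasFDerivAt (fun x' : E2 => φv + l * (⟪p, x'⟫ - ⟪p, X0⟫) + et)
      (l • innerSL ℝ p) x :=
    (((h0.sub_const ⟪p, X0⟫).const_mul l).const_add φv).add_const et
  have h2 : (fun x' : E2 => φv + l * (⟪p, x'⟫ - ⟪p, X0⟫) + et)
      = fun x' : E2 => φv + l * ⟪p, x' - X0⟫ + et := by
    funext x'; rw [inner_sub_right]
  rw [h2] at h1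
  have h3 := hasFDerivAt_iff_hasGradientAt.mp h1
  have h4 : (InnerProductSpace.toDual ℝ E2).symm (l • innerSL ℝ p) = l • p := by
    apply (InnerProductSpace.toDual ℝ E2).injective
    rw [LinearIsometryEquiv.apply_symm_apply]
    ext y
    simp [InnerProductSpace.toDual_apply_apply, inner_smul_left]
  rwa [h4] at h3

end phi
section init
variable (H : E2 → E2 → ℝ)
  (hH : ContDiffOn ℝ (⊤ : ℕ∞) (fun z : E2 × E2 => H z.1 z.2) {z | z.2 ≠ 0})
  (hhom : ∀ (x p : E2), p ≠ 0 → ∀ s : ℝ, 0 < s → H x (s • p) = s * H x p)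
  (ω : ℝ → E2)
  (hω : ∀ ψ, ω ψ = ![Real.cos ψ, Real.sin ψ])
  (X P : ℝ → ℝ → ℝ → E2)
  (hXP : ContDiff ℝ (⊤ : ℕ∞) (fun q : ℝ × ℝ × ℝ => (X q.1 q.2.1 q.2.2, P q.1 q.2.1 q.2.2)))
  (hPne : ∀ φ ψ t, P φ ψ t ≠ 0)
  (hamX : ∀ φ ψ t, deriv (fun s => X φ ψ s) t =
    gradient (fun p => H (X φ ψ t) p) (P φ ψ t))
  (hamP : ∀ φ ψ t, deriv (fun s => P φ ψ s) t =
    - gradient (fun x => H x (P φ ψ t)) (X φ ψ t))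
  (hX0 : ∀ φ ψ, X φ ψ 0 = φ • ω ψ)
  (hP0 : ∀ φ ψ, P φ ψ 0 = ω ψ)

include hH hhom hω hXP hPne hamX hamP hX0 hP0 in
private lemma PdotXphi (φ ψ t : ℝ) :
    ⟪P φ ψ t, deriv (fun φ' => X φ' ψ t) φ⟫ = 1 := by
  rw [cons_phi H hH hhom X P hXP hPne hamX hamP φ ψ t]
  have h1 : (fun φ' => X φ' ψ 0) = fun φ' => φ' • ω ψ := funext fun φ' => hX0 φ' ψ
  have h2 : HasDerivAt (fun φ' : ℝ => φ' • ω ψ) (ω ψ) φ := by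
    simpa using (hasDerivAt_id φ).smul_const (ω ψ)
  rw [h1, h2.deriv, hP0]
  exact omega_norm ω hω ψ

include hH hhom hω hXP hPne hamX hamP hX0 hP0 in
private lemma PdotXpsi (φ ψ t : ℝ) :
    ⟪P φ ψ t, deriv (fun ψ' => X φ ψ' t) ψ⟫ = 0 := by
  rw [cons_psi H hH hhom X P hXP hPne hamX hamP φ ψ t]
  have h1 : (fun ψ' => X φ ψ' 0) = fun ψ' => φ • ω ψ' := funext fun ψ' => hX0 φ ψ'
  have h2 : HasDerivAt (fun ψ' : ℝ => φ • ω ψ') (φ • (WithLp.toLp 2 ![-Real.sin ψ, Real.cos ψ] : E2)) ψ :=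
    (omega_deriv ω hω ψ).const_smul φ
  rw [h1, h2.deriv, hP0, real_inner_smul_right, omega_orth ω hω ψ, mul_zero]

include hH hXP hPne hamX hamP hX0 hP0 in
private lemma consH' (φ ψ t : ℝ) :
    H (X φ ψ t) (P φ ψ t) = H (φ • ω ψ) (ω ψ) := by
  rw [consH H hH X P hXP hPne hamX hamP φ ψ t, hX0, hP0]

end init


/-- Proposition 3: Under the setup of Proposition 2, for fixed `E` the family
`Φ₊(λ,φ,ψ,t,x) = Φ(λ,φ,ψ,x,t) + E·t` with parameters `θ₊ = (λ,φ,ψ,t)` is a generating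
family for the flow-out `Λ₊^E = {(X(φ,ψ,t), P(φ,ψ,t)) : t ≥ 0, H(φω(ψ),ω(ψ)) = E}` at
points where `det(P,∂_ψP) ≠ 0`. -/
theorem stmt9
    (H : EuclideanSpace ℝ (Fin 2) → EuclideanSpace ℝ (Fin 2) → ℝ)
    (hH : ContDiffOn ℝ (⊤ : ℕ∞) (fun z : EuclideanSpace ℝ (Fin 2) × EuclideanSpace ℝ (Fin 2) =>
      H z.1 z.2) {z | z.2 ≠ 0})
    (hhom : ∀ (x p : EuclideanSpace ℝ (Fin 2)), p ≠ 0 → ∀ s : ℝ, 0 < s →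
      H x (s • p) = s * H x p)
    (ω : ℝ → EuclideanSpace ℝ (Fin 2))
    (hω : ∀ ψ, ω ψ = ![Real.cos ψ, Real.sin ψ])
    (X P : ℝ → ℝ → ℝ → EuclideanSpace ℝ (Fin 2))
    (hXP : ContDiff ℝ (⊤ : ℕ∞) (fun q : ℝ × ℝ × ℝ =>
      (X q.1 q.2.1 q.2.2, P q.1 q.2.1 q.2.2)))
    (hPne : ∀ φ ψ t, P φ ψ t ≠ 0)
    (hamX : ∀ φ ψ t, deriv (fun s => X φ ψ s) t =
      gradient (fun p => H (X φ ψ t) p) (P φ ψ t))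
    (hamP : ∀ φ ψ t, deriv (fun s => P φ ψ s) t =
      - gradient (fun x => H x (P φ ψ t)) (X φ ψ t))
    (hX0 : ∀ φ ψ, X φ ψ 0 = φ • ω ψ)
    (hP0 : ∀ φ ψ, P φ ψ 0 = ω ψ)
    (Φ : ℝ → ℝ → ℝ → EuclideanSpace ℝ (Fin 2) → ℝ → ℝ)
    (hΦ : ∀ l φ ψ x t, Φ l φ ψ x t = φ + l * ⟪P φ ψ t, x - X φ ψ t⟫)
    (detPψ : ℝ → ℝ → ℝ → ℝ)
    (hdet : ∀ φ ψ t, detPψ φ ψ t =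
      P φ ψ t 0 * deriv (fun ψ' => P φ ψ' t) ψ 1 -
      P φ ψ t 1 * deriv (fun ψ' => P φ ψ' t) ψ 0)
    (E : ℝ)
    (Φp : ℝ → ℝ → ℝ → ℝ → EuclideanSpace ℝ (Fin 2) → ℝ)
    (hΦp : ∀ l φ ψ t x, Φp l φ ψ t x = Φ l φ ψ x t + E * t) :
    -- forward: critical points with det(P,∂_ψP) ≠ 0 lie over Λ₊^E
    (∀ (l φ ψ t : ℝ) (x : EuclideanSpace ℝ (Fin 2)),
      deriv (fun l' => Φp l' φ ψ t x) l = 0 →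
      deriv (fun φ' => Φp l φ' ψ t x) φ = 0 →
      deriv (fun ψ' => Φp l φ ψ' t x) ψ = 0 →
      deriv (fun t' => Φp l φ ψ t' x) t = 0 →
      detPψ φ ψ t ≠ 0 →
      x = X φ ψ t ∧ l = 1 ∧
      gradient (fun x' => Φp l φ ψ t x') x = P φ ψ t ∧
      H (X φ ψ t) (P φ ψ t) = E) ∧
    -- converse: if H = E on the initial point, the point (1,φ,ψ,t,X(φ,ψ,t)) is critical
    (∀ φ ψ : ℝ, H (φ • ω ψ) (ω ψ) = E → ∀ t : ℝ,
      deriv (fun l' => Φp l' φ ψ t (X φ ψ t)) 1 = 0 ∧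
      deriv (fun φ' => Φp 1 φ' ψ t (X φ ψ t)) φ = 0 ∧
      deriv (fun ψ' => Φp 1 φ ψ' t (X φ ψ t)) ψ = 0 ∧
      deriv (fun t' => Φp 1 φ ψ t' (X φ ψ t)) t = 0) ∧
    -- hence Φ₊ generates Λ₊^E at the points where det(P,∂_ψP) ≠ 0
    ({w : EuclideanSpace ℝ (Fin 2) × EuclideanSpace ℝ (Fin 2) |
        ∃ (l φ ψ t : ℝ) (x : EuclideanSpace ℝ (Fin 2)), 0 ≤ t ∧
          deriv (fun l' => Φp l' φ ψ t x) l = 0 ∧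
          deriv (fun φ' => Φp l φ' ψ t x) φ = 0 ∧
          deriv (fun ψ' => Φp l φ ψ' t x) ψ = 0 ∧
          deriv (fun t' => Φp l φ ψ t' x) t = 0 ∧
          detPψ φ ψ t ≠ 0 ∧
          w = (x, gradient (fun x' => Φp l φ ψ t x') x)} =
      {w : EuclideanSpace ℝ (Fin 2) × EuclideanSpace ℝ (Fin 2) |
        ∃ φ ψ t : ℝ, 0 ≤ t ∧ detPψ φ ψ t ≠ 0 ∧ H (φ • ω ψ) (ω ψ) = E ∧
          w = (X φ ψ t, P φ ψ t)}) := by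
  
  -- rewrite the generating family into explicit form
  have hfunl : ∀ (φ ψ t : ℝ) (x : E2), (fun l' => Φp l' φ ψ t x)
      = fun l' => φ + l' * ⟪P φ ψ t, x - X φ ψ t⟫ + E * t :=
    fun φ ψ t x => funext fun l' => by rw [hΦp, hΦ]
  have hfunφ : ∀ (l ψ t : ℝ) (x : E2), (fun φ' => Φp l φ' ψ t x)
      = fun φ' => φ' + l * ⟪P φ' ψ t, x - X φ' ψ t⟫ + E * t :=
    fun l ψ t x => funext fun φ' => by rw [hΦp, hΦ]
  have hfunψ : ∀ (l φ t : ℝ) (x : E2), (fun ψ' => Φp l φ ψ' t x)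
      = fun ψ' => φ + l * ⟪P φ ψ' t, x - X φ ψ' t⟫ + E * t :=
    fun l φ t x => funext fun ψ' => by rw [hΦp, hΦ]
  have hfunt : ∀ (l φ ψ : ℝ) (x : E2), (fun t' => Φp l φ ψ t' x)
      = fun t' => φ + l * ⟪P φ ψ t', x - X φ ψ t'⟫ + E * t' :=
    fun l φ ψ x => funext fun t' => by rw [hΦp, hΦ]
  have hfunx : ∀ (l φ ψ t : ℝ), (fun x' : E2 => Φp l φ ψ t x')
      = fun x' => φ + l * ⟪P φ ψ t, x' - X φ ψ t⟫ + E * t :=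
    fun l φ ψ t => funext fun x' => by rw [hΦp, hΦ]
  have Dl : ∀ (l φ ψ t : ℝ) (x : E2), deriv (fun l' => Φp l' φ ψ t x) l
      = ⟪P φ ψ t, x - X φ ψ t⟫ := fun l φ ψ t x => by
    rw [hfunl]; exact (dPhi_l X P E φ l φ ψ t x).deriv
  have Dφ : ∀ (l φ ψ t : ℝ) (x : E2), deriv (fun φ' => Φp l φ' ψ t x) φ
      = 1 + l * (⟪P φ ψ t, -(deriv (fun φ' => X φ' ψ t) φ)⟫
        + ⟪deriv (fun φ' => P φ' ψ t) φ, x - X φ ψ t⟫) := fun l φ ψ t x => by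
    rw [hfunφ]; exact (dPhi_phi X P hXP E l ψ t x φ).deriv
  have Dψ : ∀ (l φ ψ t : ℝ) (x : E2), deriv (fun ψ' => Φp l φ ψ' t x) ψ
      = l * (⟪P φ ψ t, -(deriv (fun ψ' => X φ ψ' t) ψ)⟫
        + ⟪deriv (fun ψ' => P φ ψ' t) ψ, x - X φ ψ t⟫) := fun l φ ψ t x => by
    rw [hfunψ]; exact (dPhi_psi X P hXP E φ l φ t x ψ).deriv
  have Dt : ∀ (l φ ψ t : ℝ) (x : E2), deriv (fun t' => Φp l φ ψ t' x) t
      = l * (⟪P φ ψ t, -(deriv (fun t' => X φ ψ t') t)⟫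
        + ⟪deriv (fun t' => P φ ψ t') t, x - X φ ψ t⟫) + E := fun l φ ψ t x => by
    rw [hfunt]; exact (dPhi_t X P hXP E φ l φ ψ x t).deriv
  have Dgrad : ∀ (l φ ψ t : ℝ) (x : E2), gradient (fun x' => Φp l φ ψ t x') x
      = l • P φ ψ t := fun l φ ψ t x => by
    rw [hfunx]; exact (gradPhi l φ (E * t) (P φ ψ t) (X φ ψ t) x).gradient
  have Fwd : ∀ (l φ ψ t : ℝ) (x : E2),
      deriv (fun l' => Φp l' φ ψ t x) l = 0 →
      deriv (fun φ' => Φp l φ' ψ t x) φ = 0 →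
      deriv (fun ψ' => Φp l φ ψ' t x) ψ = 0 →
      deriv (fun t' => Φp l φ ψ t' x) t = 0 →
      detPψ φ ψ t ≠ 0 →
      x = X φ ψ t ∧ l = 1 ∧
      gradient (fun x' => Φp l φ ψ t x') x = P φ ψ t ∧
      H (X φ ψ t) (P φ ψ t) = E := by
    intro l φ ψ t x h1 h2 h3 h4 hd
    rw [Dl] at h1
    rw [Dφ] at h2
    rw [Dψ] at h3
    rw [Dt] at h4
    have hφ1 := PdotXphi H hH hhom ω hω X P hXP hPne hamX hamP hX0 hP0 φ ψ t
    have hψ0 := PdotXpsi H hH hhom ω hω X P hXP hPne hamX hamP hX0 hP0 φ ψ t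
    have hl0 : l ≠ 0 := by rintro rfl; norm_num at h2
    have h3' : ⟪P φ ψ t, -(deriv (fun ψ' => X φ ψ' t) ψ)⟫
        + ⟪deriv (fun ψ' => P φ ψ' t) ψ, x - X φ ψ t⟫ = 0 :=
      (mul_eq_zero.mp h3).resolve_left hl0
    rw [inner_neg_right, hψ0, neg_zero, zero_add] at h3'
    have hdet' : P φ ψ t 0 * (deriv (fun ψ' => P φ ψ' t) ψ) 1
        - P φ ψ t 1 * (deriv (fun ψ' => P φ ψ' t) ψ) 0 ≠ 0 := by
      rw [hdet φ ψ t] at hd; exact hd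
    have hsub : x - X φ ψ t = 0 := det_inj hdet' h1 h3'
    have hx : x = X φ ψ t := sub_eq_zero.mp hsub
    rw [hsub, inner_zero_right, add_zero, inner_neg_right, hφ1] at h2
    have hl : l = 1 := by linarith
    rw [hsub, inner_zero_right, add_zero, inner_neg_right,
      PdotXt H hH hhom X P hPne hamX φ ψ t, hl] at h4
    have hHE : H (X φ ψ t) (P φ ψ t) = E := by linarith
    refine ⟨hx, hl, ?_, hHE⟩
    rw [Dgrad, hl, one_smul]
  have Conv : ∀ φ ψ : ℝ, H (φ • ω ψ) (ω ψ) = E → ∀ t : ℝ,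
      deriv (fun l' => Φp l' φ ψ t (X φ ψ t)) 1 = 0 ∧
      deriv (fun φ' => Φp 1 φ' ψ t (X φ ψ t)) φ = 0 ∧
      deriv (fun ψ' => Φp 1 φ ψ' t (X φ ψ t)) ψ = 0 ∧
      deriv (fun t' => Φp 1 φ ψ t' (X φ ψ t)) t = 0 := by
    intro φ ψ hE t
    have hφ1 := PdotXphi H hH hhom ω hω X P hXP hPne hamX hamP hX0 hP0 φ ψ t
    have hψ0 := PdotXpsi H hH hhom ω hω X P hXP hPne hamX hamP hX0 hP0 φ ψ t
    have hHc := consH' H hH ω X P hXP hPne hamX hamP hX0 hP0 φ ψ t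
    refine ⟨?_, ?_, ?_, ?_⟩
    · rw [Dl, sub_self, inner_zero_right]
    · rw [Dφ, sub_self, inner_zero_right, add_zero, inner_neg_right, hφ1]; ring
    · rw [Dψ, sub_self, inner_zero_right, add_zero, inner_neg_right, hψ0]; ring
    · rw [Dt, sub_self, inner_zero_right, add_zero, inner_neg_right,
        PdotXt H hH hhom X P hPne hamX φ ψ t, hHc, hE]; ring
  refine ⟨Fwd, Conv, ?_⟩
  ext w
  simp only [Set.mem_setOf_eq]
  constructor
  · rintro ⟨l, φ, ψ, t, x, ht, h1, h2, h3, h4, hd, hw⟩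
    obtain ⟨hx, hl, hg, hHE⟩ := Fwd l φ ψ t x h1 h2 h3 h4 hd
    refine ⟨φ, ψ, t, ht, hd, ?_, ?_⟩
    · rw [← consH' H hH ω X P hXP hPne hamX hamP hX0 hP0 φ ψ t]; exact hHE
    · rw [hw, hg, hx]
  · rintro ⟨φ, ψ, t, ht, hd, hE, hw⟩
    obtain ⟨c1, c2, c3, c4⟩ := Conv φ ψ hE t
    refine ⟨1, φ, ψ, t, X φ ψ t, ht, c1, c2, c3, c4, hd, ?_⟩
    rw [hw, Dgrad, one_smul]
end

section
/- (Proposition 4, case n=2.) Under the setup of Proposition 2, consider the map G:ℝ⁶→ℝ⁶ in the variables (x₁,x₂,t,λ,φ,ψ) given by G=(φ, ψ, t, ∂_λΦ, ∂_φΦ, ∂_ψΦ), i.e. y=(φ,ψ,t) and θ=(λ,φ,ψ). Then at every point of the critical set C_Φ={∂_λΦ=∂_φΦ=∂_ψΦ=0}, the Jacobian determinant of G equals ±det(P(φ,ψ,t),∂_ψP(φ,ψ,t)); in particular |det DG|=|det(P,∂_ψP)| on C_Φ. -/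
open scoped RealInnerProductSpace

noncomputable section


def equiv6 : (ℝ × ℝ × ℝ × ℝ × ℝ × ℝ) ≃ₗ[ℝ] (Fin 6 → ℝ) where
  toFun v := ![v.1, v.2.1, v.2.2.1, v.2.2.2.1, v.2.2.2.2.1, v.2.2.2.2.2]
  invFun f := (f 0, f 1, f 2, f 3, f 4, f 5)
  map_add' u v := by funext i; fin_cases i <;> rfl
  map_smul' c v := by funext i; fin_cases i <;> rfl
  left_inv v := by rfl
  right_inv f := by funext i; fin_cases i <;> rfl

lemma det_aux (L : (ℝ × ℝ × ℝ × ℝ × ℝ × ℝ) →ₗ[ℝ] (ℝ × ℝ × ℝ × ℝ × ℝ × ℝ)) :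
    LinearMap.det L =
      Matrix.det (Matrix.of fun i j => equiv6 (L (equiv6.symm (Pi.single j 1))) i) := by
  rw [← LinearMap.det_toMatrix ((Pi.basisFun ℝ (Fin 6)).map equiv6.symm) L]
  congr 1

set_option maxRecDepth 10000 in
set_option maxHeartbeats 4000000 in
lemma det_special (p0 p1 a b c q0 q1 d m e f r0 r1 g h k : ℝ) :
    (Matrix.det !![0,0,0,0,1,0; 0,0,0,0,0,1; 0,0,1,0,0,0; p0,p1,a,0,b,c; q0,q1,d,m,e,f; r0,r1,g,0,h,k])
      = m*(p1*r0 - p0*r1) := by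
  simp [Matrix.det_succ_row_zero, Fin.sum_univ_succ, Fin.succAbove]
  ring


abbrev V6 := ℝ × ℝ × ℝ × ℝ × ℝ × ℝ
abbrev E2 := EuclideanSpace ℝ (Fin 2)

def xe (a b : ℝ) : E2 := WithLp.toLp 2 ![a, b]

def Sf (X P : ℝ → ℝ → ℝ → E2) : V6 → ℝ := fun v =>
  ⟪P v.2.2.2.2.1 v.2.2.2.2.2 v.2.2.1,
    xe v.1 v.2.1 - X v.2.2.2.2.1 v.2.2.2.2.2 v.2.2.1⟫

variable {X P : ℝ → ℝ → ℝ → E2}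

lemma hS (hXP : ContDiff ℝ (⊤ : ℕ∞) (fun q : ℝ × ℝ × ℝ => (X q.1 q.2.1 q.2.2, P q.1 q.2.1 q.2.2))) :
    ContDiff ℝ (⊤ : ℕ∞) (Sf X P) := by
  have hproj : ContDiff ℝ (⊤ : ℕ∞) (fun v : V6 => (v.2.2.2.2.1, v.2.2.2.2.2, v.2.2.1)) := by fun_prop
  have hPc : ContDiff ℝ (⊤ : ℕ∞) (fun v : V6 => P v.2.2.2.2.1 v.2.2.2.2.2 v.2.2.1) :=
    (contDiff_snd.comp hXP).comp hproj
  have hXc : ContDiff ℝ (⊤ : ℕ∞) (fun v : V6 => X v.2.2.2.2.1 v.2.2.2.2.2 v.2.2.1) :=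
    (contDiff_fst.comp hXP).comp hproj
  have hxE : ContDiff ℝ (⊤ : ℕ∞) (fun v : V6 => xe v.1 v.2.1) := by
    unfold xe
    rw [contDiff_euclidean]
    intro i
    fin_cases i <;> simp <;> fun_prop
  exact ContDiff.inner ℝ hPc (hxE.sub hXc)

lemma pd1 (hXP : ContDiff ℝ (⊤ : ℕ∞) (fun q : ℝ × ℝ × ℝ => (X q.1 q.2.1 q.2.2, P q.1 q.2.1 q.2.2)))
    (v : V6) :
    fderiv ℝ (Sf X P) v (1,0,0,0,0,0) = P v.2.2.2.2.1 v.2.2.2.2.2 v.2.2.1 0 := by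
  obtain ⟨x₁, x₂, t, l, φ, ψ⟩ := v
  have h1 : HasDerivAt (fun s : ℝ => ((s, x₂, t, l, φ, ψ) : V6))
      ((1:ℝ),(0:ℝ),(0:ℝ),(0:ℝ),(0:ℝ),(0:ℝ)) x₁ :=
    (hasDerivAt_id x₁).prodMk (hasDerivAt_const _ _)
  have hline : HasDerivAt (fun s : ℝ => Sf X P (s, x₂, t, l, φ, ψ))
      (fderiv ℝ (Sf X P) (x₁,x₂,t,l,φ,ψ) (1,0,0,0,0,0)) x₁ :=
    (((hS hXP).differentiable (by simp) _).hasFDerivAt).comp_hasDerivAt x₁ h1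
  have hfun : (fun s : ℝ => Sf X P (s, x₂, t, l, φ, ψ))
      = fun s => P φ ψ t 0 * s + (P φ ψ t 1 * x₂ - ⟪P φ ψ t, X φ ψ t⟫) := by
    funext s
    simp [Sf, xe, PiLp.inner_apply, RCLike.inner_apply, Fin.sum_univ_two]
    ring
  have hexp : HasDerivAt (fun s : ℝ => Sf X P (s, x₂, t, l, φ, ψ)) (P φ ψ t 0) x₁ := by
    rw [hfun]
    simpa using ((hasDerivAt_id x₁).const_mul (P φ ψ t 0)).add_const (P φ ψ t 1 * x₂ - ⟪P φ ψ t, X φ ψ t⟫)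
  exact hline.unique hexp

lemma pd2 (hXP : ContDiff ℝ (⊤ : ℕ∞) (fun q : ℝ × ℝ × ℝ => (X q.1 q.2.1 q.2.2, P q.1 q.2.1 q.2.2)))
    (v : V6) :
    fderiv ℝ (Sf X P) v (0,1,0,0,0,0) = P v.2.2.2.2.1 v.2.2.2.2.2 v.2.2.1 1 := by
  obtain ⟨x₁, x₂, t, l, φ, ψ⟩ := v
  have h1 : HasDerivAt (fun s : ℝ => ((x₁, s, t, l, φ, ψ) : V6))
      ((0:ℝ),(1:ℝ),(0:ℝ),(0:ℝ),(0:ℝ),(0:ℝ)) x₂ :=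
    (hasDerivAt_const _ _).prodMk ((hasDerivAt_id x₂).prodMk (hasDerivAt_const _ _))
  have hline : HasDerivAt (fun s : ℝ => Sf X P (x₁, s, t, l, φ, ψ))
      (fderiv ℝ (Sf X P) (x₁,x₂,t,l,φ,ψ) (0,1,0,0,0,0)) x₂ :=
    (((hS hXP).differentiable (by simp) _).hasFDerivAt).comp_hasDerivAt x₂ h1
  have hfun : (fun s : ℝ => Sf X P (x₁, s, t, l, φ, ψ))
      = fun s => P φ ψ t 1 * s + (P φ ψ t 0 * x₁ - ⟪P φ ψ t, X φ ψ t⟫) := by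
    funext s
    simp [Sf, xe, PiLp.inner_apply, RCLike.inner_apply, Fin.sum_univ_two]
    ring
  have hexp : HasDerivAt (fun s : ℝ => Sf X P (x₁, s, t, l, φ, ψ)) (P φ ψ t 1) x₂ := by
    rw [hfun]
    simpa using ((hasDerivAt_id x₂).const_mul (P φ ψ t 1)).add_const (P φ ψ t 0 * x₁ - ⟪P φ ψ t, X φ ψ t⟫)
  exact hline.unique hexp

lemma pd4 (hXP : ContDiff ℝ (⊤ : ℕ∞) (fun q : ℝ × ℝ × ℝ => (X q.1 q.2.1 q.2.2, P q.1 q.2.1 q.2.2)))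
    (v : V6) :
    fderiv ℝ (Sf X P) v (0,0,0,1,0,0) = 0 := by
  obtain ⟨x₁, x₂, t, l, φ, ψ⟩ := v
  have h1 : HasDerivAt (fun s : ℝ => ((x₁, x₂, t, s, φ, ψ) : V6))
      ((0:ℝ),(0:ℝ),(0:ℝ),(1:ℝ),(0:ℝ),(0:ℝ)) l :=
    (hasDerivAt_const _ _).prodMk ((hasDerivAt_const _ _).prodMk ((hasDerivAt_const _ _).prodMk
      ((hasDerivAt_id l).prodMk (hasDerivAt_const _ _))))
  have hline : HasDerivAt (fun s : ℝ => Sf X P (x₁, x₂, t, s, φ, ψ))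
      (fderiv ℝ (Sf X P) (x₁,x₂,t,l,φ,ψ) (0,0,0,1,0,0)) l :=
    (((hS hXP).differentiable (by simp) _).hasFDerivAt).comp_hasDerivAt l h1
  have hfun : (fun s : ℝ => Sf X P (x₁, x₂, t, s, φ, ψ))
      = fun _ => Sf X P (x₁, x₂, t, 0, φ, ψ) := rfl
  have hexp : HasDerivAt (fun s : ℝ => Sf X P (x₁, x₂, t, s, φ, ψ))
      (0 : ℝ) l := by rw [hfun]; exact hasDerivAt_const _ _
  exact hline.unique hexp

def D5 (X P : ℝ → ℝ → ℝ → E2) : V6 → ℝ := fun v => fderiv ℝ (Sf X P) v (0,0,0,0,1,0)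
def D6 (X P : ℝ → ℝ → ℝ → E2) : V6 → ℝ := fun v => fderiv ℝ (Sf X P) v (0,0,0,0,0,1)

def Gexp (X P : ℝ → ℝ → ℝ → E2) : V6 → V6 := fun v =>
  (v.2.2.2.2.1, v.2.2.2.2.2, v.2.2.1, Sf X P v,
    1 + v.2.2.2.1 * D5 X P v, v.2.2.2.1 * D6 X P v)

section derivIdent
variable {Φ : ℝ → ℝ → ℝ → E2 → ℝ → ℝ}
variable (hΦ : ∀ l φ ψ x t, Φ l φ ψ x t = φ + l * ⟪P φ ψ t, x - X φ ψ t⟫)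
include hΦ

lemma dL (x₁ x₂ t l φ ψ : ℝ) :
    deriv (fun l' => Φ l' φ ψ (WithLp.toLp 2 ![x₁, x₂]) t) l = Sf X P (x₁,x₂,t,l,φ,ψ) := by
  have hfun : (fun l' => Φ l' φ ψ (WithLp.toLp 2 ![x₁, x₂]) t)
      = fun l' => φ + l' * Sf X P (x₁,x₂,t,l,φ,ψ) := by
    funext l'
    rw [hΦ]
    rfl
  rw [hfun]
  have := (((hasDerivAt_id l).mul_const (Sf X P (x₁,x₂,t,l,φ,ψ))).const_add φ)
  simpa using this.deriv

lemma dPhi (hXP : ContDiff ℝ (⊤ : ℕ∞) (fun q : ℝ × ℝ × ℝ => (X q.1 q.2.1 q.2.2, P q.1 q.2.1 q.2.2)))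
    (x₁ x₂ t l φ ψ : ℝ) :
    deriv (fun φ' => Φ l φ' ψ (WithLp.toLp 2 ![x₁, x₂]) t) φ = 1 + l * D5 X P (x₁,x₂,t,l,φ,ψ) := by
  have hfun : (fun φ' => Φ l φ' ψ (WithLp.toLp 2 ![x₁, x₂]) t)
      = fun φ' => φ' + l * Sf X P (x₁,x₂,t,l,φ',ψ) := by
    funext φ'
    rw [hΦ]
    rfl
  rw [hfun]
  have h1 : HasDerivAt (fun φ' : ℝ => ((x₁, x₂, t, l, φ', ψ) : V6))
      ((0:ℝ),(0:ℝ),(0:ℝ),(0:ℝ),(1:ℝ),(0:ℝ)) φ :=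
    (hasDerivAt_const _ _).prodMk ((hasDerivAt_const _ _).prodMk ((hasDerivAt_const _ _).prodMk
      ((hasDerivAt_const _ _).prodMk ((hasDerivAt_id φ).prodMk (hasDerivAt_const _ _)))))
  have hline : HasDerivAt (fun φ' : ℝ => Sf X P (x₁, x₂, t, l, φ', ψ))
      (D5 X P (x₁,x₂,t,l,φ,ψ)) φ :=
    (((hS hXP).differentiable (by simp) _).hasFDerivAt).comp_hasDerivAt φ h1
  have := (hasDerivAt_id φ).add (hline.const_mul l)
  exact this.deriv

lemma dPsi (hXP : ContDiff ℝ (⊤ : ℕ∞) (fun q : ℝ × ℝ × ℝ => (X q.1 q.2.1 q.2.2, P q.1 q.2.1 q.2.2)))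
    (x₁ x₂ t l φ ψ : ℝ) :
    deriv (fun ψ' => Φ l φ ψ' (WithLp.toLp 2 ![x₁, x₂]) t) ψ = l * D6 X P (x₁,x₂,t,l,φ,ψ) := by
  have hfun : (fun ψ' => Φ l φ ψ' (WithLp.toLp 2 ![x₁, x₂]) t)
      = fun ψ' => φ + l * Sf X P (x₁,x₂,t,l,φ,ψ') := by
    funext ψ'
    rw [hΦ]
    rfl
  rw [hfun]
  have h1 : HasDerivAt (fun ψ' : ℝ => ((x₁, x₂, t, l, φ, ψ') : V6))
      ((0:ℝ),(0:ℝ),(0:ℝ),(0:ℝ),(0:ℝ),(1:ℝ)) ψ :=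
    (hasDerivAt_const _ _).prodMk ((hasDerivAt_const _ _).prodMk ((hasDerivAt_const _ _).prodMk
      ((hasDerivAt_const _ _).prodMk ((hasDerivAt_const _ _).prodMk (hasDerivAt_id ψ)))))
  have hline : HasDerivAt (fun ψ' : ℝ => Sf X P (x₁, x₂, t, l, φ, ψ'))
      (D6 X P (x₁,x₂,t,l,φ,ψ)) ψ :=
    (((hS hXP).differentiable (by simp) _).hasFDerivAt).comp_hasDerivAt ψ h1
  have := (hasDerivAt_const ψ φ).add (hline.const_mul l)
  exact this.deriv.trans (zero_add _)

end derivIdent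

def pr3 : V6 →L[ℝ] ℝ :=
  (ContinuousLinearMap.fst ℝ ℝ _).comp ((ContinuousLinearMap.snd ℝ ℝ _).comp
    (ContinuousLinearMap.snd ℝ ℝ _))
def pr4 : V6 →L[ℝ] ℝ :=
  (ContinuousLinearMap.fst ℝ ℝ _).comp ((ContinuousLinearMap.snd ℝ ℝ _).comp
    ((ContinuousLinearMap.snd ℝ ℝ _).comp (ContinuousLinearMap.snd ℝ ℝ _)))
def pr5 : V6 →L[ℝ] ℝ :=
  (ContinuousLinearMap.fst ℝ ℝ _).comp ((ContinuousLinearMap.snd ℝ ℝ _).comp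
    ((ContinuousLinearMap.snd ℝ ℝ _).comp ((ContinuousLinearMap.snd ℝ ℝ _).comp
      (ContinuousLinearMap.snd ℝ ℝ _))))
def pr6 : V6 →L[ℝ] ℝ :=
  (ContinuousLinearMap.snd ℝ ℝ _).comp ((ContinuousLinearMap.snd ℝ ℝ _).comp
    ((ContinuousLinearMap.snd ℝ ℝ _).comp ((ContinuousLinearMap.snd ℝ ℝ _).comp
      (ContinuousLinearMap.snd ℝ ℝ _))))

set_option maxHeartbeats 1000000 in
theorem core (hXP : ContDiff ℝ (⊤ : ℕ∞) (fun q : ℝ × ℝ × ℝ => (X q.1 q.2.1 q.2.2, P q.1 q.2.1 q.2.2)))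
    (x₁ x₂ t l φ ψ : ℝ)
    (h5 : 1 + l * D5 X P (x₁,x₂,t,l,φ,ψ) = 0)
    (h6 : l * D6 X P (x₁,x₂,t,l,φ,ψ) = 0) :
    LinearMap.det (fderiv ℝ (Gexp X P) (x₁,x₂,t,l,φ,ψ)).toLinearMap
      = P φ ψ t 0 * deriv (fun ψ' => P φ ψ' t) ψ 1
        - P φ ψ t 1 * deriv (fun ψ' => P φ ψ' t) ψ 0 := by
  set v₀ : V6 := (x₁,x₂,t,l,φ,ψ) with hv₀
  have hl : l ≠ 0 := by
    intro h
    rw [h] at h5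
    norm_num at h5
  have hD6 : D6 X P v₀ = 0 := by
    rcases mul_eq_zero.mp h6 with h | h
    · exact absurd h hl
    · exact h
  -- second derivative setup
  have hSc := hS hXP
  have hasF : ∀ y, HasFDerivAt (Sf X P) (fderiv ℝ (Sf X P) y) y :=
    fun y => ((hSc.differentiable (by simp)) y).hasFDerivAt
  set f'' := fderiv ℝ (fderiv ℝ (Sf X P)) v₀ with hf''
  have hasD : HasFDerivAt (fderiv ℝ (Sf X P)) f'' v₀ :=
    (((hSc.fderiv_right (m := 1) (by exact WithTop.coe_le_coe.mpr le_top)).differentiable (by simp)) v₀).hasFDerivAt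
  have sym : ∀ v w : V6, f'' v w = f'' w v :=
    second_derivative_symmetric hasF hasD
  have happ : ∀ w : V6, HasFDerivAt (fun v => fderiv ℝ (Sf X P) v w)
      ((ContinuousLinearMap.apply ℝ ℝ w).comp f'') v₀ :=
    fun w => (ContinuousLinearMap.apply ℝ ℝ w).hasFDerivAt.comp v₀ hasD
  -- f'' (e4, ·) = 0
  have he4 : ∀ w : V6, f'' ((0:ℝ),(0:ℝ),(0:ℝ),(1:ℝ),(0:ℝ),(0:ℝ)) w = 0 := by
    have h0 : HasFDerivAt (fun v : V6 => fderiv ℝ (Sf X P) v (0,0,0,1,0,0))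
        ((ContinuousLinearMap.apply ℝ ℝ ((0:ℝ),(0:ℝ),(0:ℝ),(1:ℝ),(0:ℝ),(0:ℝ))).comp f'') v₀ :=
      happ _
    have hfun : (fun v : V6 => fderiv ℝ (Sf X P) v (0,0,0,1,0,0)) = fun _ => (0:ℝ) :=
      funext (pd4 hXP)
    rw [hfun] at h0
    have hzero := h0.unique (hasFDerivAt_const 0 v₀)
    intro w
    have h1 := congrArg (fun (T : V6 →L[ℝ] ℝ) => T w) hzero
    simp only [ContinuousLinearMap.comp_apply, ContinuousLinearMap.apply_apply,
      ContinuousLinearMap.zero_apply] at h1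
    rw [sym]
    exact h1
  -- curve differentiability
  have hline2 : HasDerivAt (fun s : ℝ => ((φ, s, t) : ℝ×ℝ×ℝ)) ((0:ℝ),(1:ℝ),(0:ℝ)) ψ :=
    (hasDerivAt_const _ _).prodMk ((hasDerivAt_id ψ).prodMk (hasDerivAt_const _ _))
  have hc : HasDerivAt (fun s : ℝ => P φ s t)
      (fderiv ℝ (fun q : ℝ×ℝ×ℝ => P q.1 q.2.1 q.2.2) (φ,ψ,t) (0,1,0)) ψ :=
    ((((contDiff_snd.comp hXP).differentiable (by simp)) (φ,ψ,t)).hasFDerivAt).comp_hasDerivAt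
      (f := fun s : ℝ => ((φ, s, t) : ℝ×ℝ×ℝ)) ψ hline2
  have hc' : HasDerivAt (fun s : ℝ => P φ s t) (deriv (fun s : ℝ => P φ s t) ψ) ψ :=
    hc.differentiableAt.hasDerivAt
  -- mixed partials in directions (e1,e6) and (e2,e6)
  have hγ6 : HasDerivAt (fun s : ℝ => ((x₁, x₂, t, l, φ, s) : V6))
      ((0:ℝ),(0:ℝ),(0:ℝ),(0:ℝ),(0:ℝ),(1:ℝ)) ψ :=
    (hasDerivAt_const _ _).prodMk ((hasDerivAt_const _ _).prodMk ((hasDerivAt_const _ _).prodMk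
      ((hasDerivAt_const _ _).prodMk ((hasDerivAt_const _ _).prodMk (hasDerivAt_id ψ)))))
  have hq0 : f'' ((1:ℝ),(0:ℝ),(0:ℝ),(0:ℝ),(0:ℝ),(0:ℝ)) ((0:ℝ),(0:ℝ),(0:ℝ),(0:ℝ),(0:ℝ),(1:ℝ))
      = deriv (fun ψ' => P φ ψ' t) ψ 0 := by
    have h0 : HasFDerivAt (fun v : V6 => fderiv ℝ (Sf X P) v (1,0,0,0,0,0))
        ((ContinuousLinearMap.apply ℝ ℝ ((1:ℝ),(0:ℝ),(0:ℝ),(0:ℝ),(0:ℝ),(0:ℝ))).comp f'') v₀ :=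
      happ _
    have hfun : (fun v : V6 => fderiv ℝ (Sf X P) v (1,0,0,0,0,0))
        = fun v : V6 => P v.2.2.2.2.1 v.2.2.2.2.2 v.2.2.1 0 := funext (pd1 hXP)
    rw [hfun] at h0
    have hcomp : HasDerivAt (fun s : ℝ => P φ s t 0)
        (((ContinuousLinearMap.apply ℝ ℝ ((1:ℝ),(0:ℝ),(0:ℝ),(0:ℝ),(0:ℝ),(0:ℝ))).comp f'')
          ((0:ℝ),(0:ℝ),(0:ℝ),(0:ℝ),(0:ℝ),(1:ℝ))) ψ :=
      h0.comp_hasDerivAt (f := fun s : ℝ => ((x₁, x₂, t, l, φ, s) : V6)) ψ hγ6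
    have hproj : HasDerivAt (fun s : ℝ => P φ s t 0)
        ((EuclideanSpace.proj (0 : Fin 2) (𝕜 := ℝ)) (deriv (fun s : ℝ => P φ s t) ψ)) ψ :=
      ((EuclideanSpace.proj (0 : Fin 2) (𝕜 := ℝ)).hasFDerivAt).comp_hasDerivAt ψ hc'
    have := hcomp.unique hproj
    simp only [ContinuousLinearMap.comp_apply, ContinuousLinearMap.apply_apply,
      PiLp.proj_apply] at this
    rw [sym]
    exact this
  have hq1 : f'' ((0:ℝ),(1:ℝ),(0:ℝ),(0:ℝ),(0:ℝ),(0:ℝ)) ((0:ℝ),(0:ℝ),(0:ℝ),(0:ℝ),(0:ℝ),(1:ℝ))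
      = deriv (fun ψ' => P φ ψ' t) ψ 1 := by
    have h0 : HasFDerivAt (fun v : V6 => fderiv ℝ (Sf X P) v (0,1,0,0,0,0))
        ((ContinuousLinearMap.apply ℝ ℝ ((0:ℝ),(1:ℝ),(0:ℝ),(0:ℝ),(0:ℝ),(0:ℝ))).comp f'') v₀ :=
      happ _
    have hfun : (fun v : V6 => fderiv ℝ (Sf X P) v (0,1,0,0,0,0))
        = fun v : V6 => P v.2.2.2.2.1 v.2.2.2.2.2 v.2.2.1 1 := funext (pd2 hXP)
    rw [hfun] at h0
    have hcomp : HasDerivAt (fun s : ℝ => P φ s t 1)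
        (((ContinuousLinearMap.apply ℝ ℝ ((0:ℝ),(1:ℝ),(0:ℝ),(0:ℝ),(0:ℝ),(0:ℝ))).comp f'')
          ((0:ℝ),(0:ℝ),(0:ℝ),(0:ℝ),(0:ℝ),(1:ℝ))) ψ :=
      h0.comp_hasDerivAt (f := fun s : ℝ => ((x₁, x₂, t, l, φ, s) : V6)) ψ hγ6
    have hproj : HasDerivAt (fun s : ℝ => P φ s t 1)
        ((EuclideanSpace.proj (1 : Fin 2) (𝕜 := ℝ)) (deriv (fun s : ℝ => P φ s t) ψ)) ψ :=
      ((EuclideanSpace.proj (1 : Fin 2) (𝕜 := ℝ)).hasFDerivAt).comp_hasDerivAt ψ hc'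
    have := hcomp.unique hproj
    simp only [ContinuousLinearMap.comp_apply, ContinuousLinearMap.apply_apply,
      PiLp.proj_apply] at this
    rw [sym]
    exact this
  -- the derivative of Gexp
  set R5 : V6 →L[ℝ] ℝ :=
    (ContinuousLinearMap.apply ℝ ℝ ((0:ℝ),(0:ℝ),(0:ℝ),(0:ℝ),(1:ℝ),(0:ℝ))).comp f'' with hR5
  set R6 : V6 →L[ℝ] ℝ :=
    (ContinuousLinearMap.apply ℝ ℝ ((0:ℝ),(0:ℝ),(0:ℝ),(0:ℝ),(0:ℝ),(1:ℝ))).comp f'' with hR6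
  have hrow5 : HasFDerivAt (fun v : V6 => 1 + v.2.2.2.1 * D5 X P v)
      (l • R5 + D5 X P v₀ • pr4) v₀ := by
    have h := ((pr4.hasFDerivAt (x := v₀)).mul
      (happ ((0:ℝ),(0:ℝ),(0:ℝ),(0:ℝ),(1:ℝ),(0:ℝ)))).const_add 1
    exact h
  have hrow6 : HasFDerivAt (fun v : V6 => v.2.2.2.1 * D6 X P v)
      (l • R6 + D6 X P v₀ • pr4) v₀ := by
    have h := (pr4.hasFDerivAt (x := v₀)).mul
      (happ ((0:ℝ),(0:ℝ),(0:ℝ),(0:ℝ),(0:ℝ),(1:ℝ)))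
    exact h
  set Lmap : V6 →L[ℝ] V6 :=
    pr5.prod (pr6.prod (pr3.prod ((fderiv ℝ (Sf X P) v₀).prod
      ((l • R5 + D5 X P v₀ • pr4).prod (l • R6 + D6 X P v₀ • pr4))))) with hLmap
  have hGd : HasFDerivAt (Gexp X P) Lmap v₀ :=
    pr5.hasFDerivAt.prodMk (pr6.hasFDerivAt.prodMk (pr3.hasFDerivAt.prodMk
      ((hasF v₀).prodMk (hrow5.prodMk hrow6))))
  rw [hGd.fderiv, det_aux]
  have heq : ∀ u : V6, equiv6 u
      = ![u.1, u.2.1, u.2.2.1, u.2.2.2.1, u.2.2.2.2.1, u.2.2.2.2.2] := fun _ => rfl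
  have hb0 : equiv6.symm (Pi.single (0 : Fin 6) (1:ℝ)) = ((1:ℝ),0,0,0,0,0) := rfl
  have hb1 : equiv6.symm (Pi.single (1 : Fin 6) (1:ℝ)) = ((0:ℝ),1,0,0,0,0) := rfl
  have hb2 : equiv6.symm (Pi.single (2 : Fin 6) (1:ℝ)) = ((0:ℝ),0,1,0,0,0) := rfl
  have hb3 : equiv6.symm (Pi.single (3 : Fin 6) (1:ℝ)) = ((0:ℝ),0,0,1,0,0) := rfl
  have hb4 : equiv6.symm (Pi.single (4 : Fin 6) (1:ℝ)) = ((0:ℝ),0,0,0,1,0) := rfl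
  have hb5 : equiv6.symm (Pi.single (5 : Fin 6) (1:ℝ)) = ((0:ℝ),0,0,0,0,1) := rfl
  have hpd1 : fderiv ℝ (Sf X P) v₀ ((1:ℝ),0,0,0,0,0) = P φ ψ t 0 := pd1 hXP v₀
  have hpd2 : fderiv ℝ (Sf X P) v₀ ((0:ℝ),1,0,0,0,0) = P φ ψ t 1 := pd2 hXP v₀
  have hpd4 : fderiv ℝ (Sf X P) v₀ ((0:ℝ),0,0,1,0,0) = 0 := pd4 hXP v₀
  have he45 : f'' ((0:ℝ),0,0,1,0,0) ((0:ℝ),0,0,0,1,0) = 0 := he4 _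
  have he46 : f'' ((0:ℝ),0,0,1,0,0) ((0:ℝ),0,0,0,0,1) = 0 := he4 _
  have hc60 : (l • R6 + D6 X P v₀ • pr4) ((1:ℝ),0,0,0,0,0)
      = l * f'' ((1:ℝ),0,0,0,0,0) ((0:ℝ),0,0,0,0,1) + D6 X P v₀ * 0 := rfl
  have hc61 : (l • R6 + D6 X P v₀ • pr4) ((0:ℝ),1,0,0,0,0)
      = l * f'' ((0:ℝ),1,0,0,0,0) ((0:ℝ),0,0,0,0,1) + D6 X P v₀ * 0 := rfl
  have hc53 : (l • R5 + D5 X P v₀ • pr4) ((0:ℝ),0,0,1,0,0)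
      = l * f'' ((0:ℝ),0,0,1,0,0) ((0:ℝ),0,0,0,1,0) + D5 X P v₀ * 1 := rfl
  have hc63 : (l • R6 + D6 X P v₀ • pr4) ((0:ℝ),0,0,1,0,0)
      = l * f'' ((0:ℝ),0,0,1,0,0) ((0:ℝ),0,0,0,0,1) + D6 X P v₀ * 1 := rfl
  have hcol0 : Lmap ((1:ℝ),0,0,0,0,0)
      = ((0:ℝ), 0, 0, P φ ψ t 0,
         (l • R5 + D5 X P v₀ • pr4) ((1:ℝ),0,0,0,0,0),
         l * deriv (fun ψ' => P φ ψ' t) ψ 0) := by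
    show ((0:ℝ), 0, 0, fderiv ℝ (Sf X P) v₀ ((1:ℝ),0,0,0,0,0),
      (l • R5 + D5 X P v₀ • pr4) ((1:ℝ),0,0,0,0,0),
      (l • R6 + D6 X P v₀ • pr4) ((1:ℝ),0,0,0,0,0)) = _
    rw [hpd1, hc60, hq0]
    norm_num
  have hcol1 : Lmap ((0:ℝ),1,0,0,0,0)
      = ((0:ℝ), 0, 0, P φ ψ t 1,
         (l • R5 + D5 X P v₀ • pr4) ((0:ℝ),1,0,0,0,0),
         l * deriv (fun ψ' => P φ ψ' t) ψ 1) := by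
    show ((0:ℝ), 0, 0, fderiv ℝ (Sf X P) v₀ ((0:ℝ),1,0,0,0,0),
      (l • R5 + D5 X P v₀ • pr4) ((0:ℝ),1,0,0,0,0),
      (l • R6 + D6 X P v₀ • pr4) ((0:ℝ),1,0,0,0,0)) = _
    rw [hpd2, hc61, hq1]
    norm_num
  have hcol2 : Lmap ((0:ℝ),0,1,0,0,0)
      = ((0:ℝ), 0, 1, fderiv ℝ (Sf X P) v₀ ((0:ℝ),0,1,0,0,0),
         (l • R5 + D5 X P v₀ • pr4) ((0:ℝ),0,1,0,0,0),
         (l • R6 + D6 X P v₀ • pr4) ((0:ℝ),0,1,0,0,0)) := rfl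
  have hcol3 : Lmap ((0:ℝ),0,0,1,0,0)
      = ((0:ℝ), 0, 0, 0, D5 X P v₀, 0) := by
    show ((0:ℝ), 0, 0, fderiv ℝ (Sf X P) v₀ ((0:ℝ),0,0,1,0,0),
      (l • R5 + D5 X P v₀ • pr4) ((0:ℝ),0,0,1,0,0),
      (l • R6 + D6 X P v₀ • pr4) ((0:ℝ),0,0,1,0,0)) = _
    rw [hpd4, hc53, hc63, he45, he46, hD6]
    norm_num
  have hcol4 : Lmap ((0:ℝ),0,0,0,1,0)
      = ((1:ℝ), 0, 0, fderiv ℝ (Sf X P) v₀ ((0:ℝ),0,0,0,1,0),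
         (l • R5 + D5 X P v₀ • pr4) ((0:ℝ),0,0,0,1,0),
         (l • R6 + D6 X P v₀ • pr4) ((0:ℝ),0,0,0,1,0)) := rfl
  have hcol5 : Lmap ((0:ℝ),0,0,0,0,1)
      = ((0:ℝ), 1, 0, fderiv ℝ (Sf X P) v₀ ((0:ℝ),0,0,0,0,1),
         (l • R5 + D5 X P v₀ • pr4) ((0:ℝ),0,0,0,0,1),
         (l • R6 + D6 X P v₀ • pr4) ((0:ℝ),0,0,0,0,1)) := rfl
  set C : Fin 6 → V6 := ![((1:ℝ),0,0,0,0,0), ((0:ℝ),1,0,0,0,0), ((0:ℝ),0,1,0,0,0),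
    ((0:ℝ),0,0,1,0,0), ((0:ℝ),0,0,0,1,0), ((0:ℝ),0,0,0,0,1)] with hC
  have hsingle : ∀ j : Fin 6, equiv6.symm (Pi.single j (1:ℝ)) = C j := by
    intro j; fin_cases j <;> rfl
  set W : Fin 6 → V6 := ![
    ((0:ℝ), 0, 0, P φ ψ t 0,
       (l • R5 + D5 X P v₀ • pr4) ((1:ℝ),0,0,0,0,0),
       l * deriv (fun ψ' => P φ ψ' t) ψ 0),
    ((0:ℝ), 0, 0, P φ ψ t 1,
       (l • R5 + D5 X P v₀ • pr4) ((0:ℝ),1,0,0,0,0),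
       l * deriv (fun ψ' => P φ ψ' t) ψ 1),
    ((0:ℝ), 0, 1, fderiv ℝ (Sf X P) v₀ ((0:ℝ),0,1,0,0,0),
       (l • R5 + D5 X P v₀ • pr4) ((0:ℝ),0,1,0,0,0),
       (l • R6 + D6 X P v₀ • pr4) ((0:ℝ),0,1,0,0,0)),
    ((0:ℝ), 0, 0, 0, D5 X P v₀, 0),
    ((1:ℝ), 0, 0, fderiv ℝ (Sf X P) v₀ ((0:ℝ),0,0,0,1,0),
       (l • R5 + D5 X P v₀ • pr4) ((0:ℝ),0,0,0,1,0),
       (l • R6 + D6 X P v₀ • pr4) ((0:ℝ),0,0,0,1,0)),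
    ((0:ℝ), 1, 0, fderiv ℝ (Sf X P) v₀ ((0:ℝ),0,0,0,0,1),
       (l • R5 + D5 X P v₀ • pr4) ((0:ℝ),0,0,0,0,1),
       (l • R6 + D6 X P v₀ • pr4) ((0:ℝ),0,0,0,0,1))] with hW
  have hLW : ∀ j : Fin 6, Lmap (C j) = W j := by
    intro j
    fin_cases j
    · exact hcol0
    · exact hcol1
    · exact hcol2
    · exact hcol3
    · exact hcol4
    · exact hcol5
  have hM : (Matrix.of fun i j =>
        equiv6 ((Lmap.toLinearMap) (equiv6.symm (Pi.single j 1))) i)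
      = !![0,0,0,0,1,0;
           0,0,0,0,0,1;
           0,0,1,0,0,0;
           P φ ψ t 0, P φ ψ t 1, fderiv ℝ (Sf X P) v₀ ((0:ℝ),0,1,0,0,0), 0,
             fderiv ℝ (Sf X P) v₀ ((0:ℝ),0,0,0,1,0), fderiv ℝ (Sf X P) v₀ ((0:ℝ),0,0,0,0,1);
           (l • R5 + D5 X P v₀ • pr4) ((1:ℝ),0,0,0,0,0), (l • R5 + D5 X P v₀ • pr4) ((0:ℝ),1,0,0,0,0),
             (l • R5 + D5 X P v₀ • pr4) ((0:ℝ),0,1,0,0,0), D5 X P v₀,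
             (l • R5 + D5 X P v₀ • pr4) ((0:ℝ),0,0,0,1,0), (l • R5 + D5 X P v₀ • pr4) ((0:ℝ),0,0,0,0,1);
           l * deriv (fun ψ' => P φ ψ' t) ψ 0, l * deriv (fun ψ' => P φ ψ' t) ψ 1,
             (l • R6 + D6 X P v₀ • pr4) ((0:ℝ),0,1,0,0,0), 0,
             (l • R6 + D6 X P v₀ • pr4) ((0:ℝ),0,0,0,1,0), (l • R6 + D6 X P v₀ • pr4) ((0:ℝ),0,0,0,0,1)] := by
    ext i j
    rw [Matrix.of_apply, ContinuousLinearMap.coe_coe, hsingle j, hLW j]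
    fin_cases i <;> fin_cases j <;> rfl
  rw [hM, det_special]
  have hm : l * D5 X P v₀ = -1 := by linarith
  linear_combination (P φ ψ t 1 * deriv (fun ψ' => P φ ψ' t) ψ 0
    - P φ ψ t 0 * deriv (fun ψ' => P φ ψ' t) ψ 1) * hm

/-- Proposition 4, case n = 2: Under the setup of Proposition 2, for the map
`G : (x₁,x₂,t,λ,φ,ψ) ↦ (φ,ψ,t,∂_λΦ,∂_φΦ,∂_ψΦ)` (i.e. `y = (φ,ψ,t)`, `θ = (λ,φ,ψ)`),
at every point of the critical set `C_Φ = {∂_λΦ = ∂_φΦ = ∂_ψΦ = 0}` the Jacobian determinant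
of `G` equals `± det(P,∂_ψP)`; in particular `|det DG| = |det(P,∂_ψP)|` on `C_Φ`. -/
theorem stmt10
    (H : EuclideanSpace ℝ (Fin 2) → EuclideanSpace ℝ (Fin 2) → ℝ)
    (hH : ContDiffOn ℝ (⊤ : ℕ∞) (fun z : EuclideanSpace ℝ (Fin 2) × EuclideanSpace ℝ (Fin 2) =>
      H z.1 z.2) {z | z.2 ≠ 0})
    (hhom : ∀ (x p : EuclideanSpace ℝ (Fin 2)), p ≠ 0 → ∀ s : ℝ, 0 < s →
      H x (s • p) = s * H x p)
    (ω : ℝ → EuclideanSpace ℝ (Fin 2))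
    (hω : ∀ ψ, ω ψ = ![Real.cos ψ, Real.sin ψ])
    (X P : ℝ → ℝ → ℝ → EuclideanSpace ℝ (Fin 2))
    (hXP : ContDiff ℝ (⊤ : ℕ∞) (fun q : ℝ × ℝ × ℝ =>
      (X q.1 q.2.1 q.2.2, P q.1 q.2.1 q.2.2)))
    (hPne : ∀ φ ψ t, P φ ψ t ≠ 0)
    (hamX : ∀ φ ψ t, deriv (fun s => X φ ψ s) t =
      gradient (fun p => H (X φ ψ t) p) (P φ ψ t))
    (hamP : ∀ φ ψ t, deriv (fun s => P φ ψ s) t =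
      - gradient (fun x => H x (P φ ψ t)) (X φ ψ t))
    (hX0 : ∀ φ ψ, X φ ψ 0 = φ • ω ψ)
    (hP0 : ∀ φ ψ, P φ ψ 0 = ω ψ)
    (Φ : ℝ → ℝ → ℝ → EuclideanSpace ℝ (Fin 2) → ℝ → ℝ)
    (hΦ : ∀ l φ ψ x t, Φ l φ ψ x t = φ + l * ⟪P φ ψ t, x - X φ ψ t⟫)
    (detPψ : ℝ → ℝ → ℝ → ℝ)
    (hdet : ∀ φ ψ t, detPψ φ ψ t =
      P φ ψ t 0 * deriv (fun ψ' => P φ ψ' t) ψ 1 -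
      P φ ψ t 1 * deriv (fun ψ' => P φ ψ' t) ψ 0)
    -- the map G in the variables (x₁, x₂, t, λ, φ, ψ)
    (G : ℝ × ℝ × ℝ × ℝ × ℝ × ℝ → ℝ × ℝ × ℝ × ℝ × ℝ × ℝ)
    (hG : ∀ x₁ x₂ t l φ ψ : ℝ, G (x₁, x₂, t, l, φ, ψ) =
      (φ, ψ, t,
       deriv (fun l' => Φ l' φ ψ (WithLp.toLp 2 ![x₁, x₂]) t) l,
       deriv (fun φ' => Φ l φ' ψ (WithLp.toLp 2 ![x₁, x₂]) t) φ,
       deriv (fun ψ' => Φ l φ ψ' (WithLp.toLp 2 ![x₁, x₂]) t) ψ)) :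
    ∀ x₁ x₂ t l φ ψ : ℝ,
      deriv (fun l' => Φ l' φ ψ (WithLp.toLp 2 ![x₁, x₂]) t) l = 0 →
      deriv (fun φ' => Φ l φ' ψ (WithLp.toLp 2 ![x₁, x₂]) t) φ = 0 →
      deriv (fun ψ' => Φ l φ ψ' (WithLp.toLp 2 ![x₁, x₂]) t) ψ = 0 →
      (LinearMap.det (fderiv ℝ G (x₁, x₂, t, l, φ, ψ)).toLinearMap = detPψ φ ψ t ∨
       LinearMap.det (fderiv ℝ G (x₁, x₂, t, l, φ, ψ)).toLinearMap = -detPψ φ ψ t) ∧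
      |LinearMap.det (fderiv ℝ G (x₁, x₂, t, l, φ, ψ)).toLinearMap| = |detPψ φ ψ t| := by
  intro x₁ x₂ t l φ ψ h1 h2 h3
  have hGeq : G = Gexp X P := by
    funext v
    obtain ⟨a, b, c, d, e, f⟩ := v
    rw [hG a b c d e f, dL hΦ a b c d e f, dPhi hΦ hXP a b c d e f,
      dPsi hΦ hXP a b c d e f]
    rfl
  have h5 : 1 + l * D5 X P (x₁,x₂,t,l,φ,ψ) = 0 := by
    rw [← dPhi hΦ hXP x₁ x₂ t l φ ψ]; exact h2
  have h6 : l * D6 X P (x₁,x₂,t,l,φ,ψ) = 0 := by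
    rw [← dPsi hΦ hXP x₁ x₂ t l φ ψ]; exact h3
  have hcore := core hXP x₁ x₂ t l φ ψ h5 h6
  rw [hGeq, hdet φ ψ t, hcore]
  exact ⟨Or.inl rfl, rfl⟩

end
end

section
/- (Proposition of Section 8, Case I.) On ℝ⁴ with coordinates (x₁,x₂,ξ₁,ξ₂), let g(x,ξ)=ξ₁²−x₁−ξ₂. For a real quadratic form φ₀(x)=½(αx₁²+2βx₁x₂+γx₂²), put f₁=ξ₁−∂_{x₁}φ₀, f₂=ξ₂−∂_{x₂}φ₀, Λ={f₁=f₂=0}. Then: (i) {f₁,f₂}≡0 and the glancing conditions f₁(0)=f₂(0)=g(0)={g,f₁}(0)={g,f₂}(0)=0 hold if and only if β=−1 and γ=0, i.e. φ₀(x)=½(a·x₁²−2x₁x₂) with a=α; (ii) for such φ₀, Λ is transverse at 0 to F={x₁=0}, i.e. T₀Λ∩span{(0,0,1,0)}={0}; (iii) the matrix A₀ equals 2·[[1,a],[a,a²]] and the vector B₀ equals 2·(−a,1). -/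
/-!
Every function in sight is a polynomial of the form
`c + a₁ x₁ + a₂ x₂ + b₁ ξ₁ + b₂ ξ₂ + q ξ₁²`, and since only `ξ₁` enters nonlinearly this class is
closed under the Poisson bracket, which acts on the six coefficients by an explicit formula.
Once `g`, `f₁`, `f₂` are written in this form, each claim is an identity between coefficients:
the glancing conditions reduce to `{g, f₁}(0) = 1 + β` and `{g, f₂}(0) = γ`, transversality to
`∂_{ξ₁} f₁ = 1`, and `A₀`, `B₀` to iterated brackets of coefficient vectors.
-/

noncomputable def poissonBracket (f g : ℝ × ℝ × ℝ × ℝ → ℝ) (z : ℝ × ℝ × ℝ × ℝ) : ℝ :=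
  deriv (fun s => f (z.1, z.2.1, s, z.2.2.2)) z.2.2.1 *
      deriv (fun s => g (s, z.2.1, z.2.2.1, z.2.2.2)) z.1 -
    deriv (fun s => f (s, z.2.1, z.2.2.1, z.2.2.2)) z.1 *
      deriv (fun s => g (z.1, z.2.1, s, z.2.2.2)) z.2.2.1 +
    deriv (fun s => f (z.1, z.2.1, z.2.2.1, s)) z.2.2.2 *
      deriv (fun s => g (z.1, s, z.2.2.1, z.2.2.2)) z.2.1 -
    deriv (fun s => f (z.1, s, z.2.2.1, z.2.2.2)) z.2.1 *
      deriv (fun s => g (z.1, z.2.1, z.2.2.1, s)) z.2.2.2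

theorem deriv_quadratic (A B C x : ℝ) :
    deriv (fun s => A + B * s + C * s ^ 2) x = B + 2 * C * x := by
  have h : HasDerivAt (fun s => A + B * s + C * s ^ 2) (B * 1 + C * (2 * x)) x := by
    simpa using (((hasDerivAt_id x).const_mul B).const_add A).fun_add
      ((hasDerivAt_pow 2 x).const_mul C)
  rw [h.deriv]
  ring

structure QuadSymbol where
  c : ℝ
  a₁ : ℝ
  a₂ : ℝ
  b₁ : ℝ
  b₂ : ℝ
  q : ℝ

namespace QuadSymbol

def eval (p : QuadSymbol) (z : ℝ × ℝ × ℝ × ℝ) : ℝ :=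
  p.c + p.a₁ * z.1 + p.a₂ * z.2.1 + p.b₁ * z.2.2.1 + p.b₂ * z.2.2.2 + p.q * z.2.2.1 ^ 2

def bracket (p r : QuadSymbol) : QuadSymbol where
  c := p.b₁ * r.a₁ - p.a₁ * r.b₁ + p.b₂ * r.a₂ - p.a₂ * r.b₂
  a₁ := 0
  a₂ := 0
  b₁ := 2 * (p.q * r.a₁ - p.a₁ * r.q)
  b₂ := 0
  q := 0

variable (p r : QuadSymbol) (x₁ x₂ ξ₁ ξ₂ : ℝ)

theorem eval_zero : p.eval (0, 0, 0, 0) = p.c := by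
  simp [eval]

theorem deriv_eval_x₁ : deriv (fun s => p.eval (s, x₂, ξ₁, ξ₂)) x₁ = p.a₁ := by
  have h : (fun s => p.eval (s, x₂, ξ₁, ξ₂)) =
      fun s => (p.c + p.a₂ * x₂ + p.b₁ * ξ₁ + p.b₂ * ξ₂ + p.q * ξ₁ ^ 2) + p.a₁ * s + 0 * s ^ 2 := by
    funext s; simp only [eval]; ring
  rw [h, deriv_quadratic]; ring

theorem deriv_eval_x₂ : deriv (fun s => p.eval (x₁, s, ξ₁, ξ₂)) x₂ = p.a₂ := by
  have h : (fun s => p.eval (x₁, s, ξ₁, ξ₂)) =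
      fun s => (p.c + p.a₁ * x₁ + p.b₁ * ξ₁ + p.b₂ * ξ₂ + p.q * ξ₁ ^ 2) + p.a₂ * s + 0 * s ^ 2 := by
    funext s; simp only [eval]; ring
  rw [h, deriv_quadratic]; ring

theorem deriv_eval_ξ₁ : deriv (fun s => p.eval (x₁, x₂, s, ξ₂)) ξ₁ = p.b₁ + 2 * p.q * ξ₁ := by
  have h : (fun s => p.eval (x₁, x₂, s, ξ₂)) =
      fun s => (p.c + p.a₁ * x₁ + p.a₂ * x₂ + p.b₂ * ξ₂) + p.b₁ * s + p.q * s ^ 2 := by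
    funext s; simp only [eval]; ring
  rw [h, deriv_quadratic]

theorem deriv_eval_ξ₂ : deriv (fun s => p.eval (x₁, x₂, ξ₁, s)) ξ₂ = p.b₂ := by
  have h : (fun s => p.eval (x₁, x₂, ξ₁, s)) =
      fun s => (p.c + p.a₁ * x₁ + p.a₂ * x₂ + p.b₁ * ξ₁ + p.q * ξ₁ ^ 2) + p.b₂ * s + 0 * s ^ 2 := by
    funext s; simp only [eval]; ring
  rw [h, deriv_quadratic]; ring

theorem poissonBracket_eval : poissonBracket p.eval r.eval = (p.bracket r).eval := by
  funext z
  rw [poissonBracket, deriv_eval_x₁, deriv_eval_x₂, deriv_eval_ξ₁, deriv_eval_ξ₂, deriv_eval_x₁,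
    deriv_eval_x₂, deriv_eval_ξ₁, deriv_eval_ξ₂]
  simp only [eval, bracket]
  ring

theorem fderiv_eval (z v : ℝ × ℝ × ℝ × ℝ) :
    fderiv ℝ p.eval z v = p.a₁ * v.1 + p.a₂ * v.2.1 + (p.b₁ + 2 * p.q * z.2.2.1) * v.2.2.1 +
      p.b₂ * v.2.2.2 := by
  have hdiff : DifferentiableAt ℝ p.eval z := by unfold eval; fun_prop
  rw [← hdiff.lineDeriv_eq_fderiv, lineDeriv]
  have h : (fun t : ℝ => p.eval (z + t • v)) = fun t => p.eval z +
      (p.a₁ * v.1 + p.a₂ * v.2.1 + (p.b₁ + 2 * p.q * z.2.2.1) * v.2.2.1 + p.b₂ * v.2.2.2) * t +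
      (p.q * v.2.2.1 ^ 2) * t ^ 2 := by
    funext t; simp only [eval, Prod.fst_add, Prod.snd_add, Prod.smul_fst, Prod.smul_snd, smul_eq_mul]
    ring
  rw [h, deriv_quadratic]; ring

end QuadSymbol

theorem deriv_quadraticForm_fst (α β γ x₁ x₂ : ℝ) :
    deriv (fun s => (α * s ^ 2 + 2 * β * s * x₂ + γ * x₂ ^ 2) / 2) x₁ = α * x₁ + β * x₂ := by
  have h : (fun s => (α * s ^ 2 + 2 * β * s * x₂ + γ * x₂ ^ 2) / 2) =
      fun s => γ * x₂ ^ 2 / 2 + β * x₂ * s + α / 2 * s ^ 2 := by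
    funext s; ring
  rw [h, deriv_quadratic]; ring

theorem deriv_quadraticForm_snd (α β γ x₁ x₂ : ℝ) :
    deriv (fun s => (α * x₁ ^ 2 + 2 * β * x₁ * s + γ * s ^ 2) / 2) x₂ = β * x₁ + γ * x₂ := by
  have h : (fun s => (α * x₁ ^ 2 + 2 * β * x₁ * s + γ * s ^ 2) / 2) =
      fun s => α * x₁ ^ 2 / 2 + β * x₁ * s + γ / 2 * s ^ 2 := by
    funext s; ring
  rw [h, deriv_quadratic]; ring

/-- Section 8, Case I: On `ℝ⁴` with coordinates `(x₁,x₂,ξ₁,ξ₂)`, for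
`g = ξ₁² − x₁ − ξ₂`, `φ₀(x) = ½(αx₁² + 2βx₁x₂ + γx₂²)`, `f₁ = ξ₁ − ∂_{x₁}φ₀`,
`f₂ = ξ₂ − ∂_{x₂}φ₀`: (i) `{f₁,f₂} ≡ 0`, and the glancing conditions at `0` hold iff
`β = −1 ∧ γ = 0`, i.e. `φ₀ = ½(a·x₁² − 2x₁x₂)` with `a = α`; (ii) then `Λ = {f₁ = f₂ = 0}`
is transverse at `0` to `F = {x₁ = 0}` (`T₀Λ ∩ span{(0,0,1,0)} = {0}`); (iii) then
`A₀ = 2[[1,a],[a,a²]]` and `B₀ = 2(−a,1)`. -/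
theorem stmt15 (α β γ : ℝ)
    -- the Poisson bracket on ℝ⁴ with coordinates (x₁, x₂, ξ₁, ξ₂)
    (Pb : ((ℝ × ℝ × ℝ × ℝ) → ℝ) → ((ℝ × ℝ × ℝ × ℝ) → ℝ) → (ℝ × ℝ × ℝ × ℝ) → ℝ)
    (hPb : ∀ f g z, Pb f g z =
      deriv (fun s => f (z.1, z.2.1, s, z.2.2.2)) z.2.2.1 *
        deriv (fun s => g (s, z.2.1, z.2.2.1, z.2.2.2)) z.1 -
      deriv (fun s => f (s, z.2.1, z.2.2.1, z.2.2.2)) z.1 *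
        deriv (fun s => g (z.1, z.2.1, s, z.2.2.2)) z.2.2.1 +
      deriv (fun s => f (z.1, z.2.1, z.2.2.1, s)) z.2.2.2 *
        deriv (fun s => g (z.1, s, z.2.2.1, z.2.2.2)) z.2.1 -
      deriv (fun s => f (z.1, s, z.2.2.1, z.2.2.2)) z.2.1 *
        deriv (fun s => g (z.1, z.2.1, z.2.2.1, s)) z.2.2.2)
    (g : (ℝ × ℝ × ℝ × ℝ) → ℝ)
    (hg : ∀ z : ℝ × ℝ × ℝ × ℝ, g z = z.2.2.1 ^ 2 - z.1 - z.2.2.2)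
    (φ₀ : ℝ × ℝ → ℝ)
    (hφ₀ : ∀ x : ℝ × ℝ, φ₀ x = (α * x.1 ^ 2 + 2 * β * x.1 * x.2 + γ * x.2 ^ 2) / 2)
    (f₁ f₂ : (ℝ × ℝ × ℝ × ℝ) → ℝ)
    (hf₁ : ∀ z : ℝ × ℝ × ℝ × ℝ, f₁ z = z.2.2.1 - deriv (fun s => φ₀ (s, z.2.1)) z.1)
    (hf₂ : ∀ z : ℝ × ℝ × ℝ × ℝ, f₂ z = z.2.2.2 - deriv (fun s => φ₀ (z.1, s)) z.2.1) :
    -- (i)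
    (∀ z, Pb f₁ f₂ z = 0) ∧
    ((f₁ (0, 0, 0, 0) = 0 ∧ f₂ (0, 0, 0, 0) = 0 ∧ g (0, 0, 0, 0) = 0 ∧
      Pb g f₁ (0, 0, 0, 0) = 0 ∧ Pb g f₂ (0, 0, 0, 0) = 0) ↔ (β = -1 ∧ γ = 0)) ∧
    -- (ii) transversality of Λ = {f₁ = f₂ = 0} to F = {x₁ = 0} at 0
    (β = -1 ∧ γ = 0 →
      ∀ v : ℝ × ℝ × ℝ × ℝ,
        fderiv ℝ f₁ (0, 0, 0, 0) v = 0 → fderiv ℝ f₂ (0, 0, 0, 0) v = 0 →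
        v ∈ Submodule.span ℝ {(((0 : ℝ), (0 : ℝ), (1 : ℝ), (0 : ℝ)))} → v = 0) ∧
    -- (iii) the matrix A₀ and the vector B₀
    (β = -1 ∧ γ = 0 →
      Pb f₂ (Pb f₂ g) (0, 0, 0, 0) = 2 ∧
      -Pb f₁ (Pb f₂ g) (0, 0, 0, 0) = 2 * α ∧
      -Pb f₂ (Pb f₁ g) (0, 0, 0, 0) = 2 * α ∧
      Pb f₁ (Pb f₁ g) (0, 0, 0, 0) = 2 * α ^ 2 ∧
      Pb g (Pb g f₁) (0, 0, 0, 0) = 2 * (-α) ∧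
      Pb g (Pb g f₂) (0, 0, 0, 0) = 2 * 1) := by
  obtain rfl : Pb = poissonBracket := by funext f g z; exact hPb f g z
  obtain rfl : g = QuadSymbol.eval ⟨0, -1, 0, 0, -1, 1⟩ := by
    funext z; simp only [hg, QuadSymbol.eval]; ring
  obtain rfl : f₁ = QuadSymbol.eval ⟨0, -α, -β, 1, 0, 0⟩ := by
    funext z; simp only [hf₁, hφ₀, deriv_quadraticForm_fst, QuadSymbol.eval]; ring
  obtain rfl : f₂ = QuadSymbol.eval ⟨0, -β, -γ, 0, 1, 0⟩ := by
    funext z; simp only [hf₂, hφ₀, deriv_quadraticForm_snd, QuadSymbol.eval]; ring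
  simp only [QuadSymbol.poissonBracket_eval, QuadSymbol.eval_zero, QuadSymbol.fderiv_eval]
  refine ⟨fun z => by simp [QuadSymbol.bracket, QuadSymbol.eval], ?_, ?_, ?_⟩
  · simp only [QuadSymbol.bracket, true_and]
    constructor
    · rintro ⟨hβ, hγ⟩
      constructor <;> linarith
    · rintro ⟨rfl, rfl⟩
      norm_num
  · rintro - v h₁ - hv
    obtain ⟨t, rfl⟩ := Submodule.mem_span_singleton.mp hv
    simpa using h₁
  · rintro ⟨rfl, rfl⟩
    simp only [QuadSymbol.bracket]
    refine ⟨by ring, by ring, by ring, by ring, by ring, by ring⟩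
end
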